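/- arXiv:1901.05778 — 7 statements merged into one kernel-verified Lean document; each statement's English description precedes it below -/
import Mathlib

section
/- Let 𝒳, 𝒴 be finite nonempty sets, Q a full-support pmf on 𝒳, W a channel from 𝒳 to 𝒴 with W(y|x) > 0 for all x,y, and ρ ∈ [0,1]. Define E₀(ρ,Q,W) = −log ∑_{y} ( ∑_{x} Q(x) W(y|x)^{1/(1+ρ)} )^{1+ρ}. Then the infimum over all pmfs P̂ on 𝒳×𝒴 of D(P̂ ‖ Q·W) + ρ·D(P̂ ‖ Q⊗P̂_Y) equals E₀(ρ,Q,W), where (Q·W)(x,y) = Q(x)W(y|x), P̂_Y(y) = ∑_x P̂(x,y), and (Q⊗P̂_Y)(x,y) = Q(x)P̂_Y(y); moreover the infimum is attained. -/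
open Real BigOperators

/-- A probability mass function on a finite alphabet. -/
def IsPmf {α : Type*} [Fintype α] (p : α → ℝ) : Prop :=
  (∀ a, 0 ≤ p a) ∧ ∑ a, p a = 1

/-- Relative entropy `D(p‖q) = ∑ p log (p/q)` (natural log, `0 log 0 = 0`). -/
noncomputable def klDiv {α : Type*} [Fintype α] (p q : α → ℝ) : ℝ :=
  ∑ a, p a * Real.log (p a / q a)

private lemma log_ge_one_sub_inv {t : ℝ} (ht : 0 < t) : 1 - 1/t ≤ Real.log t := by
  have h := Real.log_le_sub_one_of_pos (x := 1/t) (by positivity)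
  rw [Real.log_div one_ne_zero (ne_of_gt ht), Real.log_one] at h
  linarith

private lemma logsum {α : Type*} [Fintype α] [Nonempty α] (a b : α → ℝ)
    (ha : ∀ i, 0 ≤ a i) (hb : ∀ i, 0 < b i) :
    (∑ i, a i) * Real.log ((∑ i, a i) / (∑ i, b i)) ≤ ∑ i, a i * Real.log (a i / b i) := by
  set A := ∑ i, a i with hA
  set B := ∑ i, b i with hB
  have hBpos : 0 < B := Finset.sum_pos (fun i _ => hb i) Finset.univ_nonempty
  have hAn : (0:ℝ) ≤ A := hA ▸ Finset.sum_nonneg (fun i _ => ha i)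
  rcases eq_or_lt_of_le hAn with h0 | hApos
  · have hz : ∀ i ∈ Finset.univ, a i = 0 :=
      (Finset.sum_eq_zero_iff_of_nonneg (fun i _ => ha i)).1 (hA ▸ h0.symm)
    rw [← h0, zero_mul]
    apply Finset.sum_nonneg
    intro i hi
    rw [hz i hi, zero_mul]
  · have key : ∀ i ∈ Finset.univ, a i - b i * (A/B) ≤
        a i * Real.log (a i / b i) - a i * Real.log (A/B) := by
      intro i _
      rcases eq_or_lt_of_le (ha i) with h0 | hai
      · rw [← h0]
        simp only [zero_mul, sub_zero, zero_sub, sub_self]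
        have : 0 ≤ b i * (A/B) := mul_nonneg (hb i).le (div_nonneg hApos.le hBpos.le)
        linarith
      · have hlog : Real.log (a i / b i) - Real.log (A/B)
            = Real.log ((a i * B) / (b i * A)) := by
          rw [Real.log_div (ne_of_gt hai) (ne_of_gt (hb i)),
              Real.log_div (ne_of_gt hApos) (ne_of_gt hBpos),
              Real.log_div (ne_of_gt (mul_pos hai hBpos)) (ne_of_gt (mul_pos (hb i) hApos)),
              Real.log_mul (ne_of_gt hai) (ne_of_gt hBpos),
              Real.log_mul (ne_of_gt (hb i)) (ne_of_gt hApos)]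
          ring
        have h2 : 1 - 1/((a i * B)/(b i * A)) ≤ Real.log ((a i * B)/(b i * A)) :=
          log_ge_one_sub_inv (div_pos (mul_pos hai hBpos) (mul_pos (hb i) hApos))
        have h3 : a i - b i * (A/B) = a i * (1 - 1/((a i * B)/(b i * A))) := by
          field_simp
        calc a i - b i * (A/B) = a i * (1 - 1/((a i * B)/(b i * A))) := h3
          _ ≤ a i * Real.log ((a i * B)/(b i * A)) :=
              mul_le_mul_of_nonneg_left h2 (le_of_lt hai)
          _ = a i * Real.log (a i / b i) - a i * Real.log (A/B) := by
              rw [← hlog]; ring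
    have hsum := Finset.sum_le_sum key
    have e1 : ∑ i, (a i - b i * (A/B)) = A - B * (A/B) := by
      rw [Finset.sum_sub_distrib, ← Finset.sum_mul, ← hA, ← hB]
    have e2 : ∑ i, (a i * Real.log (a i / b i) - a i * Real.log (A/B))
        = (∑ i, a i * Real.log (a i / b i)) - A * Real.log (A/B) := by
      rw [Finset.sum_sub_distrib, ← Finset.sum_mul, ← hA]
    rw [e1, e2] at hsum
    have hL : A - B * (A/B) = 0 := by field_simp; ring
    linarith

/-- for full-support `Q` on `X`, a strictly positive channel `W`
from `X` to `Y`, and `ρ ∈ [0,1]`, the infimum over all pmfs `P̂` on `X × Y` of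
`D(P̂‖Q·W) + ρ D(P̂‖Q⊗P̂_Y)` equals
`E₀(ρ,Q,W) = −log ∑_y (∑_x Q x (W x y)^{1/(1+ρ)})^{1+ρ}`, and it is attained. -/
theorem stmt2 {X Y : Type*} [Fintype X] [Fintype Y] [Nonempty X] [Nonempty Y]
    (Q : X → ℝ) (hQ : IsPmf Q) (hQpos : ∀ x, 0 < Q x)
    (W : X → Y → ℝ) (hW : ∀ x, (∀ y, 0 ≤ W x y) ∧ ∑ y, W x y = 1)
    (hWpos : ∀ x y, 0 < W x y)
    (ρ : ℝ) (hρ : ρ ∈ Set.Icc (0:ℝ) 1) :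
    IsLeast
      {v : ℝ | ∃ P : X × Y → ℝ, IsPmf P ∧
        v = klDiv P (fun a => Q a.1 * W a.1 a.2)
            + ρ * klDiv P (fun a => Q a.1 * ∑ x, P (x, a.2))}
      (-Real.log (∑ y, (∑ x, Q x * (W x y) ^ (1 / (1 + ρ))) ^ (1 + ρ))) := by
  obtain ⟨hρ0, hρ1⟩ := hρ
  have h1 : (0:ℝ) < 1 + ρ := by linarith
  have hE1 : (1/(1+ρ)) * (1+ρ) = 1 := by field_simp
  set E : ℝ := 1/(1+ρ) with hE
  set f : Y → ℝ := fun y => ∑ x, Q x * W x y ^ E with hfdef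
  have hfpos : ∀ y, 0 < f y := fun y =>
    Finset.sum_pos (fun x _ => mul_pos (hQpos x) (Real.rpow_pos_of_pos (hWpos x y) E))
      Finset.univ_nonempty
  set Z : ℝ := ∑ y, f y ^ (1+ρ) with hZdef
  have hZpos : 0 < Z := hZdef ▸
    Finset.sum_pos (fun y _ => Real.rpow_pos_of_pos (hfpos y) _) Finset.univ_nonempty
  set P' : X × Y → ℝ := fun a => Q a.1 * W a.1 a.2 ^ E * f a.2 ^ ρ / Z with hP'def
  have hP'pos : ∀ a, 0 < P' a := fun a =>
    div_pos (mul_pos (mul_pos (hQpos a.1) (Real.rpow_pos_of_pos (hWpos a.1 a.2) E))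
      (Real.rpow_pos_of_pos (hfpos a.2) ρ)) hZpos
  have hP'Y : ∀ y, ∑ x, P' (x, y) = f y ^ (1+ρ) / Z := by
    intro y
    have e1 : ∑ x, P' (x, y) = (∑ x, Q x * W x y ^ E) * f y ^ ρ / Z := by
      rw [Finset.sum_mul, Finset.sum_div]
    have e2 : (∑ x, Q x * W x y ^ E) = f y := rfl
    have e3 : f y ^ (1+ρ) = f y * f y ^ ρ := by
      rw [Real.rpow_add (hfpos y), Real.rpow_one]
    rw [e1, e2, e3]
  have hP'sum : ∑ a, P' a = 1 := by
    rw [Fintype.sum_prod_type_right]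
    rw [Finset.sum_congr rfl (fun y _ => hP'Y y), ← Finset.sum_div, ← hZdef,
      div_self (ne_of_gt hZpos)]
  have hP'pmf : IsPmf P' := ⟨fun a => (hP'pos a).le, hP'sum⟩
  -- the key identity
  have key : ∀ P : X × Y → ℝ, IsPmf P →
      klDiv P (fun a => Q a.1 * W a.1 a.2)
        + ρ * klDiv P (fun a => Q a.1 * ∑ x, P (x, a.2))
      = (1+ρ) * klDiv P P'
        - ρ * (∑ y, (∑ x, P (x, y)) *
            Real.log ((∑ x, P (x, y)) / (f y ^ (1+ρ) / Z)))
        - Real.log Z := by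
    intro P hP
    have term : ∀ a : X × Y, P a * Real.log (P a / (Q a.1 * W a.1 a.2))
        + ρ * (P a * Real.log (P a / (Q a.1 * ∑ x, P (x, a.2))))
        = (1+ρ) * (P a * Real.log (P a / P' a))
          - ρ * (P a * Real.log ((∑ x, P (x, a.2)) / (f a.2 ^ (1+ρ) / Z)))
          - P a * Real.log Z := by
      rintro ⟨x, y⟩
      rcases eq_or_lt_of_le (hP.1 (x, y)) with h0 | hpos
      · rw [← h0]; try ring
      · have hPY : 0 < ∑ x', P (x', y) :=
          lt_of_lt_of_le hpos (Finset.single_le_sum (fun i _ => hP.1 (i, y)) (Finset.mem_univ x))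
        have e1 : Real.log (P (x, y) / (Q x * W x y))
            = Real.log (P (x, y)) - Real.log (Q x) - Real.log (W x y) := by
          rw [Real.log_div (ne_of_gt hpos) (ne_of_gt (mul_pos (hQpos x) (hWpos x y))),
            Real.log_mul (ne_of_gt (hQpos x)) (ne_of_gt (hWpos x y))]
          ring
        have e2 : Real.log (P (x, y) / (Q x * ∑ x', P (x', y)))
            = Real.log (P (x, y)) - Real.log (Q x) - Real.log (∑ x', P (x', y)) := by
          rw [Real.log_div (ne_of_gt hpos) (ne_of_gt (mul_pos (hQpos x) hPY)),
            Real.log_mul (ne_of_gt (hQpos x)) (ne_of_gt hPY)]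
          ring
        have e3 : Real.log (P (x, y) / P' (x, y))
            = Real.log (P (x, y)) - (Real.log (Q x) + E * Real.log (W x y)
                + ρ * Real.log (f y) - Real.log Z) := by
          have : P' (x, y) = Q x * W x y ^ E * f y ^ ρ / Z := rfl
          rw [Real.log_div (ne_of_gt hpos) (ne_of_gt (hP'pos (x, y))), this,
            Real.log_div (ne_of_gt (mul_pos (mul_pos (hQpos x)
              (Real.rpow_pos_of_pos (hWpos x y) E)) (Real.rpow_pos_of_pos (hfpos y) ρ)))
              (ne_of_gt hZpos),
            Real.log_mul (ne_of_gt (mul_pos (hQpos x) (Real.rpow_pos_of_pos (hWpos x y) E)))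
              (ne_of_gt (Real.rpow_pos_of_pos (hfpos y) ρ)),
            Real.log_mul (ne_of_gt (hQpos x)) (ne_of_gt (Real.rpow_pos_of_pos (hWpos x y) E)),
            Real.log_rpow (hWpos x y), Real.log_rpow (hfpos y)]
          try ring
        have e4 : Real.log ((∑ x', P (x', y)) / (f y ^ (1+ρ) / Z))
            = Real.log (∑ x', P (x', y)) - ((1+ρ) * Real.log (f y) - Real.log Z) := by
          rw [Real.log_div (ne_of_gt hPY)
              (ne_of_gt (div_pos (Real.rpow_pos_of_pos (hfpos y) _) hZpos)),
            Real.log_div (ne_of_gt (Real.rpow_pos_of_pos (hfpos y) _)) (ne_of_gt hZpos),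
            Real.log_rpow (hfpos y)]
        show P (x, y) * Real.log (P (x, y) / (Q x * W x y))
            + ρ * (P (x, y) * Real.log (P (x, y) / (Q x * ∑ x', P (x', y))))
            = (1+ρ) * (P (x, y) * Real.log (P (x, y) / P' (x, y)))
              - ρ * (P (x, y) * Real.log ((∑ x', P (x', y)) / (f y ^ (1+ρ) / Z)))
              - P (x, y) * Real.log Z
        rw [e1, e2, e3, e4]
        rw [hE]
        field_simp
        ring
    have hmid : (∑ y, (∑ x, P (x, y)) * Real.log ((∑ x, P (x, y)) / (f y ^ (1+ρ) / Z)))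
        = ∑ a : X × Y, P a * Real.log ((∑ x, P (x, a.2)) / (f a.2 ^ (1+ρ) / Z)) := by
      rw [Fintype.sum_prod_type_right]
      exact Finset.sum_congr rfl fun y _ => by rw [Finset.sum_mul]
    have hZlog : Real.log Z = ∑ a : X × Y, P a * Real.log Z := by
      rw [← Finset.sum_mul, hP.2, one_mul]
    unfold klDiv
    rw [hmid, hZlog, Finset.mul_sum, Finset.mul_sum, Finset.mul_sum,
      ← Finset.sum_add_distrib, ← Finset.sum_sub_distrib, ← Finset.sum_sub_distrib]
    exact Finset.sum_congr rfl fun a _ => term a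
  constructor
  · refine ⟨P', hP'pmf, ?_⟩
    rw [key P' hP'pmf]
    have hD0 : klDiv P' P' = 0 := by
      unfold klDiv
      exact Finset.sum_eq_zero fun a _ => by
        rw [div_self (ne_of_gt (hP'pos a)), Real.log_one, mul_zero]
    have hDY0 : (∑ y, (∑ x, P' (x, y)) *
        Real.log ((∑ x, P' (x, y)) / (f y ^ (1+ρ) / Z))) = 0 :=
      Finset.sum_eq_zero fun y _ => by
        rw [hP'Y y, div_self (ne_of_gt (div_pos (Real.rpow_pos_of_pos (hfpos y) _) hZpos)),
          Real.log_one, mul_zero]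
    rw [hD0, hDY0]
    ring
  · rintro v ⟨P, hP, rfl⟩
    rw [key P hP]
    have hGibbs : 0 ≤ klDiv P P' := by
      have h := logsum P P' hP.1 hP'pos
      rw [hP.2, hP'sum, div_one, Real.log_one, mul_zero] at h
      exact h
    have hDY : (∑ y, (∑ x, P (x, y)) * Real.log ((∑ x, P (x, y)) / (f y ^ (1+ρ) / Z)))
        ≤ klDiv P P' := by
      unfold klDiv
      rw [Fintype.sum_prod_type_right]
      apply Finset.sum_le_sum
      intro y _
      have h := logsum (fun x => P (x, y)) (fun x => P' (x, y))
        (fun x => hP.1 (x, y)) (fun x => hP'pos (x, y))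
      rwa [hP'Y y] at h
    nlinarith [mul_le_mul_of_nonneg_left hDY hρ0]
end

section
/- Let 𝒳, 𝒴 be finite nonempty sets, Q a full-support pmf on 𝒳, W a channel from 𝒳 to 𝒴 with W(y|x) > 0 for all x,y, V a full-support pmf on 𝒴, and ρ ∈ [0,1]. Then the infimum over all pmfs P̂ on 𝒳×𝒴 of D(P̂ ‖ Q·W) + ρ·D(P̂ ‖ Q⊗V) equals −(1+ρ)·log ∑_{x,y} Q(x) W(y|x)^{1/(1+ρ)} V(y)^{ρ/(1+ρ)}, and it is attained at the pmf P̂*(x,y) = Q(x)W(y|x)^{1/(1+ρ)}V(y)^{ρ/(1+ρ)} / ∑_{x',y'} Q(x')W(y'|x')^{1/(1+ρ)}V(y')^{ρ/(1+ρ)}. -/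
open Real BigOperators

/-! The objective `D(P‖q₁) + ρ D(P‖q₂)` equals `(1+ρ) D(P‖P*) − (1+ρ) log Z`, where `P*` is the
normalized geometric mixture `q₁^{1/(1+ρ)} q₂^{ρ/(1+ρ)} / Z`. By Gibbs' inequality the first term is
nonnegative and vanishes exactly at `P = P*`. For `q₁ = Q·W`, `q₂ = Q⊗V` the mixture is
`Q W^{1/(1+ρ)} V^{ρ/(1+ρ)}`, since the two exponents of `Q` add up to `1`. -/

section

variable {α : Type*}

noncomputable def geomMix (ρ : ℝ) (q₁ q₂ : α → ℝ) (a : α) : ℝ :=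
  q₁ a ^ (1 / (1 + ρ)) * q₂ a ^ (ρ / (1 + ρ))

lemma geomMix_pos {ρ : ℝ} {q₁ q₂ : α → ℝ} (h₁ : ∀ a, 0 < q₁ a) (h₂ : ∀ a, 0 < q₂ a) (a : α) :
    0 < geomMix ρ q₁ q₂ a :=
  mul_pos (rpow_pos_of_pos (h₁ a) _) (rpow_pos_of_pos (h₂ a) _)

lemma log_geomMix {ρ : ℝ} {q₁ q₂ : α → ℝ} (h₁ : ∀ a, 0 < q₁ a) (h₂ : ∀ a, 0 < q₂ a) (a : α) :
    log (geomMix ρ q₁ q₂ a) = 1 / (1 + ρ) * log (q₁ a) + ρ / (1 + ρ) * log (q₂ a) := by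
  rw [geomMix, log_mul (rpow_pos_of_pos (h₁ a) _).ne' (rpow_pos_of_pos (h₂ a) _).ne',
    log_rpow (h₁ a), log_rpow (h₂ a)]

lemma geomMix_mul_left {ρ : ℝ} (hρ : 1 + ρ ≠ 0) {c q₁ q₂ : α → ℝ} (hc : ∀ a, 0 ≤ c a)
    (h₁ : ∀ a, 0 ≤ q₁ a) (h₂ : ∀ a, 0 ≤ q₂ a) (a : α) :
    geomMix ρ (fun b => c b * q₁ b) (fun b => c b * q₂ b) a = c a * geomMix ρ q₁ q₂ a := by
  have hexp : 1 / (1 + ρ) + ρ / (1 + ρ) = 1 := by field_simp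
  simp only [geomMix]
  rw [mul_rpow (hc a) (h₁ a), mul_rpow (hc a) (h₂ a), mul_mul_mul_comm,
    ← rpow_add' (hc a) (by rw [hexp]; exact one_ne_zero), hexp, rpow_one]

variable [Fintype α]

lemma isPmf_div_sum {m : α → ℝ} (hm : ∀ a, 0 ≤ m a) (hZ : 0 < ∑ a, m a) :
    IsPmf (fun a => m a / ∑ b, m b) :=
  ⟨fun a => div_nonneg (hm a) hZ.le, by rw [← Finset.sum_div, div_self hZ.ne']⟩

@[simp]
lemma klDiv_self (p : α → ℝ) : klDiv p p = 0 := by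
  simp [klDiv]

lemma klDiv_eq_sub {p q : α → ℝ} (hq : ∀ a, q a ≠ 0) :
    klDiv p q = ∑ a, p a * log (p a) - ∑ a, p a * log (q a) := by
  rw [klDiv, ← Finset.sum_sub_distrib]
  refine Finset.sum_congr rfl fun a _ => ?_
  rcases eq_or_ne (p a) 0 with hpa | hpa
  · simp [hpa]
  · rw [log_div hpa (hq a), mul_sub]

lemma klDiv_nonneg {p q : α → ℝ} (hp : ∀ a, 0 ≤ p a) (hq : ∀ a, 0 < q a)
    (hsum : ∑ a, q a ≤ ∑ a, p a) : 0 ≤ klDiv p q := by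
  -- `p log (p/q) - (p - q) = q · klFun (p/q) ≥ 0` termwise
  have hterm : ∀ a, p a - q a ≤ p a * log (p a / q a) := fun a => by
    have h := mul_nonneg (hq a).le (InformationTheory.klFun_nonneg (div_nonneg (hp a) (hq a).le))
    rw [InformationTheory.klFun] at h
    field_simp [(hq a).ne'] at h
    linarith
  have := Finset.sum_le_sum fun a (_ : a ∈ Finset.univ) => hterm a
  rw [Finset.sum_sub_distrib] at this
  rw [klDiv]
  linarith

lemma klDiv_add_mul_klDiv_eq [Nonempty α] {ρ : ℝ} (hρ : 1 + ρ ≠ 0) {P q₁ q₂ : α → ℝ}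
    (hP : ∑ a, P a = 1) (h₁ : ∀ a, 0 < q₁ a) (h₂ : ∀ a, 0 < q₂ a) :
    klDiv P q₁ + ρ * klDiv P q₂
      = (1 + ρ) * klDiv P (fun a => geomMix ρ q₁ q₂ a / ∑ b, geomMix ρ q₁ q₂ b)
        - (1 + ρ) * log (∑ b, geomMix ρ q₁ q₂ b) := by
  set Z := ∑ b, geomMix ρ q₁ q₂ b
  have hZ : 0 < Z := Finset.sum_pos (fun a _ => geomMix_pos h₁ h₂ a) Finset.univ_nonempty
  have hlog : ∀ a, log (geomMix ρ q₁ q₂ a / Z)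
      = 1 / (1 + ρ) * log (q₁ a) + ρ / (1 + ρ) * log (q₂ a) - log Z := fun a => by
    rw [log_div (geomMix_pos h₁ h₂ a).ne' hZ.ne', log_geomMix h₁ h₂]
  have hcross : ∑ a, P a * log (geomMix ρ q₁ q₂ a / Z)
      = 1 / (1 + ρ) * ∑ a, P a * log (q₁ a) + ρ / (1 + ρ) * ∑ a, P a * log (q₂ a)
        - log Z := by
    simp only [hlog, mul_sub, mul_add, Finset.sum_sub_distrib, Finset.sum_add_distrib,
      ← Finset.sum_mul, hP, one_mul, Finset.mul_sum, mul_left_comm (P _)]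
  rw [klDiv_eq_sub fun a => (h₁ a).ne', klDiv_eq_sub fun a => (h₂ a).ne',
    klDiv_eq_sub fun a => (div_pos (geomMix_pos h₁ h₂ a) hZ).ne', hcross]
  field_simp
  ring

end

theorem stmt3_general {X Y : Type*} [Fintype X] [Fintype Y] [Nonempty X] [Nonempty Y]
    (Q : X → ℝ) (hQpos : ∀ x, 0 < Q x)
    (W : X → Y → ℝ)
    (hWpos : ∀ x y, 0 < W x y)
    (V : Y → ℝ) (hVpos : ∀ y, 0 < V y)
    (ρ : ℝ) (hρ : ρ ∈ Set.Icc (0:ℝ) 1) :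
    IsLeast
      {v : ℝ | ∃ P : X × Y → ℝ, IsPmf P ∧
        v = klDiv P (fun a => Q a.1 * W a.1 a.2)
            + ρ * klDiv P (fun a => Q a.1 * V a.2)}
      (-(1 + ρ) * Real.log
        (∑ a : X × Y, Q a.1 * (W a.1 a.2) ^ (1 / (1 + ρ)) * (V a.2) ^ (ρ / (1 + ρ))))
    ∧ IsPmf (fun a : X × Y =>
        Q a.1 * (W a.1 a.2) ^ (1 / (1 + ρ)) * (V a.2) ^ (ρ / (1 + ρ))
          / ∑ b : X × Y, Q b.1 * (W b.1 b.2) ^ (1 / (1 + ρ)) * (V b.2) ^ (ρ / (1 + ρ)))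
    ∧ (klDiv
        (fun a : X × Y =>
          Q a.1 * (W a.1 a.2) ^ (1 / (1 + ρ)) * (V a.2) ^ (ρ / (1 + ρ))
            / ∑ b : X × Y, Q b.1 * (W b.1 b.2) ^ (1 / (1 + ρ)) * (V b.2) ^ (ρ / (1 + ρ)))
        (fun a => Q a.1 * W a.1 a.2)
      + ρ * klDiv
        (fun a : X × Y =>
          Q a.1 * (W a.1 a.2) ^ (1 / (1 + ρ)) * (V a.2) ^ (ρ / (1 + ρ))
            / ∑ b : X × Y, Q b.1 * (W b.1 b.2) ^ (1 / (1 + ρ)) * (V b.2) ^ (ρ / (1 + ρ)))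
        (fun a => Q a.1 * V a.2)
      = -(1 + ρ) * Real.log
          (∑ a : X × Y, Q a.1 * (W a.1 a.2) ^ (1 / (1 + ρ)) * (V a.2) ^ (ρ / (1 + ρ)))) := by
  have h1ρ : 0 < 1 + ρ := by linarith [hρ.1]
  set q₁ : X × Y → ℝ := fun a => Q a.1 * W a.1 a.2
  set q₂ : X × Y → ℝ := fun a => Q a.1 * V a.2
  have hq₁ : ∀ a, 0 < q₁ a := fun a => mul_pos (hQpos _) (hWpos _ _)
  have hq₂ : ∀ a, 0 < q₂ a := fun a => mul_pos (hQpos _) (hVpos _)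
  have hmix : ∀ a : X × Y, Q a.1 * W a.1 a.2 ^ (1 / (1 + ρ)) * V a.2 ^ (ρ / (1 + ρ))
      = geomMix ρ q₁ q₂ a := fun a => by
    rw [mul_assoc]
    exact (geomMix_mul_left (c := fun b : X × Y => Q b.1) (q₁ := fun b => W b.1 b.2)
      (q₂ := fun b => V b.2) h1ρ.ne' (fun b => (hQpos _).le) (fun b => (hWpos _ _).le)
      (fun b => (hVpos _).le) a).symm
  simp only [hmix]
  have hZ : 0 < ∑ b, geomMix ρ q₁ q₂ b :=
    Finset.sum_pos (fun a _ => geomMix_pos hq₁ hq₂ a) Finset.univ_nonempty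
  have hPstar := isPmf_div_sum (fun a => (geomMix_pos hq₁ hq₂ a).le) hZ
  have hobj := fun P (hP : IsPmf P) => klDiv_add_mul_klDiv_eq h1ρ.ne' hP.2 hq₁ hq₂
  have hopt := hobj _ hPstar
  rw [klDiv_self, mul_zero, zero_sub, ← neg_mul] at hopt
  refine ⟨⟨⟨_, hPstar, hopt.symm⟩, ?_⟩, hPstar, hopt⟩
  rintro v ⟨P, hP, rfl⟩
  have hgibbs := klDiv_nonneg hP.1 (fun a => div_pos (geomMix_pos hq₁ hq₂ a) hZ)
    (by rw [hPstar.2, hP.2])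
  rw [hobj P hP]
  linarith [mul_nonneg h1ρ.le hgibbs]

/-- for full-support `Q` on `X`, a strictly positive channel `W` from `X`
to `Y`, a full-support pmf `V` on `Y`, and `ρ ∈ [0,1]`, the infimum over pmfs `P̂` on
`X × Y` of `D(P̂‖Q·W) + ρ D(P̂‖Q⊗V)` equals
`−(1+ρ) log ∑_{x,y} Q x (W x y)^{1/(1+ρ)} (V y)^{ρ/(1+ρ)}`, attained at
`P̂*(x,y) = Q x (W x y)^{1/(1+ρ)} (V y)^{ρ/(1+ρ)} / (normalization)`. -/
theorem stmt3 {X Y : Type*} [Fintype X] [Fintype Y] [Nonempty X] [Nonempty Y]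
    (Q : X → ℝ) (hQ : IsPmf Q) (hQpos : ∀ x, 0 < Q x)
    (W : X → Y → ℝ) (hW : ∀ x, (∀ y, 0 ≤ W x y) ∧ ∑ y, W x y = 1)
    (hWpos : ∀ x y, 0 < W x y)
    (V : Y → ℝ) (hV : IsPmf V) (hVpos : ∀ y, 0 < V y)
    (ρ : ℝ) (hρ : ρ ∈ Set.Icc (0:ℝ) 1) :
    IsLeast
      {v : ℝ | ∃ P : X × Y → ℝ, IsPmf P ∧
        v = klDiv P (fun a => Q a.1 * W a.1 a.2)
            + ρ * klDiv P (fun a => Q a.1 * V a.2)}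
      (-(1 + ρ) * Real.log
        (∑ a : X × Y, Q a.1 * (W a.1 a.2) ^ (1 / (1 + ρ)) * (V a.2) ^ (ρ / (1 + ρ))))
    ∧ IsPmf (fun a : X × Y =>
        Q a.1 * (W a.1 a.2) ^ (1 / (1 + ρ)) * (V a.2) ^ (ρ / (1 + ρ))
          / ∑ b : X × Y, Q b.1 * (W b.1 b.2) ^ (1 / (1 + ρ)) * (V b.2) ^ (ρ / (1 + ρ)))
    ∧ (klDiv
        (fun a : X × Y =>
          Q a.1 * (W a.1 a.2) ^ (1 / (1 + ρ)) * (V a.2) ^ (ρ / (1 + ρ))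
            / ∑ b : X × Y, Q b.1 * (W b.1 b.2) ^ (1 / (1 + ρ)) * (V b.2) ^ (ρ / (1 + ρ)))
        (fun a => Q a.1 * W a.1 a.2)
      + ρ * klDiv
        (fun a : X × Y =>
          Q a.1 * (W a.1 a.2) ^ (1 / (1 + ρ)) * (V a.2) ^ (ρ / (1 + ρ))
            / ∑ b : X × Y, Q b.1 * (W b.1 b.2) ^ (1 / (1 + ρ)) * (V b.2) ^ (ρ / (1 + ρ)))
        (fun a => Q a.1 * V a.2)
      = -(1 + ρ) * Real.log
          (∑ a : X × Y, Q a.1 * (W a.1 a.2) ^ (1 / (1 + ρ)) * (V a.2) ^ (ρ / (1 + ρ)))) :=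
  stmt3_general Q hQpos W hWpos V hVpos ρ hρ
end

section
/- Let P be a full-support pmf on 𝒰₁×𝒰₂ with marginals P_{U₁}, P_{U₂}, let γ₁, γ₂ ∈ (0,1), ρ ∈ [0,1], and i₁, i₂ ∈ {1,2}. For a pmf P̂ on 𝒰₁×𝒰₂ and ν ∈ {1,2}, set L_ν(P̂) = ∑_{u₁,u₂} P̂(u₁,u₂)·log P_{U_ν}(u_ν). Define B_ν^1(γ_ν) = { P̂ : L_ν(P̂) ≥ log γ_ν } and B_ν^2(γ_ν) = { P̂ : L_ν(P̂) < log γ_ν }. Assume B_1^{i₁}(γ₁) ∩ B_2^{i₂}(γ₂) is nonempty. Then the infimum over P̂ ∈ B_1^{i₁}(γ₁) ∩ B_2^{i₂}(γ₂) of D(P̂‖P) − ρ·( H(P̂) − H(P̂_{U₂}) ) equals − inf_{λ₁ ≥ 0, λ₂ ≥ 0} log ∑_{u₂} ( ∑_{u₁} P(u₁,u₂)^{1/(1+ρ)} · (P_{U₁}(u₁)/γ₁)^{ −(−1)^{i₁} λ₁ / (1+ρ) } · (P_{U₂}(u₂)/γ₂)^{ −(−1)^{i₂} λ₂ / (1+ρ)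 } )^{1+ρ}. (This is Proposition 1 of the paper for the error type τ = {1}; the case τ = {2} is obtained by exchanging the roles of the two users.) -/
open Real BigOperators

/-- Shannon entropy `H(p) = −∑ p log p` (natural log, `0 log 0 = 0`). -/
noncomputable def ent {α : Type*} [Fintype α] (p : α → ℝ) : ℝ :=
  -∑ a, p a * Real.log (p a)

namespace Stmt5

/-- `x log(x/y) = x (log x − log y)` for `x ≥ 0`, any `y`. -/
lemma mul_log_div_eq (x y : ℝ) (hx : 0 ≤ x) (hy : y ≠ 0) :
    x * Real.log (x / y) = x * (Real.log x - Real.log y) := by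
  rcases eq_or_lt_of_le hx with h | h
  · simp [← h]
  · rw [Real.log_div h.ne' hy]

/-- The log-sum inequality. -/
lemma log_sum_ineq {ι : Type*} (t : Finset ι) (a b : ι → ℝ)
    (ha : ∀ i ∈ t, 0 ≤ a i) (hb : ∀ i ∈ t, 0 < b i) :
    (∑ i ∈ t, a i) * (Real.log (∑ i ∈ t, a i) - Real.log (∑ i ∈ t, b i)) ≤
      ∑ i ∈ t, a i * (Real.log (a i) - Real.log (b i)) := by
  rcases t.eq_empty_or_nonempty with rfl | htne
  · simp
  have hB : 0 < ∑ i ∈ t, b i := Finset.sum_pos hb htne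
  rcases eq_or_lt_of_le (Finset.sum_nonneg ha) with hA | hA
  · have hz : ∀ i ∈ t, a i = 0 := by
      intro i hi
      exact (Finset.sum_eq_zero_iff_of_nonneg ha).1 hA.symm i hi
    rw [← hA, zero_mul]
    exact le_of_eq (Finset.sum_eq_zero fun i hi => by rw [hz i hi, zero_mul]).symm
  -- Jensen with weights b i / B at points a i / b i
  set A := ∑ i ∈ t, a i with hAdef
  set B := ∑ i ∈ t, b i with hBdef
  have hjen := Real.convexOn_mul_log.map_sum_le (t := t)
    (w := fun i => b i / B) (p := fun i => a i / b i)
    (fun i hi => div_nonneg (hb i hi).le hB.le)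
    (by rw [← Finset.sum_div]; exact div_self hB.ne')
    (fun i hi => div_nonneg (ha i hi) (hb i hi).le)
  simp only [smul_eq_mul] at hjen
  have hsum1 : ∑ i ∈ t, (b i / B) * (a i / b i) = A / B := by
    rw [hAdef, Finset.sum_div]
    refine Finset.sum_congr rfl fun i hi => ?_
    have : b i / B * (a i / b i) = (b i / b i) * (a i / B) := by ring
    rw [this, div_self (hb i hi).ne', one_mul]
  have hsum2 : ∑ i ∈ t, (b i / B) * ((a i / b i) * Real.log (a i / b i))
      = (∑ i ∈ t, a i * Real.log (a i / b i)) / B := by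
    rw [Finset.sum_div]
    refine Finset.sum_congr rfl fun i hi => ?_
    have : b i / B * (a i / b i * Real.log (a i / b i))
        = (b i / b i) * (a i * Real.log (a i / b i)) / B := by ring
    rw [this, div_self (hb i hi).ne', one_mul]
  rw [hsum1, hsum2] at hjen
  have key : A * Real.log (A / B) ≤ ∑ i ∈ t, a i * Real.log (a i / b i) := by
    have := mul_le_mul_of_nonneg_left hjen hB.le
    rw [mul_div_cancel₀ _ hB.ne'] at this
    calc A * Real.log (A / B) = B * (A / B * Real.log (A / B)) := by
          field_simp
      _ ≤ ∑ i ∈ t, a i * Real.log (a i / b i) := this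
  calc A * (Real.log A - Real.log B)
      = A * Real.log (A / B) := (mul_log_div_eq A B hA.le hB.ne').symm
    _ ≤ ∑ i ∈ t, a i * Real.log (a i / b i) := key
    _ = ∑ i ∈ t, a i * (Real.log (a i) - Real.log (b i)) :=
        Finset.sum_congr rfl fun i hi => mul_log_div_eq _ _ (ha i hi) (hb i hi).ne'

variable {U1 U2 : Type*} [Fintype U1] [Fintype U2]

noncomputable def Af (ρ : ℝ) (c : U1 × U2 → ℝ) (u2 : U2) : ℝ :=
  ∑ u1, Real.exp (c (u1, u2) / (1 + ρ))

noncomputable def Zf (ρ : ℝ) (c : U1 × U2 → ℝ) : ℝ :=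
  ∑ u2, Af ρ c u2 ^ (1 + ρ)

noncomputable def Mf (ρ : ℝ) (c : U1 × U2 → ℝ) (u : U1 × U2) : ℝ :=
  Af ρ c u.2 ^ ρ * Real.exp (c u / (1 + ρ)) / Zf ρ c

/-- The (Lagrangian-tilted) objective. -/
noncomputable def Gf (ρ : ℝ) (c Q : U1 × U2 → ℝ) : ℝ :=
  (1 + ρ) * ∑ u, Q u * Real.log (Q u)
    - ρ * ∑ u2, (∑ u1, Q (u1, u2)) * Real.log (∑ u1, Q (u1, u2))
    - ∑ u, Q u * c u

lemma Af_pos [Nonempty U1] {ρ : ℝ} (c : U1 × U2 → ℝ) (u2 : U2) : 0 < Af ρ c u2 :=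
  Finset.sum_pos (fun u1 _ => Real.exp_pos _) Finset.univ_nonempty

lemma Zf_pos [Nonempty U1] [Nonempty U2] {ρ : ℝ} (c : U1 × U2 → ℝ) : 0 < Zf ρ c :=
  Finset.sum_pos (fun u2 _ => Real.rpow_pos_of_pos (Af_pos c u2) _) Finset.univ_nonempty

/-- Key inequality: the tilted objective is at least `−log Z`. -/
lemma keyIneq [Nonempty U1] [Nonempty U2] {ρ : ℝ} (hρ : 0 ≤ ρ)
    (c : U1 × U2 → ℝ) (Q : U1 × U2 → ℝ) (hQ : IsPmf Q) :
    -Real.log (Zf ρ c) ≤ Gf ρ c Q := by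
  have hr1 : (0:ℝ) < 1 + ρ := by linarith
  set Q2 : U2 → ℝ := fun u2 => ∑ u1, Q (u1, u2) with hQ2def
  have hQ2nn : ∀ u2, 0 ≤ Q2 u2 := fun u2 => Finset.sum_nonneg fun u1 _ => hQ.1 _
  have hQ2sum : ∑ u2, Q2 u2 = 1 := by
    simp only [hQ2def]
    rw [← Fintype.sum_prod_type_right (f := Q)]
    exact hQ.2
  -- per-u2 log-sum inequality
  have step1 : ∀ u2 : U2,
      Q2 u2 * (Real.log (Q2 u2) - Real.log (Af ρ c u2)) ≤
        ∑ u1, Q (u1, u2) * (Real.log (Q (u1, u2)) - c (u1, u2) / (1 + ρ)) := by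
    intro u2
    have h := log_sum_ineq Finset.univ (fun u1 => Q (u1, u2))
      (fun u1 => Real.exp (c (u1, u2) / (1 + ρ)))
      (fun u1 _ => hQ.1 _) (fun u1 _ => Real.exp_pos _)
    simp only [Real.log_exp] at h
    exact h
  have S1 : ∑ u2, Q2 u2 * (Real.log (Q2 u2) - Real.log (Af ρ c u2)) ≤
      (∑ u, Q u * Real.log (Q u)) - (∑ u, Q u * c u) / (1 + ρ) := by
    calc ∑ u2, Q2 u2 * (Real.log (Q2 u2) - Real.log (Af ρ c u2))
        ≤ ∑ u2, ∑ u1, Q (u1, u2) * (Real.log (Q (u1, u2)) - c (u1, u2) / (1 + ρ)) :=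
          Finset.sum_le_sum fun u2 _ => step1 u2
      _ = ∑ u, Q u * (Real.log (Q u) - c u / (1 + ρ)) :=
          (Fintype.sum_prod_type_right
            (f := fun u : U1 × U2 => Q u * (Real.log (Q u) - c u / (1 + ρ)))).symm
      _ = (∑ u, Q u * Real.log (Q u)) - (∑ u, Q u * c u) / (1 + ρ) := by
          rw [Finset.sum_div, ← Finset.sum_sub_distrib]
          refine Finset.sum_congr rfl fun u _ => by ring
  have step2 : (∑ u2, Q2 u2) * (Real.log (∑ u2, Q2 u2) - Real.log (Zf ρ c)) ≤
      ∑ u2, Q2 u2 * (Real.log (Q2 u2) - Real.log (Af ρ c u2 ^ (1 + ρ))) :=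
    log_sum_ineq Finset.univ Q2 (fun u2 => Af ρ c u2 ^ (1 + ρ))
      (fun u2 _ => hQ2nn u2) (fun u2 _ => Real.rpow_pos_of_pos (Af_pos c u2) _)
  rw [hQ2sum, one_mul, Real.log_one, zero_sub] at step2
  have hlog : ∀ u2 : U2, Real.log (Af ρ c u2 ^ (1 + ρ)) = (1 + ρ) * Real.log (Af ρ c u2) :=
    fun u2 => Real.log_rpow (Af_pos c u2) _
  -- abbreviations
  set SQ := ∑ u, Q u * Real.log (Q u) with hSQ
  set SC := ∑ u, Q u * c u with hSC
  set S2 := ∑ u2, Q2 u2 * Real.log (Q2 u2) with hS2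
  set SA := ∑ u2, Q2 u2 * Real.log (Af ρ c u2) with hSA
  have e1 : ∑ u2, Q2 u2 * (Real.log (Q2 u2) - Real.log (Af ρ c u2)) = S2 - SA := by
    rw [hS2, hSA, ← Finset.sum_sub_distrib]
    exact Finset.sum_congr rfl fun u2 _ => by ring
  have e2 : ∑ u2, Q2 u2 * (Real.log (Q2 u2) - Real.log (Af ρ c u2 ^ (1 + ρ)))
      = S2 - (1 + ρ) * SA := by
    rw [hS2, hSA, Finset.mul_sum, ← Finset.sum_sub_distrib]
    refine Finset.sum_congr rfl fun u2 _ => by rw [hlog u2]; ring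
  rw [e1] at S1
  rw [e2] at step2
  have S1' : (1 + ρ) * (S2 - SA) ≤ (1 + ρ) * SQ - SC := by
    have := mul_le_mul_of_nonneg_left S1 hr1.le
    calc (1 + ρ) * (S2 - SA) ≤ (1 + ρ) * (SQ - SC / (1 + ρ)) := this
      _ = (1 + ρ) * SQ - SC := by field_simp
  show -Real.log (Zf ρ c) ≤ (1 + ρ) * SQ - ρ * S2 - SC
  nlinarith [step2, S1']


set_option linter.unusedSectionVars false in
lemma Mf_pos [Nonempty U1] [Nonempty U2] {ρ : ℝ} (c : U1 × U2 → ℝ) (u : U1 × U2) :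
    0 < Mf ρ c u :=
  div_pos (mul_pos (Real.rpow_pos_of_pos (Af_pos c u.2) _) (Real.exp_pos _)) (Zf_pos c)

set_option linter.unusedSectionVars false in
lemma Mf_marg [Nonempty U1] [Nonempty U2] {ρ : ℝ} (c : U1 × U2 → ℝ) (u2 : U2) :
    ∑ u1, Mf ρ c (u1, u2) = Af ρ c u2 ^ (1 + ρ) / Zf ρ c := by
  have hA := Af_pos (ρ := ρ) c u2
  have h1 : ∑ u1, Mf ρ c (u1, u2) = (Af ρ c u2 ^ ρ * Af ρ c u2) / Zf ρ c := by
    have hterm : ∀ u1 : U1, Mf ρ c (u1, u2)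
        = Af ρ c u2 ^ ρ * Real.exp (c (u1, u2) / (1 + ρ)) / Zf ρ c := fun u1 => rfl
    rw [Finset.sum_congr rfl fun u1 _ => hterm u1, ← Finset.sum_div, ← Finset.mul_sum]
    rfl
  rw [h1]
  congr 1
  rw [add_comm, Real.rpow_add hA, Real.rpow_one]

set_option linter.unusedSectionVars false in
lemma Mf_pmf [Nonempty U1] [Nonempty U2] {ρ : ℝ} (c : U1 × U2 → ℝ) :
    IsPmf (Mf ρ c) := by
  refine ⟨fun u => (Mf_pos c u).le, ?_⟩
  rw [Fintype.sum_prod_type_right (f := Mf ρ c)]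
  have : ∀ u2 : U2, ∑ u1, Mf ρ c (u1, u2) = Af ρ c u2 ^ (1 + ρ) / Zf ρ c :=
    Mf_marg c
  rw [Finset.sum_congr rfl fun u2 _ => this u2, ← Finset.sum_div]
  exact div_self (Zf_pos c).ne'

set_option linter.unusedSectionVars false in
lemma log_Mf [Nonempty U1] [Nonempty U2] {ρ : ℝ} (c : U1 × U2 → ℝ) (u : U1 × U2) :
    Real.log (Mf ρ c u)
      = ρ * Real.log (Af ρ c u.2) + c u / (1 + ρ) - Real.log (Zf ρ c) := by
  unfold Mf
  rw [Real.log_div (mul_pos (Real.rpow_pos_of_pos (Af_pos c u.2) _) (Real.exp_pos _)).ne'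
      (Zf_pos c).ne',
    Real.log_mul (Real.rpow_pos_of_pos (Af_pos c u.2) _).ne' (Real.exp_pos _).ne',
    Real.log_rpow (Af_pos c u.2), Real.log_exp]

/-- Key equality: the tilted objective attains `−log Z` at the Gibbs pmf `Mf`. -/
lemma keyEq [Nonempty U1] [Nonempty U2] {ρ : ℝ} (hρ : 0 ≤ ρ) (c : U1 × U2 → ℝ) :
    Gf ρ c (Mf ρ c) = -Real.log (Zf ρ c) := by
  have hr1 : (0:ℝ) < 1 + ρ := by linarith
  set M := Mf ρ c with hM
  set A := Af ρ c with hA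
  set Z := Zf ρ c with hZ
  set T := ∑ u : U1 × U2, M u * Real.log (A u.2) with hT
  set C := ∑ u : U1 × U2, M u * c u with hC
  have Msum : ∑ u, M u = 1 := (Mf_pmf c).2
  have sum1 : ∑ u : U1 × U2, M u * Real.log (M u) = ρ * T + C / (1 + ρ) - Real.log Z := by
    have hterm : ∀ u : U1 × U2, M u * Real.log (M u)
        = ρ * (M u * Real.log (A u.2)) + (M u * c u) / (1 + ρ) - Real.log Z * M u := by
      intro u
      rw [hM, log_Mf c u]
      ring
    rw [Finset.sum_congr rfl fun u _ => hterm u, Finset.sum_sub_distrib,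
      Finset.sum_add_distrib, ← Finset.mul_sum, ← Finset.sum_div, ← Finset.mul_sum,
      Msum, mul_one]
  have hlogmarg : ∀ u2 : U2, Real.log (A u2 ^ (1 + ρ) / Z)
      = (1 + ρ) * Real.log (A u2) - Real.log Z := by
    intro u2
    rw [Real.log_div (Real.rpow_pos_of_pos (Af_pos c u2) _).ne' (Zf_pos c).ne',
      Real.log_rpow (Af_pos c u2)]
  have margsum : ∑ u2 : U2, A u2 ^ (1 + ρ) / Z = 1 := by
    rw [← Finset.sum_div]
    exact div_self (Zf_pos c).ne'
  have hTalt : T = ∑ u2 : U2, (A u2 ^ (1 + ρ) / Z) * Real.log (A u2) := by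
    rw [hT, Fintype.sum_prod_type_right (f := fun u : U1 × U2 => M u * Real.log (A u.2))]
    refine Finset.sum_congr rfl fun u2 _ => ?_
    have hterm : ∀ u1 : U1, M (u1, u2) * Real.log (A (u1, u2).2)
        = M (u1, u2) * Real.log (A u2) := fun _ => rfl
    rw [Finset.sum_congr rfl fun u1 _ => hterm u1, ← Finset.sum_mul, hM, Mf_marg c u2]
  have sum2 : ∑ u2 : U2, (∑ u1, M (u1, u2)) * Real.log (∑ u1, M (u1, u2))
      = (1 + ρ) * T - Real.log Z := by
    have hterm : ∀ u2 : U2, (∑ u1, M (u1, u2)) * Real.log (∑ u1, M (u1, u2))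
        = (1 + ρ) * ((A u2 ^ (1 + ρ) / Z) * Real.log (A u2))
          - Real.log Z * (A u2 ^ (1 + ρ) / Z) := by
      intro u2
      rw [hM, Mf_marg c u2, hlogmarg u2]
      ring
    rw [Finset.sum_congr rfl fun u2 _ => hterm u2, Finset.sum_sub_distrib,
      ← Finset.mul_sum, ← Finset.mul_sum, margsum, mul_one, hTalt]
  show (1 + ρ) * ∑ u : U1 × U2, M u * Real.log (M u)
      - ρ * ∑ u2 : U2, (∑ u1, M (u1, u2)) * Real.log (∑ u1, M (u1, u2))
      - ∑ u : U1 × U2, M u * c u = -Real.log Z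
  rw [sum1, sum2, ← hC]
  field_simp
  ring

/-- Adding a constant to `c` multiplies `Z` by `exp κ`. -/
lemma Zf_shift [Nonempty U1] {ρ : ℝ} (hρ : 0 ≤ ρ) (c : U1 × U2 → ℝ) (κ : ℝ) :
    Zf ρ (fun u => c u + κ) = Real.exp κ * Zf ρ c := by
  have hr1 : (0:ℝ) < 1 + ρ := by linarith
  unfold Zf
  rw [Finset.mul_sum]
  refine Finset.sum_congr rfl fun u2 _ => ?_
  have h1 : Af ρ (fun u => c u + κ) u2 = Real.exp (κ / (1 + ρ)) * Af ρ c u2 := by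
    unfold Af
    rw [Finset.mul_sum]
    refine Finset.sum_congr rfl fun u1 _ => ?_
    rw [← Real.exp_add, add_div, add_comm]
  rw [h1, Real.mul_rpow (Real.exp_pos _).le (Af_pos (ρ := ρ) c u2).le]
  congr 1
  rw [← Real.exp_mul, div_mul_cancel₀ _ hr1.ne']

/-- The Lagrangian-tilted exponent. -/
noncomputable def cL (c0 ℓ1 ℓ2 : U1 × U2 → ℝ) (s1 s2 θ1 θ2 l1 l2 : ℝ) : U1 × U2 → ℝ :=
  fun u => c0 u + l1 * (s1 * (ℓ1 u - θ1)) + l2 * (s2 * (ℓ2 u - θ2))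

/-- Constraint slack. -/
noncomputable def slack (ℓ : U1 × U2 → ℝ) (θ s : ℝ) (Q : U1 × U2 → ℝ) : ℝ :=
  s * ((∑ u, Q u * ℓ u) - θ)

set_option linter.unusedSectionVars false in
lemma bridge (ρ : ℝ) (c0 ℓ1 ℓ2 : U1 × U2 → ℝ) (s1 s2 θ1 θ2 l1 l2 : ℝ)
    (Q : U1 × U2 → ℝ) (hQ : IsPmf Q) :
    Gf ρ (cL c0 ℓ1 ℓ2 s1 s2 θ1 θ2 l1 l2) Q
      = Gf ρ c0 Q - l1 * slack ℓ1 θ1 s1 Q - l2 * slack ℓ2 θ2 s2 Q := by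
  unfold Gf cL slack
  have hterm : ∀ u : U1 × U2,
      Q u * (c0 u + l1 * (s1 * (ℓ1 u - θ1)) + l2 * (s2 * (ℓ2 u - θ2)))
        = (Q u * c0 u + (l1 * s1) * (Q u * ℓ1 u) + (l2 * s2) * (Q u * ℓ2 u))
          - (l1 * s1 * θ1 + l2 * s2 * θ2) * Q u := by
    intro u; ring
  rw [Finset.sum_congr rfl fun u _ => hterm u, Finset.sum_sub_distrib,
    Finset.sum_add_distrib, Finset.sum_add_distrib, ← Finset.mul_sum, ← Finset.mul_sum,
    ← Finset.mul_sum, hQ.2, mul_one]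
  ring

section Duality

variable [Nonempty U1] [Nonempty U2]
variable {ρ : ℝ} (c0 ℓ1 ℓ2 : U1 × U2 → ℝ) (s1 s2 θ1 θ2 : ℝ)

lemma cL_cont (u : U1 × U2) :
    Continuous fun p : ℝ × ℝ => cL c0 ℓ1 ℓ2 s1 s2 θ1 θ2 p.1 p.2 u := by
  unfold cL
  fun_prop

lemma Af_cont (hρ : 0 ≤ ρ) (u2 : U2) :
    Continuous fun p : ℝ × ℝ => Af ρ (cL c0 ℓ1 ℓ2 s1 s2 θ1 θ2 p.1 p.2) u2 := by
  unfold Af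
  refine continuous_finset_sum _ fun u1 _ => ?_
  exact Real.continuous_exp.comp ((cL_cont c0 ℓ1 ℓ2 s1 s2 θ1 θ2 (u1, u2)).div_const _)

lemma Zf_cont (hρ : 0 ≤ ρ) :
    Continuous fun p : ℝ × ℝ => Zf ρ (cL c0 ℓ1 ℓ2 s1 s2 θ1 θ2 p.1 p.2) := by
  unfold Zf
  refine continuous_finset_sum _ fun u2 _ => ?_
  exact (Af_cont c0 ℓ1 ℓ2 s1 s2 θ1 θ2 hρ u2).rpow_const fun p => Or.inr (by linarith)

lemma Mf_cont (hρ : 0 ≤ ρ) (u : U1 × U2) :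
    Continuous fun p : ℝ × ℝ => Mf ρ (cL c0 ℓ1 ℓ2 s1 s2 θ1 θ2 p.1 p.2) u := by
  unfold Mf
  refine Continuous.div ?_ (Zf_cont c0 ℓ1 ℓ2 s1 s2 θ1 θ2 hρ)
    (fun p => (Zf_pos _).ne')
  refine Continuous.mul ?_
    (Real.continuous_exp.comp ((cL_cont c0 ℓ1 ℓ2 s1 s2 θ1 θ2 u).div_const _))
  exact (Af_cont c0 ℓ1 ℓ2 s1 s2 θ1 θ2 hρ u.2).rpow_const fun p => Or.inr hρ

lemma slackM_cont (hρ : 0 ≤ ρ) (ℓ : U1 × U2 → ℝ) (θ s : ℝ) :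
    Continuous fun p : ℝ × ℝ =>
      slack ℓ θ s (Mf ρ (cL c0 ℓ1 ℓ2 s1 s2 θ1 θ2 p.1 p.2)) := by
  unfold slack
  refine continuous_const.mul (Continuous.sub ?_ continuous_const)
  exact continuous_finset_sum _ fun u _ =>
    (Mf_cont c0 ℓ1 ℓ2 s1 s2 θ1 θ2 hρ u).mul continuous_const

/-- Strong duality with dual attainment (under a Slater point). -/
theorem dual_attained (hρ : 0 ≤ ρ)
    (Q0 : U1 × U2 → ℝ) (hQ0 : IsPmf Q0)
    (hsl1 : 0 < slack ℓ1 θ1 s1 Q0) (hsl2 : 0 < slack ℓ2 θ2 s2 Q0) :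
    ∃ (Q : U1 × U2 → ℝ) (l1 l2 : ℝ), IsPmf Q ∧ 0 ≤ l1 ∧ 0 ≤ l2 ∧
      0 ≤ slack ℓ1 θ1 s1 Q ∧ 0 ≤ slack ℓ2 θ2 s2 Q ∧
      Gf ρ c0 Q = -Real.log (Zf ρ (cL c0 ℓ1 ℓ2 s1 s2 θ1 θ2 l1 l2)) := by
  set g : ℝ × ℝ → ℝ :=
    fun p => -Real.log (Zf ρ (cL c0 ℓ1 ℓ2 s1 s2 θ1 θ2 p.1 p.2)) with hg
  have hgcont : Continuous g := by
    rw [hg]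
    exact ((Zf_cont c0 ℓ1 ℓ2 s1 s2 θ1 θ2 hρ).log fun p => (Zf_pos _).ne').neg
  set G0 := Gf ρ c0 Q0 with hG0
  set sl1 := slack ℓ1 θ1 s1 Q0
  set sl2 := slack ℓ2 θ2 s2 Q0
  have hub : ∀ p : ℝ × ℝ, g p ≤ G0 - p.1 * sl1 - p.2 * sl2 := by
    intro p
    have h := keyIneq hρ (cL c0 ℓ1 ℓ2 s1 s2 θ1 θ2 p.1 p.2) Q0 hQ0
    rw [bridge ρ c0 ℓ1 ℓ2 s1 s2 θ1 θ2 p.1 p.2 Q0 hQ0] at h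
    exact h
  set δ := min sl1 sl2 with hδ
  have hδpos : 0 < δ := lt_min hsl1 hsl2
  set R := max 1 ((G0 - g (0, 0) + 1) / δ) with hR
  have hR1 : (1:ℝ) ≤ R := le_max_left _ _
  have hRδ : G0 - g (0, 0) + 1 ≤ R * δ := by
    rw [hR]
    calc G0 - g (0, 0) + 1 = ((G0 - g (0, 0) + 1) / δ) * δ := by
          field_simp
      _ ≤ max 1 ((G0 - g (0, 0) + 1) / δ) * δ :=
          mul_le_mul_of_nonneg_right (le_max_right _ _) hδpos.le
  have hout : ∀ p : ℝ × ℝ, 0 ≤ p.1 → 0 ≤ p.2 → (R < p.1 ∨ R < p.2) →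
      g p < g (0, 0) := by
    intro p h1 h2 hor
    have hterm : R * δ ≤ p.1 * sl1 + p.2 * sl2 := by
      have hd1 : δ ≤ sl1 := min_le_left _ _
      have hd2 : δ ≤ sl2 := min_le_right _ _
      rcases hor with h | h
      · nlinarith
      · nlinarith
    have := hub p
    nlinarith
  -- maximize g on the box
  have hKcpt : IsCompact (Set.Icc (0:ℝ) R ×ˢ Set.Icc (0:ℝ) R) :=
    isCompact_Icc.prod isCompact_Icc
  have h0R : (0:ℝ) ≤ R := by linarith
  have hKne : ((0:ℝ), (0:ℝ)) ∈ Set.Icc (0:ℝ) R ×ˢ Set.Icc (0:ℝ) R :=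
    ⟨Set.mem_Icc.2 ⟨le_rfl, h0R⟩, Set.mem_Icc.2 ⟨le_rfl, h0R⟩⟩
  obtain ⟨pstar, hpK, hmax⟩ := hKcpt.exists_isMaxOn ⟨_, hKne⟩ hgcont.continuousOn
  have hp1 : 0 ≤ pstar.1 := hpK.1.1
  have hp2 : 0 ≤ pstar.2 := hpK.2.1
  have hglobal : ∀ p : ℝ × ℝ, 0 ≤ p.1 → 0 ≤ p.2 → g p ≤ g pstar := by
    intro p h1 h2
    by_cases hmem : p ∈ Set.Icc (0:ℝ) R ×ˢ Set.Icc (0:ℝ) R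
    · exact hmax hmem
    · have hor : R < p.1 ∨ R < p.2 := by
        by_contra hcon
        push_neg at hcon
        exact hmem ⟨Set.mem_Icc.2 ⟨h1, hcon.1⟩, Set.mem_Icc.2 ⟨h2, hcon.2⟩⟩
      exact le_of_lt (lt_of_lt_of_le (hout p h1 h2 hor) (hmax hKne))
  -- key chain inequality
  set Mp : ℝ × ℝ → (U1 × U2 → ℝ) :=
    fun p => Mf ρ (cL c0 ℓ1 ℓ2 s1 s2 θ1 θ2 p.1 p.2) with hMp
  have hgeq : ∀ q : ℝ × ℝ, g q
      = Gf ρ c0 (Mp q) - q.1 * slack ℓ1 θ1 s1 (Mp q) - q.2 * slack ℓ2 θ2 s2 (Mp q) := by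
    intro q
    show -Real.log (Zf ρ (cL c0 ℓ1 ℓ2 s1 s2 θ1 θ2 q.1 q.2)) = _
    rw [← keyEq hρ (cL c0 ℓ1 ℓ2 s1 s2 θ1 θ2 q.1 q.2),
      bridge ρ c0 ℓ1 ℓ2 s1 s2 θ1 θ2 q.1 q.2 _ (Mf_pmf _)]
  have hchain : ∀ q : ℝ × ℝ, (pstar.1 - q.1) * slack ℓ1 θ1 s1 (Mp q)
      + (pstar.2 - q.2) * slack ℓ2 θ2 s2 (Mp q) ≤ g q - g pstar := by
    intro q
    have h1 := keyIneq hρ (cL c0 ℓ1 ℓ2 s1 s2 θ1 θ2 pstar.1 pstar.2) (Mp q) (Mf_pmf _)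
    rw [bridge ρ c0 ℓ1 ℓ2 s1 s2 θ1 θ2 pstar.1 pstar.2 _ (Mf_pmf _)] at h1
    have h2 := hgeq q
    have h3 : g pstar ≤ Gf ρ c0 (Mp q) - pstar.1 * slack ℓ1 θ1 s1 (Mp q)
        - pstar.2 * slack ℓ2 θ2 s2 (Mp q) := h1
    linarith
  -- Claims: feasibility and complementary slackness at the maximizer
  have claimA : ∀ (ℓ : U1 × U2 → ℝ) (θ sg : ℝ)
      (hc : Continuous fun t : ℝ => slack ℓ θ sg (Mp (pstar.1 + t, pstar.2)))
      (hch : ∀ t : ℝ, -t * slack ℓ θ sg (Mp (pstar.1 + t, pstar.2))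
        ≤ g (pstar.1 + t, pstar.2) - g pstar), True := fun _ _ _ _ _ => trivial
  clear claimA
  have hA1 : 0 ≤ slack ℓ1 θ1 s1 (Mp pstar) := by
    by_contra hneg
    push_neg at hneg
    have hφcont : Continuous fun t : ℝ => slack ℓ1 θ1 s1 (Mp (pstar.1 + t, pstar.2)) :=
      (slackM_cont c0 ℓ1 ℓ2 s1 s2 θ1 θ2 hρ ℓ1 θ1 s1).comp
        ((continuous_const.add continuous_id).prodMk continuous_const)
    have hφ0 : slack ℓ1 θ1 s1 (Mp (pstar.1 + 0, pstar.2)) < 0 := by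
      rw [add_zero]
      exact hneg
    have hev : ∀ᶠ t in nhdsWithin (0:ℝ) (Set.Ioi 0),
        slack ℓ1 θ1 s1 (Mp (pstar.1 + t, pstar.2)) < 0 :=
      eventually_nhdsWithin_of_eventually_nhds
        ((hφcont.tendsto 0).eventually_lt_const hφ0)
    obtain ⟨t, hφt, ht⟩ := (hev.and self_mem_nhdsWithin).exists
    have ht' : (0:ℝ) < t := ht
    have hq := hchain (pstar.1 + t, pstar.2)
    have hglob := hglobal (pstar.1 + t, pstar.2) (by simp; linarith) (by simpa using hp2)
    simp only at hq
    nlinarith [mul_pos ht' (neg_pos.2 hφt)]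
  have hA2 : 0 ≤ slack ℓ2 θ2 s2 (Mp pstar) := by
    by_contra hneg
    push_neg at hneg
    have hφcont : Continuous fun t : ℝ => slack ℓ2 θ2 s2 (Mp (pstar.1, pstar.2 + t)) :=
      (slackM_cont c0 ℓ1 ℓ2 s1 s2 θ1 θ2 hρ ℓ2 θ2 s2).comp
        (continuous_const.prodMk (continuous_const.add continuous_id))
    have hφ0 : slack ℓ2 θ2 s2 (Mp (pstar.1, pstar.2 + 0)) < 0 := by
      rw [add_zero]
      exact hneg
    have hev : ∀ᶠ t in nhdsWithin (0:ℝ) (Set.Ioi 0),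
        slack ℓ2 θ2 s2 (Mp (pstar.1, pstar.2 + t)) < 0 :=
      eventually_nhdsWithin_of_eventually_nhds
        ((hφcont.tendsto 0).eventually_lt_const hφ0)
    obtain ⟨t, hφt, ht⟩ := (hev.and self_mem_nhdsWithin).exists
    have ht' : (0:ℝ) < t := ht
    have hq := hchain (pstar.1, pstar.2 + t)
    have hglob := hglobal (pstar.1, pstar.2 + t) (by simpa using hp1) (by simp; linarith)
    simp only at hq
    nlinarith [mul_pos ht' (neg_pos.2 hφt)]
  have hB1 : pstar.1 * slack ℓ1 θ1 s1 (Mp pstar) = 0 := by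
    rcases eq_or_lt_of_le hp1 with h0 | hpos
    · rw [← h0, zero_mul]
    rcases eq_or_lt_of_le hA1 with hs0 | hspos
    · rw [← hs0, mul_zero]
    exfalso
    have hφcont : Continuous fun t : ℝ => slack ℓ1 θ1 s1 (Mp (pstar.1 + t, pstar.2)) :=
      (slackM_cont c0 ℓ1 ℓ2 s1 s2 θ1 θ2 hρ ℓ1 θ1 s1).comp
        ((continuous_const.add continuous_id).prodMk continuous_const)
    have hφ0 : 0 < slack ℓ1 θ1 s1 (Mp (pstar.1 + 0, pstar.2)) := by
      rw [add_zero]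
      exact hspos
    have hev : ∀ᶠ t in nhdsWithin (0:ℝ) (Set.Iio 0),
        0 < slack ℓ1 θ1 s1 (Mp (pstar.1 + t, pstar.2)) ∧ -pstar.1 < t :=
      eventually_nhdsWithin_of_eventually_nhds
        (((hφcont.tendsto 0).eventually_const_lt hφ0).and
          (eventually_gt_nhds (by linarith)))
    obtain ⟨t, ⟨hφt, hgt⟩, ht⟩ := (hev.and self_mem_nhdsWithin).exists
    have ht' : t < 0 := ht
    have hq := hchain (pstar.1 + t, pstar.2)
    have hglob := hglobal (pstar.1 + t, pstar.2) (by simp; linarith) (by simpa using hp2)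
    simp only at hq
    nlinarith [mul_pos (neg_pos.2 ht') hφt]
  have hB2 : pstar.2 * slack ℓ2 θ2 s2 (Mp pstar) = 0 := by
    rcases eq_or_lt_of_le hp2 with h0 | hpos
    · rw [← h0, zero_mul]
    rcases eq_or_lt_of_le hA2 with hs0 | hspos
    · rw [← hs0, mul_zero]
    exfalso
    have hφcont : Continuous fun t : ℝ => slack ℓ2 θ2 s2 (Mp (pstar.1, pstar.2 + t)) :=
      (slackM_cont c0 ℓ1 ℓ2 s1 s2 θ1 θ2 hρ ℓ2 θ2 s2).comp
        (continuous_const.prodMk (continuous_const.add continuous_id))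
    have hφ0 : 0 < slack ℓ2 θ2 s2 (Mp (pstar.1, pstar.2 + 0)) := by
      rw [add_zero]
      exact hspos
    have hev : ∀ᶠ t in nhdsWithin (0:ℝ) (Set.Iio 0),
        0 < slack ℓ2 θ2 s2 (Mp (pstar.1, pstar.2 + t)) ∧ -pstar.2 < t :=
      eventually_nhdsWithin_of_eventually_nhds
        (((hφcont.tendsto 0).eventually_const_lt hφ0).and
          (eventually_gt_nhds (by linarith)))
    obtain ⟨t, ⟨hφt, hgt⟩, ht⟩ := (hev.and self_mem_nhdsWithin).exists
    have ht' : t < 0 := ht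
    have hq := hchain (pstar.1, pstar.2 + t)
    have hglob := hglobal (pstar.1, pstar.2 + t) (by simpa using hp1) (by simp; linarith)
    simp only at hq
    nlinarith [mul_pos (neg_pos.2 ht') hφt]
  refine ⟨Mp pstar, pstar.1, pstar.2, Mf_pmf _, hp1, hp2, hA1, hA2, ?_⟩
  have heq := hgeq pstar
  have : g pstar = -Real.log (Zf ρ (cL c0 ℓ1 ℓ2 s1 s2 θ1 θ2 pstar.1 pstar.2)) := rfl
  linarith

end Duality

set_option linter.unusedSectionVars false in
lemma slack_cont_Q (ℓ : U1 × U2 → ℝ) (θ s : ℝ) :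
    Continuous fun Q : U1 × U2 → ℝ => slack ℓ θ s Q := by
  unfold slack
  exact continuous_const.mul
    ((continuous_finset_sum _ fun u _ => (continuous_apply u).mul continuous_const).sub
      continuous_const)

set_option linter.unusedSectionVars false in
lemma Gf_cont (ρ : ℝ) (c : U1 × U2 → ℝ) :
    Continuous fun Q : U1 × U2 → ℝ => Gf ρ c Q := by
  unfold Gf
  refine Continuous.sub (Continuous.sub (continuous_const.mul ?_) (continuous_const.mul ?_)) ?_
  · exact continuous_finset_sum _ fun u _ =>
      Real.continuous_mul_log.comp (continuous_apply u)
  · exact continuous_finset_sum _ fun u2 _ =>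
      Real.continuous_mul_log.comp (continuous_finset_sum _ fun u1 _ => continuous_apply (u1, u2))
  · exact continuous_finset_sum _ fun u _ => (continuous_apply u).mul continuous_const

end Stmt5

set_option maxHeartbeats 1600000 in
/-- Proposition 1 of the paper, error type τ = {1}: for a full-support joint
source `P` on `U₁ × U₂` with marginals `P₁, P₂`, thresholds `γ₁, γ₂ ∈ (0,1)`, `ρ ∈ [0,1]`,
class indices `i₁, i₂ ∈ {1,2}`, and assuming the class `B₁^{i₁}(γ₁) ∩ B₂^{i₂}(γ₂)` is
nonempty, the infimum over pmfs `P̂` in that class of `D(P̂‖P) − ρ (H(P̂) − H(P̂_{U₂}))`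
equals minus the infimum over `λ₁, λ₂ ≥ 0` of
`log ∑_{u₂} (∑_{u₁} P(u)^{1/(1+ρ)} (P₁(u₁)/γ₁)^{−(−1)^{i₁}λ₁/(1+ρ)}
  (P₂(u₂)/γ₂)^{−(−1)^{i₂}λ₂/(1+ρ)})^{1+ρ}`. -/
theorem stmt5 {U1 U2 : Type*} [Fintype U1] [Fintype U2] [Nonempty U1] [Nonempty U2]
    (P : U1 × U2 → ℝ) (hP : IsPmf P) (hPpos : ∀ u, 0 < P u)
    (γ1 γ2 : ℝ) (hγ1 : γ1 ∈ Set.Ioo (0:ℝ) 1) (hγ2 : γ2 ∈ Set.Ioo (0:ℝ) 1)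
    (ρ : ℝ) (hρ : ρ ∈ Set.Icc (0:ℝ) 1)
    (i1 i2 : ℕ) (hi1 : i1 = 1 ∨ i1 = 2) (hi2 : i2 = 1 ∨ i2 = 2)
    (hne : ∃ Phat : U1 × U2 → ℝ, IsPmf Phat ∧
      (if i1 = 1
        then (∑ u : U1 × U2, Phat u * Real.log (∑ v, P (u.1, v))) ≥ Real.log γ1
        else (∑ u : U1 × U2, Phat u * Real.log (∑ v, P (u.1, v))) < Real.log γ1) ∧
      (if i2 = 1
        then (∑ u : U1 × U2, Phat u * Real.log (∑ v, P (v, u.2))) ≥ Real.log γ2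
        else (∑ u : U1 × U2, Phat u * Real.log (∑ v, P (v, u.2))) < Real.log γ2)) :
    sInf {d : ℝ | ∃ Phat : U1 × U2 → ℝ, IsPmf Phat ∧
        (if i1 = 1
          then (∑ u : U1 × U2, Phat u * Real.log (∑ v, P (u.1, v))) ≥ Real.log γ1
          else (∑ u : U1 × U2, Phat u * Real.log (∑ v, P (u.1, v))) < Real.log γ1) ∧
        (if i2 = 1
          then (∑ u : U1 × U2, Phat u * Real.log (∑ v, P (v, u.2))) ≥ Real.log γ2
          else (∑ u : U1 × U2, Phat u * Real.log (∑ v, P (v, u.2))) < Real.log γ2) ∧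
        d = klDiv Phat P - ρ * (ent Phat - ent (fun u2 => ∑ u1, Phat (u1, u2)))}
    = -sInf {d : ℝ | ∃ l1 l2 : ℝ, 0 ≤ l1 ∧ 0 ≤ l2 ∧
        d = Real.log (∑ u2, (∑ u1,
              P (u1, u2) ^ (1 / (1 + ρ))
              * ((∑ v, P (u1, v)) / γ1) ^ (-((-1:ℝ) ^ i1) * l1 / (1 + ρ))
              * ((∑ v, P (v, u2)) / γ2) ^ (-((-1:ℝ) ^ i2) * l2 / (1 + ρ))) ^ (1 + ρ))} := by
  obtain ⟨hρ0, -⟩ := hρ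
  have hr1 : (0:ℝ) < 1 + ρ := by linarith
  have hP1pos : ∀ u1 : U1, 0 < ∑ v, P (u1, v) :=
    fun u1 => Finset.sum_pos (fun v _ => hPpos _) Finset.univ_nonempty
  have hP2pos : ∀ u2 : U2, 0 < ∑ v, P (v, u2) :=
    fun u2 => Finset.sum_pos (fun v _ => hPpos _) Finset.univ_nonempty
  obtain ⟨Q0, hQ0pmf, hQ0c1, hQ0c2⟩ := hne
  -- dual-expression translation (stated verbatim, before any `set`)
  have hdual : ∀ l1 l2 : ℝ,
      Real.log (∑ u2, (∑ u1,
              P (u1, u2) ^ (1 / (1 + ρ))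
              * ((∑ v, P (u1, v)) / γ1) ^ (-((-1:ℝ) ^ i1) * l1 / (1 + ρ))
              * ((∑ v, P (v, u2)) / γ2) ^ (-((-1:ℝ) ^ i2) * l2 / (1 + ρ))) ^ (1 + ρ))
        = Real.log (Stmt5.Zf ρ (Stmt5.cL (fun u => Real.log (P u))
            (fun u => Real.log (∑ v, P (u.1, v))) (fun u => Real.log (∑ v, P (v, u.2)))
            (-((-1:ℝ) ^ i1)) (-((-1:ℝ) ^ i2)) (Real.log γ1) (Real.log γ2) l1 l2)) := by
    intro l1 l2
    congr 1
    unfold Stmt5.Zf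
    refine Finset.sum_congr rfl fun u2 _ => ?_
    congr 1
    unfold Stmt5.Af
    refine Finset.sum_congr rfl fun u1 _ => ?_
    rw [Real.rpow_def_of_pos (hPpos (u1, u2)),
      Real.rpow_def_of_pos (div_pos (hP1pos u1) hγ1.1),
      Real.rpow_def_of_pos (div_pos (hP2pos u2) hγ2.1),
      ← Real.exp_add, ← Real.exp_add]
    congr 1
    rw [Real.log_div (hP1pos u1).ne' hγ1.1.ne', Real.log_div (hP2pos u2).ne' hγ2.1.ne']
    unfold Stmt5.cL
    field_simp
  -- name the two sets
  set SS := {d : ℝ | ∃ Phat : U1 × U2 → ℝ, IsPmf Phat ∧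
        (if i1 = 1
          then (∑ u : U1 × U2, Phat u * Real.log (∑ v, P (u.1, v))) ≥ Real.log γ1
          else (∑ u : U1 × U2, Phat u * Real.log (∑ v, P (u.1, v))) < Real.log γ1) ∧
        (if i2 = 1
          then (∑ u : U1 × U2, Phat u * Real.log (∑ v, P (v, u.2))) ≥ Real.log γ2
          else (∑ u : U1 × U2, Phat u * Real.log (∑ v, P (v, u.2))) < Real.log γ2) ∧
        d = klDiv Phat P - ρ * (ent Phat - ent (fun u2 => ∑ u1, Phat (u1, u2)))}
    with hSS
  set TT := {d : ℝ | ∃ l1 l2 : ℝ, 0 ≤ l1 ∧ 0 ≤ l2 ∧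
        d = Real.log (∑ u2, (∑ u1,
              P (u1, u2) ^ (1 / (1 + ρ))
              * ((∑ v, P (u1, v)) / γ1) ^ (-((-1:ℝ) ^ i1) * l1 / (1 + ρ))
              * ((∑ v, P (v, u2)) / γ2) ^ (-((-1:ℝ) ^ i2) * l2 / (1 + ρ))) ^ (1 + ρ))}
    with hTT
  -- abbreviations
  set s1 : ℝ := -((-1:ℝ) ^ i1) with hs1def
  set s2 : ℝ := -((-1:ℝ) ^ i2) with hs2def
  set ℓ1 : U1 × U2 → ℝ := fun u => Real.log (∑ v, P (u.1, v)) with hℓ1def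
  set ℓ2 : U1 × U2 → ℝ := fun u => Real.log (∑ v, P (v, u.2)) with hℓ2def
  set c0 : U1 × U2 → ℝ := fun u => Real.log (P u) with hc0def
  set θ1 : ℝ := Real.log γ1 with hθ1def
  set θ2 : ℝ := Real.log γ2 with hθ2def
  set e1 : ℝ := if i1 = 1 then 1 else 0 with he1def
  set e2 : ℝ := if i2 = 1 then 1 else 0 with he2def
  have hs1_1 : i1 = 1 → s1 = 1 := fun h => by rw [hs1def, h]; norm_num
  have hs1_2 : i1 = 2 → s1 = -1 := fun h => by rw [hs1def, h]; norm_num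
  have hs2_1 : i2 = 1 → s2 = 1 := fun h => by rw [hs2def, h]; norm_num
  have hs2_2 : i2 = 2 → s2 = -1 := fun h => by rw [hs2def, h]; norm_num
  have hse1 : 0 ≤ s1 * e1 := by
    rcases hi1 with h | h
    · rw [hs1_1 h, he1def, if_pos h]; norm_num
    · rw [he1def, if_neg (by omega), mul_zero]
  have hse2 : 0 ≤ s2 * e2 := by
    rcases hi2 with h | h
    · rw [hs2_1 h, he2def, if_pos h]; norm_num
    · rw [he2def, if_neg (by omega), mul_zero]
  have hse1' : s1 * e1 ≤ 1 := by
    rcases hi1 with h | h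
    · rw [hs1_1 h, he1def, if_pos h]; norm_num
    · rw [he1def, if_neg (by omega), mul_zero]; norm_num
  have hse2' : s2 * e2 ≤ 1 := by
    rcases hi2 with h | h
    · rw [hs2_1 h, he2def, if_pos h]; norm_num
    · rw [he2def, if_neg (by omega), mul_zero]; norm_num
  have hconv1 : ∀ Q : U1 × U2 → ℝ,
      ∑ u, Q u * ℓ1 u = ∑ u : U1 × U2, Q u * Real.log (∑ v, P (u.1, v)) :=
    fun Q => by simp only [hℓ1def]
  have hconv2 : ∀ Q : U1 × U2 → ℝ,
      ∑ u, Q u * ℓ2 u = ∑ u : U1 × U2, Q u * Real.log (∑ v, P (v, u.2)) :=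
    fun Q => by simp only [hℓ2def]
  -- objective translation
  have hobj : ∀ Q : U1 × U2 → ℝ, IsPmf Q →
      klDiv Q P - ρ * (ent Q - ent (fun u2 => ∑ u1, Q (u1, u2))) = Stmt5.Gf ρ c0 Q := by
    intro Q hQ
    unfold klDiv ent Stmt5.Gf
    have h1 : ∑ u, Q u * Real.log (Q u / P u)
        = ∑ u : U1 × U2, (Q u * Real.log (Q u) - Q u * Real.log (P u)) := by
      refine Finset.sum_congr rfl fun u _ => ?_
      rw [Stmt5.mul_log_div_eq (Q u) (P u) (hQ.1 u) (hPpos u).ne', mul_sub]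
    rw [h1, Finset.sum_sub_distrib]
    simp only [hc0def]
    ring
  -- feasibility translations
  have hc1a : ∀ Q : U1 × U2 → ℝ,
      (if i1 = 1
        then (∑ u : U1 × U2, Q u * Real.log (∑ v, P (u.1, v))) ≥ θ1
        else (∑ u : U1 × U2, Q u * Real.log (∑ v, P (u.1, v))) < θ1) →
      0 ≤ Stmt5.slack ℓ1 θ1 s1 Q := by
    intro Q h
    unfold Stmt5.slack
    rw [hconv1]
    rcases hi1 with h1 | h1
    · rw [if_pos h1] at h
      rw [hs1_1 h1, one_mul]
      linarith
    · rw [if_neg (by omega)] at h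
      rw [hs1_2 h1]
      nlinarith
  have hc2a : ∀ Q : U1 × U2 → ℝ,
      (if i2 = 1
        then (∑ u : U1 × U2, Q u * Real.log (∑ v, P (v, u.2))) ≥ θ2
        else (∑ u : U1 × U2, Q u * Real.log (∑ v, P (v, u.2))) < θ2) →
      0 ≤ Stmt5.slack ℓ2 θ2 s2 Q := by
    intro Q h
    unfold Stmt5.slack
    rw [hconv2]
    rcases hi2 with h1 | h1
    · rw [if_pos h1] at h
      rw [hs2_1 h1, one_mul]
      linarith
    · rw [if_neg (by omega)] at h
      rw [hs2_2 h1]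
      nlinarith
  -- Slater points for the relaxed problems
  have hslater1 : ∀ ε : ℝ, 0 < ε → 0 < Stmt5.slack ℓ1 (θ1 - ε * e1) s1 Q0 := by
    intro ε hε
    unfold Stmt5.slack
    rw [hconv1]
    rcases hi1 with h1 | h1
    · rw [if_pos h1] at hQ0c1
      rw [hs1_1 h1, one_mul, he1def, if_pos h1, mul_one]
      linarith
    · rw [if_neg (by omega)] at hQ0c1
      rw [hs1_2 h1, he1def, if_neg (by omega), mul_zero, sub_zero]
      nlinarith
  have hslater2 : ∀ ε : ℝ, 0 < ε → 0 < Stmt5.slack ℓ2 (θ2 - ε * e2) s2 Q0 := by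
    intro ε hε
    unfold Stmt5.slack
    rw [hconv2]
    rcases hi2 with h1 | h1
    · rw [if_pos h1] at hQ0c2
      rw [hs2_1 h1, one_mul, he2def, if_pos h1, mul_one]
      linarith
    · rw [if_neg (by omega)] at hQ0c2
      rw [hs2_2 h1, he2def, if_neg (by omega), mul_zero, sub_zero]
      nlinarith
  -- relaxed vs. unrelaxed slack
  have hrel1 : ∀ (Q : U1 × U2 → ℝ) (ε : ℝ),
      Stmt5.slack ℓ1 (θ1 - ε * e1) s1 Q = Stmt5.slack ℓ1 θ1 s1 Q + (s1 * e1) * ε := by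
    intro Q ε
    unfold Stmt5.slack
    ring
  have hrel2 : ∀ (Q : U1 × U2 → ℝ) (ε : ℝ),
      Stmt5.slack ℓ2 (θ2 - ε * e2) s2 Q = Stmt5.slack ℓ2 θ2 s2 Q + (s2 * e2) * ε := by
    intro Q ε
    unfold Stmt5.slack
    ring
  -- weak duality
  have hwd : ∀ Q : U1 × U2 → ℝ, IsPmf Q → 0 ≤ Stmt5.slack ℓ1 θ1 s1 Q →
      0 ≤ Stmt5.slack ℓ2 θ2 s2 Q → ∀ l1 l2 : ℝ, 0 ≤ l1 → 0 ≤ l2 →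
      -Real.log (Stmt5.Zf ρ (Stmt5.cL c0 ℓ1 ℓ2 s1 s2 θ1 θ2 l1 l2)) ≤ Stmt5.Gf ρ c0 Q := by
    intro Q hQ hsl1 hsl2 l1 l2 hl1 hl2
    have h := Stmt5.keyIneq hρ0 (Stmt5.cL c0 ℓ1 ℓ2 s1 s2 θ1 θ2 l1 l2) Q hQ
    rw [Stmt5.bridge ρ c0 ℓ1 ℓ2 s1 s2 θ1 θ2 l1 l2 Q hQ] at h
    nlinarith [mul_nonneg hl1 hsl1, mul_nonneg hl2 hsl2]
  -- dual set facts
  have hTne : TT.Nonempty := by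
    rw [hTT]
    exact ⟨_, 0, 0, le_rfl, le_rfl, rfl⟩
  have hTbdd : BddBelow TT := by
    refine ⟨-(Stmt5.Gf ρ c0 Q0), ?_⟩
    rintro t ht
    rw [hTT] at ht
    obtain ⟨l1, l2, hl1, hl2, rfl⟩ := ht
    rw [hdual l1 l2]
    have := hwd Q0 hQ0pmf (hc1a Q0 hQ0c1) (hc2a Q0 hQ0c2) l1 l2 hl1 hl2
    linarith
  have hSne : SS.Nonempty := by
    rw [hSS]
    exact ⟨_, Q0, hQ0pmf, hQ0c1, hQ0c2, rfl⟩
  have hlow : ∀ d ∈ SS, -sInf TT ≤ d := by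
    intro d hd
    rw [hSS] at hd
    obtain ⟨Q, hQpmf, h1, h2, rfl⟩ := hd
    rw [hobj Q hQpmf, neg_le]
    refine le_csInf hTne ?_
    rintro t ht
    rw [hTT] at ht
    obtain ⟨l1, l2, hl1, hl2, rfl⟩ := ht
    rw [hdual l1 l2]
    have := hwd Q hQpmf (hc1a Q h1) (hc2a Q h2) l1 l2 hl1 hl2
    linarith
  have hSbdd : BddBelow SS := ⟨-sInf TT, hlow⟩
  refine le_antisymm ?_ (le_csInf hSne hlow)
  refine le_of_forall_pos_le_add ?_
  intro δ hδ
  -- strong duality for the relaxed problems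
  have hQn : ∀ n : ℕ, ∃ Q : U1 × U2 → ℝ, IsPmf Q ∧
      0 ≤ Stmt5.slack ℓ1 (θ1 - (1 / ((n:ℝ) + 1)) * e1) s1 Q ∧
      0 ≤ Stmt5.slack ℓ2 (θ2 - (1 / ((n:ℝ) + 1)) * e2) s2 Q ∧
      Stmt5.Gf ρ c0 Q ≤ -sInf TT := by
    intro n
    have hε : (0:ℝ) < 1 / ((n:ℝ) + 1) := by positivity
    obtain ⟨Q, l1, l2, hQpmf, hl1, hl2, hsQ1, hsQ2, heq⟩ :=
      Stmt5.dual_attained c0 ℓ1 ℓ2 s1 s2 (θ1 - (1 / ((n:ℝ) + 1)) * e1)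
        (θ2 - (1 / ((n:ℝ) + 1)) * e2) hρ0 Q0 hQ0pmf (hslater1 _ hε) (hslater2 _ hε)
    refine ⟨Q, hQpmf, hsQ1, hsQ2, ?_⟩
    have hshift : Stmt5.cL c0 ℓ1 ℓ2 s1 s2 (θ1 - (1 / ((n:ℝ) + 1)) * e1)
        (θ2 - (1 / ((n:ℝ) + 1)) * e2) l1 l2
        = fun u => Stmt5.cL c0 ℓ1 ℓ2 s1 s2 θ1 θ2 l1 l2 u
            + (l1 * (s1 * ((1 / ((n:ℝ) + 1)) * e1))
              + l2 * (s2 * ((1 / ((n:ℝ) + 1)) * e2))) := by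
      funext u
      unfold Stmt5.cL
      ring
    rw [hshift, Stmt5.Zf_shift hρ0, Real.log_mul (Real.exp_pos _).ne' (Stmt5.Zf_pos _).ne',
      Real.log_exp] at heq
    have hκ : 0 ≤ l1 * (s1 * ((1 / ((n:ℝ) + 1)) * e1))
        + l2 * (s2 * ((1 / ((n:ℝ) + 1)) * e2)) := by
      nlinarith [mul_nonneg hse1 (mul_nonneg hl1 hε.le), mul_nonneg hse2 (mul_nonneg hl2 hε.le)]
    have hmem : Real.log (Stmt5.Zf ρ (Stmt5.cL c0 ℓ1 ℓ2 s1 s2 θ1 θ2 l1 l2)) ∈ TT := by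
      rw [hTT]
      exact ⟨l1, l2, hl1, hl2, (hdual l1 l2).symm⟩
    have hinf := csInf_le hTbdd hmem
    rw [heq]
    linarith
  -- nested compact sets
  set K : ℕ → Set (U1 × U2 → ℝ) := fun n => {Q | (∀ u, 0 ≤ Q u) ∧ (∑ u, Q u = 1) ∧
      0 ≤ Stmt5.slack ℓ1 (θ1 - (1 / ((n:ℝ) + 1)) * e1) s1 Q ∧
      0 ≤ Stmt5.slack ℓ2 (θ2 - (1 / ((n:ℝ) + 1)) * e2) s2 Q ∧
      Stmt5.Gf ρ c0 Q ≤ -sInf TT} with hK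
  have hKclosed : ∀ n, IsClosed (K n) := by
    intro n
    have hKeq : K n = {Q : U1 × U2 → ℝ | ∀ u, 0 ≤ Q u} ∩ ({Q | ∑ u, Q u = 1}
        ∩ ({Q | 0 ≤ Stmt5.slack ℓ1 (θ1 - (1 / ((n:ℝ) + 1)) * e1) s1 Q}
          ∩ ({Q | 0 ≤ Stmt5.slack ℓ2 (θ2 - (1 / ((n:ℝ) + 1)) * e2) s2 Q}
            ∩ {Q | Stmt5.Gf ρ c0 Q ≤ -sInf TT}))) := by
      simp only [hK]
      rfl
    rw [hKeq]
    refine IsClosed.inter ?_ (IsClosed.inter ?_ (IsClosed.inter ?_ (IsClosed.inter ?_ ?_)))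
    · have h : {Q : U1 × U2 → ℝ | ∀ u, 0 ≤ Q u} = ⋂ u, {Q : U1 × U2 → ℝ | 0 ≤ Q u} := by
        ext Q
        simp [Set.mem_iInter]
      rw [h]
      exact isClosed_iInter fun u => isClosed_le continuous_const (continuous_apply u)
    · exact isClosed_eq (continuous_finset_sum _ fun u _ => continuous_apply u) continuous_const
    · exact isClosed_le continuous_const (Stmt5.slack_cont_Q ℓ1 _ s1)
    · exact isClosed_le continuous_const (Stmt5.slack_cont_Q ℓ2 _ s2)
    · exact isClosed_le (Stmt5.Gf_cont ρ c0) continuous_const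
  have hKsub : ∀ n, K (n + 1) ⊆ K n := by
    intro n Q hQ
    simp only [hK] at hQ ⊢
    obtain ⟨ha, hb, hc, hd, he⟩ := hQ
    push_cast at hc hd
    have hmono : (1:ℝ) / ((n:ℝ) + 1 + 1) ≤ 1 / ((n:ℝ) + 1) := by
      apply one_div_le_one_div_of_le
      · positivity
      · linarith
    refine ⟨ha, hb, ?_, ?_, he⟩
    · rw [hrel1] at hc ⊢
      nlinarith [mul_le_mul_of_nonneg_left hmono hse1]
    · rw [hrel2] at hd ⊢
      nlinarith [mul_le_mul_of_nonneg_left hmono hse2]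
  have hKnonempty : ∀ n, (K n).Nonempty := by
    intro n
    obtain ⟨Q, hQpmf, h1, h2, h3⟩ := hQn n
    refine ⟨Q, ?_⟩
    simp only [hK]
    exact ⟨hQpmf.1, hQpmf.2, h1, h2, h3⟩
  have hK0cpt : IsCompact (K 0) := by
    have hpic : IsCompact (Set.univ.pi fun _ : U1 × U2 => Set.Icc (0:ℝ) 1) :=
      isCompact_univ_pi fun _ => isCompact_Icc
    refine IsCompact.of_isClosed_subset hpic (hKclosed 0) ?_
    intro Q hQ
    simp only [hK] at hQ
    refine Set.mem_univ_pi.2 fun u => Set.mem_Icc.2 ⟨hQ.1 u, ?_⟩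
    calc Q u ≤ ∑ u', Q u' := Finset.single_le_sum (fun i _ => hQ.1 i) (Finset.mem_univ u)
      _ = 1 := hQ.2.1
  obtain ⟨Qinf, hQinf⟩ :=
    IsCompact.nonempty_iInter_of_sequence_nonempty_isCompact_isClosed K hKsub hKnonempty
      hK0cpt hKclosed
  have hQinf' : ∀ n, Qinf ∈ K n := fun n => Set.mem_iInter.1 hQinf n
  have h0 := hQinf' 0
  simp only [hK] at h0
  obtain ⟨hQinn, hQisum, -, -, hQiG⟩ := h0
  have hQinfpmf : IsPmf Qinf := ⟨hQinn, hQisum⟩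
  have hsl1inf : 0 ≤ Stmt5.slack ℓ1 θ1 s1 Qinf := by
    by_contra hneg
    push_neg at hneg
    obtain ⟨n, hn⟩ := exists_nat_one_div_lt
      (show (0:ℝ) < -(Stmt5.slack ℓ1 θ1 s1 Qinf) by linarith)
    have hm := hQinf' n
    simp only [hK] at hm
    have := hm.2.2.1
    rw [hrel1] at this
    have hp : (0:ℝ) < 1 / ((n:ℝ) + 1) := by positivity
    nlinarith [mul_le_mul_of_nonneg_right hse1' hp.le, mul_nonneg hse1 hp.le]
  have hsl2inf : 0 ≤ Stmt5.slack ℓ2 θ2 s2 Qinf := by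
    by_contra hneg
    push_neg at hneg
    obtain ⟨n, hn⟩ := exists_nat_one_div_lt
      (show (0:ℝ) < -(Stmt5.slack ℓ2 θ2 s2 Qinf) by linarith)
    have hm := hQinf' n
    simp only [hK] at hm
    have := hm.2.2.2.1
    rw [hrel2] at this
    have hp : (0:ℝ) < 1 / ((n:ℝ) + 1) := by positivity
    nlinarith [mul_le_mul_of_nonneg_right hse2' hp.le, mul_nonneg hse2 hp.le]
  -- mixing with the strictly feasible point
  set f : ℝ → ℝ := fun t => Stmt5.Gf ρ c0 (fun u => (1 - t) * Qinf u + t * Q0 u) with hf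
  have hfc : Continuous f := by
    rw [hf]
    refine (Stmt5.Gf_cont ρ c0).comp (continuous_pi fun u => ?_)
    exact ((continuous_const.sub continuous_id).mul continuous_const).add
      (continuous_id.mul continuous_const)
  have hmixeq : (fun u => (1 - (0:ℝ)) * Qinf u + 0 * Q0 u) = Qinf := by
    funext u
    ring
  have hf0 : f 0 = Stmt5.Gf ρ c0 Qinf := by
    simp only [hf]
    rw [hmixeq]
  have hev : ∀ᶠ t in nhdsWithin (0:ℝ) (Set.Ioi 0), f t < f 0 + δ ∧ t < 1 :=
    eventually_nhdsWithin_of_eventually_nhds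
      (((hfc.tendsto 0).eventually_lt_const (by linarith)).and (eventually_lt_nhds zero_lt_one))
  obtain ⟨t, ⟨hft, ht1⟩, ht0⟩ := (hev.and self_mem_nhdsWithin).exists
  have ht0' : (0:ℝ) < t := ht0
  set Qt : U1 × U2 → ℝ := fun u => (1 - t) * Qinf u + t * Q0 u with hQt
  have hQtpmf : IsPmf Qt := by
    constructor
    · intro u
      simp only [hQt]
      have h1 := hQinfpmf.1 u
      have h2 := hQ0pmf.1 u
      nlinarith
    · simp only [hQt]
      rw [Finset.sum_add_distrib, ← Finset.mul_sum, ← Finset.mul_sum, hQinfpmf.2, hQ0pmf.2]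
      ring
  have hmixsum : ∀ g : U1 × U2 → ℝ,
      ∑ u, Qt u * g u = (1 - t) * ∑ u, Qinf u * g u + t * ∑ u, Q0 u * g u := by
    intro g
    rw [Finset.mul_sum, Finset.mul_sum, ← Finset.sum_add_distrib]
    refine Finset.sum_congr rfl fun u _ => ?_
    simp only [hQt]
    ring
  have hcond1 : (if i1 = 1
      then (∑ u : U1 × U2, Qt u * Real.log (∑ v, P (u.1, v))) ≥ θ1
      else (∑ u : U1 × U2, Qt u * Real.log (∑ v, P (u.1, v))) < θ1) := by
    have hm := hmixsum ℓ1
    rw [hconv1 Qt, hconv1 Qinf, hconv1 Q0] at hm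
    have hs := hsl1inf
    unfold Stmt5.slack at hs
    rw [hconv1] at hs
    rcases hi1 with h1 | h1
    · rw [if_pos h1]
      rw [if_pos h1] at hQ0c1
      rw [hs1_1 h1, one_mul] at hs
      rw [hm]
      have a1 := mul_le_mul_of_nonneg_left (show θ1 ≤ ∑ u : U1 × U2,
        Qinf u * Real.log (∑ v, P (u.1, v)) by linarith) (show (0:ℝ) ≤ 1 - t by linarith)
      have a2 := mul_le_mul_of_nonneg_left hQ0c1 ht0'.le
      nlinarith
    · rw [if_neg (by omega)]
      rw [if_neg (by omega)] at hQ0c1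
      rw [hs1_2 h1] at hs
      have hsle : ∑ u : U1 × U2, Qinf u * Real.log (∑ v, P (u.1, v)) ≤ θ1 := by nlinarith
      rw [hm]
      have a1 := mul_le_mul_of_nonneg_left hsle (show (0:ℝ) ≤ 1 - t by linarith)
      have a2 := (mul_lt_mul_iff_right₀ ht0').2 hQ0c1
      nlinarith
  have hcond2 : (if i2 = 1
      then (∑ u : U1 × U2, Qt u * Real.log (∑ v, P (v, u.2))) ≥ θ2
      else (∑ u : U1 × U2, Qt u * Real.log (∑ v, P (v, u.2))) < θ2) := by
    have hm := hmixsum ℓ2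
    rw [hconv2 Qt, hconv2 Qinf, hconv2 Q0] at hm
    have hs := hsl2inf
    unfold Stmt5.slack at hs
    rw [hconv2] at hs
    rcases hi2 with h1 | h1
    · rw [if_pos h1]
      rw [if_pos h1] at hQ0c2
      rw [hs2_1 h1, one_mul] at hs
      rw [hm]
      have a1 := mul_le_mul_of_nonneg_left (show θ2 ≤ ∑ u : U1 × U2,
        Qinf u * Real.log (∑ v, P (v, u.2)) by linarith) (show (0:ℝ) ≤ 1 - t by linarith)
      have a2 := mul_le_mul_of_nonneg_left hQ0c2 ht0'.le
      nlinarith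
    · rw [if_neg (by omega)]
      rw [if_neg (by omega)] at hQ0c2
      rw [hs2_2 h1] at hs
      have hsle : ∑ u : U1 × U2, Qinf u * Real.log (∑ v, P (v, u.2)) ≤ θ2 := by nlinarith
      rw [hm]
      have a1 := mul_le_mul_of_nonneg_left hsle (show (0:ℝ) ≤ 1 - t by linarith)
      have a2 := (mul_lt_mul_iff_right₀ ht0').2 hQ0c2
      nlinarith
  have hmemS : (klDiv Qt P - ρ * (ent Qt - ent (fun u2 => ∑ u1, Qt (u1, u2)))) ∈ SS := by
    rw [hSS]
    exact ⟨Qt, hQtpmf, hcond1, hcond2, rfl⟩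
  calc sInf SS ≤ klDiv Qt P - ρ * (ent Qt - ent (fun u2 => ∑ u1, Qt (u1, u2))) :=
        csInf_le hSbdd hmemS
    _ = Stmt5.Gf ρ c0 Qt := hobj Qt hQtpmf
    _ = f t := by simp only [hf, hQt]
    _ ≤ f 0 + δ := hft.le
    _ = Stmt5.Gf ρ c0 Qinf + δ := by rw [hf0]
    _ ≤ -sInf TT + δ := by linarith
end

section
/- Let P be a full-support pmf on 𝒰₁×𝒰₂ with marginals P_{U₁}, P_{U₂}, let γ₁, γ₂ ∈ (0,1), ρ ∈ [0,1], and i₁, i₂ ∈ {1,2}. For a pmf P̂ on 𝒰₁×𝒰₂ and ν ∈ {1,2}, set L_ν(P̂) = ∑_{u₁,u₂} P̂(u₁,u₂)·log P_{U_ν}(u_ν). Define B_ν^1(γ_ν) = { P̂ : L_ν(P̂) ≥ log γ_ν } and B_ν^2(γ_ν) = { P̂ : L_ν(P̂) < log γ_ν }. Assume B_1^{i₁}(γ₁) ∩ B_2^{i₂}(γ₂) is nonempty. Then the infimum over P̂ ∈ B_1^{i₁}(γ₁) ∩ B_2^{i₂}(γ₂) of D(P̂‖P) − ρ·H(P̂)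 equals − inf_{λ₁ ≥ 0, λ₂ ≥ 0} (1+ρ)·log ∑_{u₁,u₂} P(u₁,u₂)^{1/(1+ρ)} · (P_{U₁}(u₁)/γ₁)^{ −(−1)^{i₁} λ₁ / (1+ρ) } · (P_{U₂}(u₂)/γ₂)^{ −(−1)^{i₂} λ₂ / (1+ρ) }. (This is Proposition 1 of the paper for the error type τ = {1,2}.) -/
open Real BigOperators

section Helpers
variable {α : Type*} [Fintype α]

lemma avg_lt {p f : α → ℝ} {t : ℝ} (hp : ∀ a, 0 ≤ p a) (hs : ∑ a, p a = 1)
    (h : ∀ a, 0 < p a → f a < t) : ∑ a, p a * f a < t := by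
  have hex : ∃ a, 0 < p a := by
    by_contra hc
    push_neg at hc
    have : ∑ a, p a = 0 := Finset.sum_eq_zero fun a _ => le_antisymm (hc a) (hp a)
    simp [this] at hs
  obtain ⟨a0, ha0⟩ := hex
  have : ∑ a, p a * f a < ∑ a, p a * t := by
    apply Finset.sum_lt_sum
    · intro i _
      rcases (hp i).eq_or_lt with h0 | h0
      · simp [← h0]
      · exact le_of_lt (by exact (mul_lt_mul_iff_right₀ h0).2 (h i h0))
    · exact ⟨a0, Finset.mem_univ a0, (mul_lt_mul_iff_right₀ ha0).2 (h a0 ha0)⟩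
  calc ∑ a, p a * f a < ∑ a, p a * t := this
    _ = t := by rw [← Finset.sum_mul, hs, one_mul]

lemma le_avg {p f : α → ℝ} {t : ℝ} (hp : ∀ a, 0 ≤ p a) (hs : ∑ a, p a = 1)
    (h : ∀ a, 0 < p a → t ≤ f a) : t ≤ ∑ a, p a * f a := by
  have : ∑ a, p a * t ≤ ∑ a, p a * f a := by
    apply Finset.sum_le_sum
    intro i _
    rcases (hp i).eq_or_lt with h0 | h0
    · simp [← h0]
    · exact (mul_le_mul_iff_right₀ h0).2 (h i h0)
  calc t = ∑ a, p a * t := by rw [← Finset.sum_mul, hs, one_mul]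
    _ ≤ _ := this

lemma gibbs [Nonempty α] {p q : α → ℝ} (hp : ∀ a, 0 ≤ p a) (hs : ∑ a, p a = 1)
    (hq : ∀ a, 0 < q a) : -Real.log (∑ a, q a) ≤ ∑ a, p a * Real.log (p a / q a) := by
  set Z : ℝ := ∑ a, q a with hZ
  have hZpos : 0 < Z := Finset.sum_pos (fun a _ => hq a) Finset.univ_nonempty
  -- key: ∑ p log (p/q) + log Z = ∑ p log (p / (q/Z)) ≥ 0
  have key : ∀ a, p a * Real.log (p a / q a) + p a * Real.log Z
      = p a * Real.log (p a / (q a / Z)) := by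
    intro a
    rcases (hp a).eq_or_lt with h0 | h0
    · simp [← h0]
    · have h1 : p a / q a > 0 := div_pos h0 (hq a)
      rw [← mul_add, ← Real.log_mul (ne_of_gt h1) (ne_of_gt hZpos)]
      congr 2
      field_simp
  have hnn : 0 ≤ ∑ a, p a * Real.log (p a / (q a / Z)) := by
    have hterm : ∀ a, p a * Real.log ((q a / Z) / p a) ≤ q a / Z - p a := by
      intro a
      rcases (hp a).eq_or_lt with h0 | h0
      · simp [← h0]
        exact div_nonneg (hq a).le hZpos.le
      · have hx : 0 < (q a / Z) / p a := div_pos (div_pos (hq a) hZpos) h0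
        have := Real.log_le_sub_one_of_pos hx
        calc p a * Real.log ((q a / Z) / p a) ≤ p a * ((q a / Z) / p a - 1) :=
              (mul_le_mul_iff_right₀ h0).2 this
          _ = q a / Z - p a := by field_simp
    have hsum : ∑ a, p a * Real.log ((q a / Z) / p a) ≤ 0 := by
      calc ∑ a, p a * Real.log ((q a / Z) / p a) ≤ ∑ a, (q a / Z - p a) :=
            Finset.sum_le_sum fun a _ => hterm a
        _ = (∑ a, q a) / Z - ∑ a, p a := by
            rw [Finset.sum_sub_distrib, ← Finset.sum_div]
        _ = 0 := by rw [← hZ, div_self (ne_of_gt hZpos), hs]; ring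
    have hneg : ∀ a, p a * Real.log (p a / (q a / Z)) = -(p a * Real.log ((q a / Z) / p a)) := by
      intro a
      rcases (hp a).eq_or_lt with h0 | h0
      · simp [← h0]
      · rw [← mul_neg, ← Real.log_inv, inv_div]
    rw [Finset.sum_congr rfl fun a _ => hneg a]
    simp only [Finset.sum_neg_distrib]
    linarith
  have : ∑ a, p a * Real.log (p a / q a) + Real.log Z ≥ 0 := by
    have : ∑ a, (p a * Real.log (p a / q a) + p a * Real.log Z)
        = ∑ a, p a * Real.log (p a / (q a / Z)) := Finset.sum_congr rfl fun a _ => key a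
    rw [Finset.sum_add_distrib, ← Finset.sum_mul, hs, one_mul] at this
    linarith [hnn, this.ge, this.le]
  linarith

end Helpers

section Core
variable {α : Type*} [Fintype α] [Nonempty α]

noncomputable def eFun (κ : ℝ) (c b1 b2 : α → ℝ) (l : ℝ × ℝ) (a : α) : ℝ :=
  Real.exp ((c a + l.1 * b1 a + l.2 * b2 a) / κ)

noncomputable def ZFun (κ : ℝ) (c b1 b2 : α → ℝ) (l : ℝ × ℝ) : ℝ :=
  ∑ a, eFun κ c b1 b2 l a

noncomputable def gFun (κ : ℝ) (c b1 b2 : α → ℝ) (l : ℝ × ℝ) : ℝ :=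
  κ * Real.log (ZFun κ c b1 b2 l)

noncomputable def QFun (κ : ℝ) (c b1 b2 : α → ℝ) (l : ℝ × ℝ) (a : α) : ℝ :=
  eFun κ c b1 b2 l a / ZFun κ c b1 b2 l

noncomputable def FFun (κ : ℝ) (c : α → ℝ) (p : α → ℝ) : ℝ :=
  ∑ a, (κ * (p a * Real.log (p a)) - p a * c a)

variable {κ : ℝ} {c b1 b2 : α → ℝ}

lemma ZFun_pos (hκ : 0 < κ) (l : ℝ × ℝ) : 0 < ZFun κ c b1 b2 l :=
  Finset.sum_pos (fun a _ => Real.exp_pos _) Finset.univ_nonempty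

lemma QFun_pmf (hκ : 0 < κ) (l : ℝ × ℝ) :
    (∀ a, 0 ≤ QFun κ c b1 b2 l a) ∧ ∑ a, QFun κ c b1 b2 l a = 1 := by
  constructor
  · intro a; exact div_nonneg (Real.exp_pos _).le (ZFun_pos hκ l).le
  · simp only [QFun]
    rw [← Finset.sum_div, ← ZFun, div_self (ne_of_gt (ZFun_pos hκ l))]

lemma identity1 (hκ : 0 < κ) (l : ℝ × ℝ) {p : α → ℝ} (hp : ∀ a, 0 ≤ p a) :
    FFun κ c p - l.1 * (∑ a, p a * b1 a) - l.2 * (∑ a, p a * b2 a)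
      = κ * ∑ a, p a * Real.log (p a / eFun κ c b1 b2 l a) := by
  rw [FFun, Finset.mul_sum, Finset.mul_sum, Finset.mul_sum]
  rw [← Finset.sum_sub_distrib, ← Finset.sum_sub_distrib]
  apply Finset.sum_congr rfl
  intro a _
  rcases (hp a).eq_or_lt with h0 | h0
  · simp [← h0]
  · have he : 0 < eFun κ c b1 b2 l a := Real.exp_pos _
    rw [Real.log_div (ne_of_gt h0) (ne_of_gt he), eFun, Real.log_exp]
    field_simp
    ring

lemma lower_bound (hκ : 0 < κ) (l : ℝ × ℝ) {p : α → ℝ} (hp : ∀ a, 0 ≤ p a)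
    (hs : ∑ a, p a = 1) :
    -gFun κ c b1 b2 l ≤ FFun κ c p - l.1 * (∑ a, p a * b1 a) - l.2 * (∑ a, p a * b2 a) := by
  rw [identity1 hκ l hp, gFun]
  have := gibbs (q := eFun κ c b1 b2 l) hp hs (fun a => Real.exp_pos _)
  rw [← ZFun] at this
  nlinarith [this, hκ]

lemma eq_at_Q (hκ : 0 < κ) (l : ℝ × ℝ) :
    FFun κ c (QFun κ c b1 b2 l) - l.1 * (∑ a, QFun κ c b1 b2 l a * b1 a)
      - l.2 * (∑ a, QFun κ c b1 b2 l a * b2 a) = -gFun κ c b1 b2 l := by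
  obtain ⟨hq0, hq1⟩ := QFun_pmf (c := c) (b1 := b1) (b2 := b2) hκ l
  rw [identity1 hκ l hq0, gFun]
  have : ∀ a, QFun κ c b1 b2 l a * Real.log (QFun κ c b1 b2 l a / eFun κ c b1 b2 l a)
      = QFun κ c b1 b2 l a * (-Real.log (ZFun κ c b1 b2 l)) := by
    intro a
    congr 1
    have hEne : eFun κ c b1 b2 l a ≠ 0 := ne_of_gt (Real.exp_pos _)
    have hZne : ZFun κ c b1 b2 l ≠ 0 := ne_of_gt (ZFun_pos hκ l)
    rw [QFun, show eFun κ c b1 b2 l a / ZFun κ c b1 b2 l / eFun κ c b1 b2 l a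
      = (ZFun κ c b1 b2 l)⁻¹ by field_simp, Real.log_inv]
  rw [Finset.sum_congr rfl fun a _ => this a, ← Finset.sum_mul, hq1, one_mul]
  ring


lemma subgrad (hκ : 0 < κ) (l l' : ℝ × ℝ) :
    gFun κ c b1 b2 l' - gFun κ c b1 b2 l ≤
      (l'.1 - l.1) * (∑ a, QFun κ c b1 b2 l' a * b1 a)
      + (l'.2 - l.2) * (∑ a, QFun κ c b1 b2 l' a * b2 a) := by
  obtain ⟨hq0, hq1⟩ := QFun_pmf (c := c) (b1 := b1) (b2 := b2) hκ l'
  have h1 := lower_bound (c := c) (b1 := b1) (b2 := b2) hκ l hq0 hq1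
  have h2 := eq_at_Q (c := c) (b1 := b1) (b2 := b2) hκ l'
  linarith

lemma cont_e (a : α) : Continuous fun l : ℝ × ℝ => eFun κ c b1 b2 l a := by
  unfold eFun; fun_prop

lemma cont_Z : Continuous (ZFun κ c b1 b2 (α := α)) := by
  unfold ZFun; exact continuous_finset_sum _ (fun a _ => cont_e a)

lemma cont_g (hκ : 0 < κ) : Continuous (gFun κ c b1 b2 (α := α)) := by
  unfold gFun
  exact continuous_const.mul (cont_Z.log (fun l => ne_of_gt (ZFun_pos hκ l)))

lemma cont_Qsum (hκ : 0 < κ) (bf : α → ℝ) :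
    Continuous fun l : ℝ × ℝ => ∑ a, QFun κ c b1 b2 l a * bf a := by
  apply continuous_finset_sum; intro a _
  unfold QFun
  exact ((cont_e a).div cont_Z (fun l => ne_of_gt (ZFun_pos hκ l))).mul continuous_const

lemma g_lb (hκ : 0 < κ) {astar : α} (h1 : 0 ≤ b1 astar) (h2 : 0 ≤ b2 astar)
    {l : ℝ × ℝ} (hl1 : 0 ≤ l.1) (hl2 : 0 ≤ l.2) : c astar ≤ gFun κ c b1 b2 l := by
  have hZ : Real.exp (c astar / κ) ≤ ZFun κ c b1 b2 l := by
    have hstep1 : Real.exp (c astar / κ) ≤ eFun κ c b1 b2 l astar := by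
      rw [eFun]
      apply Real.exp_le_exp.2
      have hx : c astar ≤ c astar + l.1 * b1 astar + l.2 * b2 astar := by
        nlinarith [mul_nonneg hl1 h1, mul_nonneg hl2 h2]
      gcongr
    have hstep2 : eFun κ c b1 b2 l astar ≤ ZFun κ c b1 b2 l := by
      rw [ZFun]
      exact Finset.single_le_sum (f := fun a => eFun κ c b1 b2 l a)
        (fun a _ => (Real.exp_pos _).le) (Finset.mem_univ astar)
    linarith
  have hlog : c astar / κ ≤ Real.log (ZFun κ c b1 b2 l) := by
    have := Real.log_le_log (Real.exp_pos _) hZ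
    rwa [Real.log_exp] at this
  calc c astar = κ * (c astar / κ) := by field_simp
    _ ≤ κ * Real.log (ZFun κ c b1 b2 l) := by
        exact mul_le_mul_of_nonneg_left hlog hκ.le

lemma penalized_min (hκ : 0 < κ) {astar : α} (hb1 : 0 ≤ b1 astar) (hb2 : 0 ≤ b2 astar)
    {ε : ℝ} (hε : 0 < ε) :
    ∃ l : ℝ × ℝ, 0 ≤ l.1 ∧ 0 ≤ l.2 ∧
      -ε ≤ (∑ a, QFun κ c b1 b2 l a * b1 a) ∧
      -ε ≤ (∑ a, QFun κ c b1 b2 l a * b2 a) ∧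
      FFun κ c (QFun κ c b1 b2 l) ≤ -gFun κ c b1 b2 l := by
  set m0 := c astar with hm0
  have hglb : ∀ l : ℝ × ℝ, 0 ≤ l.1 → 0 ≤ l.2 → m0 ≤ gFun κ c b1 b2 l :=
    fun l hl1 hl2 => g_lb hκ hb1 hb2 hl1 hl2
  set g0 := gFun κ c b1 b2 (0, 0) with hg0
  set G : ℝ × ℝ → ℝ := fun l => gFun κ c b1 b2 l + ε * (l.1 + l.2) with hG
  set R : ℝ := max 1 ((g0 - m0) / ε) with hR
  have hR1 : (1:ℝ) ≤ R := le_max_left _ _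
  have hR0 : (0:ℝ) ≤ R := by linarith
  set K : Set (ℝ × ℝ) := Set.Icc 0 R ×ˢ Set.Icc 0 R with hK
  have hKc : IsCompact K := isCompact_Icc.prod isCompact_Icc
  have h0K : (0, 0) ∈ K := ⟨⟨le_refl _, hR0⟩, ⟨le_refl _, hR0⟩⟩
  have hGcont : Continuous G := by
    apply (cont_g hκ).add
    fun_prop
  obtain ⟨lstar, hlK, hmin⟩ := hKc.exists_isMinOn ⟨(0,0), h0K⟩ hGcont.continuousOn
  have hls1 : 0 ≤ lstar.1 := hlK.1.1
  have hls2 : 0 ≤ lstar.2 := hlK.2.1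
  have hglobal : ∀ l : ℝ × ℝ, 0 ≤ l.1 → 0 ≤ l.2 → G lstar ≤ G l := by
    intro l hl1 hl2
    by_cases hcase : l.1 ≤ R ∧ l.2 ≤ R
    · exact isMinOn_iff.1 hmin l ⟨⟨hl1, hcase.1⟩, ⟨hl2, hcase.2⟩⟩
    · have hsum : R < l.1 + l.2 := by
        rcases not_and_or.1 hcase with h | h
        · push_neg at h; linarith
        · push_neg at h; linarith
      have h1 : G (0,0) ≤ m0 + ε * R := by
        have h2 : (g0 - m0) / ε ≤ R := le_max_right _ _
        have h3 := mul_le_mul_of_nonneg_left h2 hε.le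
        have h4 : ε * ((g0 - m0) / ε) = g0 - m0 := by field_simp
        have h5 : G (0,0) = g0 := by simp [hG, hg0]
        rw [h5]; nlinarith
      have h2 : m0 + ε * R ≤ G l := by
        have := hglb l hl1 hl2
        have := mul_le_mul_of_nonneg_left hsum.le hε.le
        simp only [hG]
        nlinarith
      exact le_trans (isMinOn_iff.1 hmin (0,0) h0K) (le_trans h1 h2)
  set S1 : ℝ × ℝ → ℝ := fun l => ∑ a, QFun κ c b1 b2 l a * b1 a with hS1
  set S2 : ℝ × ℝ → ℝ := fun l => ∑ a, QFun κ c b1 b2 l a * b2 a with hS2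
  have hS1cont : Continuous S1 := cont_Qsum hκ b1
  have hS2cont : Continuous S2 := cont_Qsum hκ b2
  -- lower bound on S-values via right perturbation; generic for each coordinate
  have claimA1 : -ε ≤ S1 lstar := by
    have key : ∀ t : ℝ, 0 < t → -ε ≤ S1 (lstar + (t, 0)) := by
      intro t ht
      set l' : ℝ × ℝ := lstar + (t, 0) with hl'
      have hl'1 : l'.1 = lstar.1 + t := rfl
      have hl'2 : l'.2 = lstar.2 := by simp [hl']
      have hsg := subgrad (c := c) (b1 := b1) (b2 := b2) hκ lstar l'
      rw [hl'1, hl'2] at hsg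
      simp only [add_sub_cancel_left, sub_self, zero_mul, add_zero] at hsg
      have hgl := hglobal l' (by rw [hl'1]; linarith) (by rw [hl'2]; exact hls2)
      simp only [hG, hl'1, hl'2] at hgl
      have h3 : -(ε * t) ≤ t * S1 l' := by linarith
      have := le_of_mul_le_mul_right (by linarith [h3] : (-ε) * t ≤ S1 l' * t) ht
      exact this
    have htend : Filter.Tendsto (fun t : ℝ => S1 (lstar + (t, 0)))
        (nhdsWithin 0 (Set.Ioi 0)) (nhds (S1 lstar)) := by
      have hc : Continuous fun t : ℝ => lstar + (t, 0) := by fun_prop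
      have := (hS1cont.comp hc).tendsto 0
      simp only [Function.comp] at this
      have h0 : lstar + ((0:ℝ), (0:ℝ)) = lstar := by simp
      rw [h0] at this
      exact this.mono_left nhdsWithin_le_nhds
    exact ge_of_tendsto htend (eventually_nhdsWithin_of_forall fun t ht => key t ht)
  have claimA2 : -ε ≤ S2 lstar := by
    have key : ∀ t : ℝ, 0 < t → -ε ≤ S2 (lstar + (0, t)) := by
      intro t ht
      set l' : ℝ × ℝ := lstar + (0, t) with hl'
      have hl'1 : l'.1 = lstar.1 := by simp [hl']
      have hl'2 : l'.2 = lstar.2 + t := rfl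
      have hsg := subgrad (c := c) (b1 := b1) (b2 := b2) hκ lstar l'
      rw [hl'1, hl'2] at hsg
      simp only [add_sub_cancel_left, sub_self, zero_mul, zero_add] at hsg
      have hgl := hglobal l' (by rw [hl'1]; exact hls1) (by rw [hl'2]; linarith)
      simp only [hG, hl'1, hl'2] at hgl
      have h3 : -(ε * t) ≤ t * S2 l' := by linarith
      exact le_of_mul_le_mul_right (by linarith [h3] : (-ε) * t ≤ S2 l' * t) ht
    have htend : Filter.Tendsto (fun t : ℝ => S2 (lstar + (0, t)))
        (nhdsWithin 0 (Set.Ioi 0)) (nhds (S2 lstar)) := by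
      have hc : Continuous fun t : ℝ => lstar + ((0:ℝ), t) := by fun_prop
      have := (hS2cont.comp hc).tendsto 0
      simp only [Function.comp] at this
      have h0 : lstar + ((0:ℝ), (0:ℝ)) = lstar := by simp
      rw [h0] at this
      exact this.mono_left nhdsWithin_le_nhds
    exact ge_of_tendsto htend (eventually_nhdsWithin_of_forall fun t ht => key t ht)
  have claimB1 : lstar.1 * S1 lstar ≤ 0 := by
    rcases hls1.eq_or_lt with h0 | hpos
    · rw [← h0, zero_mul]
    · have key : ∀ t : ℝ, 0 < t → t < lstar.1 → S1 (lstar - (t, 0)) ≤ -ε := by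
        intro t ht htl
        set l' : ℝ × ℝ := lstar - (t, 0) with hl'
        have hl'1 : l'.1 = lstar.1 - t := rfl
        have hl'2 : l'.2 = lstar.2 := by simp [hl']
        have hsg := subgrad (c := c) (b1 := b1) (b2 := b2) hκ lstar l'
        rw [hl'1, hl'2] at hsg
        simp only [sub_sub_cancel_left, sub_self, zero_mul, add_zero] at hsg
        have hgl := hglobal l' (by rw [hl'1]; linarith) (by rw [hl'2]; exact hls2)
        simp only [hG, hl'1, hl'2] at hgl
        have h3 : t * S1 l' + ε * t ≤ 0 := by nlinarith
        have : S1 l' * t ≤ (-ε) * t := by nlinarith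
        exact le_of_mul_le_mul_right this ht
      have htend : Filter.Tendsto (fun t : ℝ => S1 (lstar - (t, 0)))
          (nhdsWithin 0 (Set.Ioi 0)) (nhds (S1 lstar)) := by
        have hc : Continuous fun t : ℝ => lstar - (t, 0) := by fun_prop
        have := (hS1cont.comp hc).tendsto 0
        simp only [Function.comp] at this
        have h0 : lstar - ((0:ℝ), (0:ℝ)) = lstar := by simp
        rw [h0] at this
        exact this.mono_left nhdsWithin_le_nhds
      have hev : ∀ᶠ t in nhdsWithin 0 (Set.Ioi 0), S1 (lstar - (t, 0)) ≤ -ε := by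
        filter_upwards [eventually_nhdsWithin_of_eventually_nhds (gt_mem_nhds hpos),
          self_mem_nhdsWithin] with t h1 h2
        exact key t h2 h1
      have hle : S1 lstar ≤ -ε := le_of_tendsto htend hev
      nlinarith
  have claimB2 : lstar.2 * S2 lstar ≤ 0 := by
    rcases hls2.eq_or_lt with h0 | hpos
    · rw [← h0, zero_mul]
    · have key : ∀ t : ℝ, 0 < t → t < lstar.2 → S2 (lstar - (0, t)) ≤ -ε := by
        intro t ht htl
        set l' : ℝ × ℝ := lstar - (0, t) with hl'
        have hl'1 : l'.1 = lstar.1 := by simp [hl']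
        have hl'2 : l'.2 = lstar.2 - t := rfl
        have hsg := subgrad (c := c) (b1 := b1) (b2 := b2) hκ lstar l'
        rw [hl'1, hl'2] at hsg
        simp only [sub_sub_cancel_left, sub_self, zero_mul, zero_add] at hsg
        have hgl := hglobal l' (by rw [hl'1]; exact hls1) (by rw [hl'2]; linarith)
        simp only [hG, hl'1, hl'2] at hgl
        have h3 : t * S2 l' + ε * t ≤ 0 := by nlinarith
        have : S2 l' * t ≤ (-ε) * t := by nlinarith
        exact le_of_mul_le_mul_right this ht
      have htend : Filter.Tendsto (fun t : ℝ => S2 (lstar - (0, t)))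
          (nhdsWithin 0 (Set.Ioi 0)) (nhds (S2 lstar)) := by
        have hc : Continuous fun t : ℝ => lstar - ((0:ℝ), t) := by fun_prop
        have := (hS2cont.comp hc).tendsto 0
        simp only [Function.comp] at this
        have h0 : lstar - ((0:ℝ), (0:ℝ)) = lstar := by simp
        rw [h0] at this
        exact this.mono_left nhdsWithin_le_nhds
      have hev : ∀ᶠ t in nhdsWithin 0 (Set.Ioi 0), S2 (lstar - (0, t)) ≤ -ε := by
        filter_upwards [eventually_nhdsWithin_of_eventually_nhds (gt_mem_nhds hpos),
          self_mem_nhdsWithin] with t h1 h2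
        exact key t h2 h1
      have hle : S2 lstar ≤ -ε := le_of_tendsto htend hev
      nlinarith
  refine ⟨lstar, hls1, hls2, claimA1, claimA2, ?_⟩
  have heq := eq_at_Q (c := c) (b1 := b1) (b2 := b2) hκ lstar
  have e1 : (∑ a, QFun κ c b1 b2 lstar a * b1 a) = S1 lstar := rfl
  have e2 : (∑ a, QFun κ c b1 b2 lstar a * b2 a) = S2 lstar := rfl
  rw [e1, e2] at heq
  linarith


lemma cont_FF : Continuous fun p : α → ℝ => FFun κ c p := by
  apply continuous_finset_sum
  intro a _
  exact (continuous_const.mul ((Real.continuous_mul_log).comp (continuous_apply a))).sub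
    ((continuous_apply a).mul continuous_const)

lemma exists_closed_optimal (hκ : 0 < κ) {astar : α} (hb1 : 0 ≤ b1 astar) (hb2 : 0 ≤ b2 astar)
    {D : ℝ} (hD : ∀ l : ℝ × ℝ, 0 ≤ l.1 → 0 ≤ l.2 → D ≤ gFun κ c b1 b2 l) :
    ∃ p : α → ℝ, (∀ a, 0 ≤ p a) ∧ (∑ a, p a = 1) ∧
      0 ≤ (∑ a, p a * b1 a) ∧ 0 ≤ (∑ a, p a * b2 a) ∧ FFun κ c p ≤ -D := by
  set V : ℕ → Set (α → ℝ) := fun n =>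
    {p | (∀ a, 0 ≤ p a) ∧ (∑ a, p a = 1) ∧ -(1/(n+1:ℝ)) ≤ (∑ a, p a * b1 a) ∧
      -(1/(n+1:ℝ)) ≤ (∑ a, p a * b2 a) ∧ FFun κ c p ≤ -D} with hV
  have hne : ∀ n, (V n).Nonempty := by
    intro n
    have hpos : (0:ℝ) < 1/(n+1:ℝ) := by positivity
    obtain ⟨l, hl1, hl2, hc1, hc2, hF⟩ := penalized_min (c := c) hκ hb1 hb2 hpos
    obtain ⟨hq0, hq1⟩ := QFun_pmf (c := c) (b1 := b1) (b2 := b2) hκ l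
    exact ⟨QFun κ c b1 b2 l, hq0, hq1, hc1, hc2,
      le_trans hF (by linarith [hD l hl1 hl2])⟩
  have hsub : ∀ n, V (n+1) ⊆ V n := by
    intro n p hp
    obtain ⟨h0, h1, h2, h3, h4⟩ := hp
    have hmono : -(1/(n+1:ℝ)) ≤ -(1/((n:ℝ)+1+1)) := by
      have : (1/((n:ℝ)+1+1)) ≤ 1/(n+1:ℝ) := by
        apply one_div_le_one_div_of_le <;> [positivity; linarith]
      linarith
    refine ⟨h0, h1, le_trans hmono ?_, le_trans hmono ?_, h4⟩
    · push_cast at h2 ⊢; linarith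
    · push_cast at h3 ⊢; linarith
  have hclosed : ∀ n, IsClosed (V n) := by
    intro n
    have c1 : IsClosed {p : α → ℝ | ∀ a, 0 ≤ p a} := by
      have : {p : α → ℝ | ∀ a, 0 ≤ p a} = ⋂ a, {p | 0 ≤ p a} := by
        ext p; simp
      rw [this]
      exact isClosed_iInter fun a => isClosed_le continuous_const (continuous_apply a)
    have csum : Continuous fun p : α → ℝ => ∑ a, p a :=
      continuous_finset_sum _ fun a _ => continuous_apply a
    have cb : ∀ bf : α → ℝ, Continuous fun p : α → ℝ => ∑ a, p a * bf a :=
      fun bf => continuous_finset_sum _ fun a _ => (continuous_apply a).mul continuous_const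
    have hVeq : V n = ({p : α → ℝ | ∀ a, 0 ≤ p a} ∩ {p | ∑ a, p a = 1} ∩
        {p | -(1/(n+1:ℝ)) ≤ ∑ a, p a * b1 a} ∩ {p | -(1/(n+1:ℝ)) ≤ ∑ a, p a * b2 a} ∩
        {p | FFun κ c p ≤ -D}) := by
      ext p
      simp only [hV, Set.mem_setOf_eq, Set.mem_inter_iff]
      tauto
    rw [hVeq]
    exact (((c1.inter (isClosed_eq csum continuous_const)).inter
      (isClosed_le continuous_const (cb b1))).inter
      (isClosed_le continuous_const (cb b2))).inter
      (isClosed_le cont_FF continuous_const)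
  have hVcomp : IsCompact (V 0) := by
    have hsub01 : V 0 ⊆ Set.pi Set.univ (fun _ : α => Set.Icc (0:ℝ) 1) := by
      intro p hp a _
      refine ⟨hp.1 a, ?_⟩
      have := Finset.single_le_sum (f := p) (fun i _ => hp.1 i) (Finset.mem_univ a)
      rw [hp.2.1] at this
      exact this
    exact IsCompact.of_isClosed_subset (isCompact_univ_pi fun _ => isCompact_Icc)
      (hclosed 0) hsub01
  obtain ⟨p, hp⟩ := IsCompact.nonempty_iInter_of_sequence_nonempty_isCompact_isClosed V
    hsub hne hVcomp hclosed
  simp only [Set.mem_iInter] at hp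
  have h0 := (hp 0).1
  have h1 := (hp 0).2.1
  have hF := (hp 0).2.2.2.2
  have key : ∀ S : ℝ, (∀ n : ℕ, -(1/(n+1:ℝ)) ≤ S) → 0 ≤ S := by
    intro S hS
    by_contra hneg
    push_neg at hneg
    obtain ⟨n, hn⟩ := exists_nat_one_div_lt (show (0:ℝ) < -S by linarith)
    have := hS n
    linarith
  refine ⟨p, h0, h1, key _ fun n => ?_, key _ fun n => ?_, hF⟩
  · exact (hp n).2.2.1
  · exact (hp n).2.2.2.1

end Core


lemma FF_eq {α : Type*} [Fintype α] {P p : α → ℝ} (hP : ∀ a, 0 < P a)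
    (hp : ∀ a, 0 ≤ p a) (ρ : ℝ) :
    klDiv p P - ρ * ent p = FFun (1+ρ) (fun a => Real.log (P a)) p := by
  simp only [klDiv, ent, FFun]
  rw [mul_neg, sub_neg_eq_add, Finset.mul_sum, ← Finset.sum_add_distrib]
  apply Finset.sum_congr rfl
  intro a _
  rcases (hp a).eq_or_lt with h0 | h0
  · simp [← h0]
  · rw [Real.log_div (ne_of_gt h0) (ne_of_gt (hP a))]
    ring

/-- Proposition 1 of the paper, error type τ = {1,2}: for a full-support
joint source `P` on `U₁ × U₂` with marginals `P₁, P₂`, thresholds `γ₁, γ₂ ∈ (0,1)`,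
`ρ ∈ [0,1]`, class indices `i₁, i₂ ∈ {1,2}`, and assuming the class
`B₁^{i₁}(γ₁) ∩ B₂^{i₂}(γ₂)` is nonempty, the infimum over pmfs `P̂` in that class of
`D(P̂‖P) − ρ H(P̂)` equals minus the infimum over `λ₁, λ₂ ≥ 0` of
`(1+ρ) log ∑_{u₁,u₂} P(u)^{1/(1+ρ)} (P₁(u₁)/γ₁)^{−(−1)^{i₁}λ₁/(1+ρ)}
  (P₂(u₂)/γ₂)^{−(−1)^{i₂}λ₂/(1+ρ)}`. -/
theorem stmt6 {U1 U2 : Type*} [Fintype U1] [Fintype U2] [Nonempty U1] [Nonempty U2]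
    (P : U1 × U2 → ℝ) (hP : IsPmf P) (hPpos : ∀ u, 0 < P u)
    (γ1 γ2 : ℝ) (hγ1 : γ1 ∈ Set.Ioo (0:ℝ) 1) (hγ2 : γ2 ∈ Set.Ioo (0:ℝ) 1)
    (ρ : ℝ) (hρ : ρ ∈ Set.Icc (0:ℝ) 1)
    (i1 i2 : ℕ) (hi1 : i1 = 1 ∨ i1 = 2) (hi2 : i2 = 1 ∨ i2 = 2)
    (hne : ∃ Phat : U1 × U2 → ℝ, IsPmf Phat ∧
      (if i1 = 1
        then (∑ u : U1 × U2, Phat u * Real.log (∑ v, P (u.1, v))) ≥ Real.log γ1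
        else (∑ u : U1 × U2, Phat u * Real.log (∑ v, P (u.1, v))) < Real.log γ1) ∧
      (if i2 = 1
        then (∑ u : U1 × U2, Phat u * Real.log (∑ v, P (v, u.2))) ≥ Real.log γ2
        else (∑ u : U1 × U2, Phat u * Real.log (∑ v, P (v, u.2))) < Real.log γ2)) :
    sInf {d : ℝ | ∃ Phat : U1 × U2 → ℝ, IsPmf Phat ∧
        (if i1 = 1
          then (∑ u : U1 × U2, Phat u * Real.log (∑ v, P (u.1, v))) ≥ Real.log γ1
          else (∑ u : U1 × U2, Phat u * Real.log (∑ v, P (u.1, v))) < Real.log γ1) ∧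
        (if i2 = 1
          then (∑ u : U1 × U2, Phat u * Real.log (∑ v, P (v, u.2))) ≥ Real.log γ2
          else (∑ u : U1 × U2, Phat u * Real.log (∑ v, P (v, u.2))) < Real.log γ2) ∧
        d = klDiv Phat P - ρ * ent Phat}
    = -sInf {d : ℝ | ∃ l1 l2 : ℝ, 0 ≤ l1 ∧ 0 ≤ l2 ∧
        d = (1 + ρ) * Real.log (∑ u : U1 × U2,
              P u ^ (1 / (1 + ρ))
              * ((∑ v, P (u.1, v)) / γ1) ^ (-((-1:ℝ) ^ i1) * l1 / (1 + ρ))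
              * ((∑ v, P (v, u.2)) / γ2) ^ (-((-1:ℝ) ^ i2) * l2 / (1 + ρ)))} := by
  classical
  obtain ⟨hρ0, hρ1⟩ := hρ
  obtain ⟨hγ1a, hγ1b⟩ := hγ1
  obtain ⟨hγ2a, hγ2b⟩ := hγ2
  have hκ : (0:ℝ) < 1 + ρ := by linarith
  have hM1pos : ∀ x : U1, 0 < ∑ v, P (x, v) := fun x =>
    Finset.sum_pos (fun v _ => hPpos (x, v)) Finset.univ_nonempty
  have hM2pos : ∀ y : U2, 0 < ∑ v, P (v, y) := fun y =>
    Finset.sum_pos (fun v _ => hPpos (v, y)) Finset.univ_nonempty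
  set s1 : ℝ := -((-1:ℝ) ^ i1) with hs1def
  set s2 : ℝ := -((-1:ℝ) ^ i2) with hs2def
  set t1 : ℝ := Real.log γ1 with ht1def
  set t2 : ℝ := Real.log γ2 with ht2def
  set f1 : U1 × U2 → ℝ := fun u => Real.log (∑ v, P (u.1, v)) with hf1def
  set f2 : U1 × U2 → ℝ := fun u => Real.log (∑ v, P (v, u.2)) with hf2def
  set cc : U1 × U2 → ℝ := fun u => Real.log (P u) with hccdef
  set b1 : U1 × U2 → ℝ := fun u => s1 * (f1 u - t1) with hb1def
  set b2 : U1 × U2 → ℝ := fun u => s2 * (f2 u - t2) with hb2def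
  have hs1v : (i1 = 1 ∧ s1 = 1) ∨ (i1 ≠ 1 ∧ s1 = -1) := by
    rcases hi1 with h | h
    · left; exact ⟨h, by rw [hs1def, h]; norm_num⟩
    · right; exact ⟨by omega, by rw [hs1def, h]; norm_num⟩
  have hs2v : (i2 = 1 ∧ s2 = 1) ∨ (i2 ≠ 1 ∧ s2 = -1) := by
    rcases hi2 with h | h
    · left; exact ⟨h, by rw [hs2def, h]; norm_num⟩
    · right; exact ⟨by omega, by rw [hs2def, h]; norm_num⟩
  have hraw1 : ∀ p : U1 × U2 → ℝ,
      (∑ u : U1 × U2, p u * Real.log (∑ v, P (u.1, v))) = ∑ u, p u * f1 u := fun p => rfl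
  have hraw2 : ∀ p : U1 × U2 → ℝ,
      (∑ u : U1 × U2, p u * Real.log (∑ v, P (v, u.2))) = ∑ u, p u * f2 u := fun p => rfl
  have inner_eq : ∀ (s t : ℝ) (f p : U1 × U2 → ℝ), (∑ u, p u = 1) →
      (∑ u, p u * (s * (f u - t))) = s * ((∑ u, p u * f u) - t) := by
    intro s t f p hsum
    have h1 : ∀ u, p u * (s * (f u - t)) = s * (p u * f u) - (s * t) * p u := fun u => by ring
    rw [Finset.sum_congr rfl fun u (_ : u ∈ Finset.univ) => h1 u, Finset.sum_sub_distrib,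
      ← Finset.mul_sum, ← Finset.mul_sum, hsum]
    ring
  -- summand equality between the rpow form and eFun
  have hsummand : ∀ (l1 l2 : ℝ) (u : U1 × U2),
      P u ^ (1 / (1 + ρ)) * ((∑ v, P (u.1, v)) / γ1) ^ (s1 * l1 / (1 + ρ))
        * ((∑ v, P (v, u.2)) / γ2) ^ (s2 * l2 / (1 + ρ))
      = eFun (1+ρ) cc b1 b2 (l1, l2) u := by
    intro l1 l2 u
    rw [Real.rpow_def_of_pos (hPpos u), Real.rpow_def_of_pos (div_pos (hM1pos u.1) hγ1a),
      Real.rpow_def_of_pos (div_pos (hM2pos u.2) hγ2a),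
      ← Real.exp_add, ← Real.exp_add, eFun]
    congr 1
    rw [Real.log_div (ne_of_gt (hM1pos u.1)) (ne_of_gt hγ1a),
      Real.log_div (ne_of_gt (hM2pos u.2)) (ne_of_gt hγ2a)]
    simp only [hccdef, hb1def, hb2def, hf1def, hf2def, ht1def, ht2def]
    field_simp
  -- rewrite the dual set into canonical form
  have hdual_eq : {d : ℝ | ∃ l1 l2 : ℝ, 0 ≤ l1 ∧ 0 ≤ l2 ∧
        d = (1 + ρ) * Real.log (∑ u : U1 × U2,
              P u ^ (1 / (1 + ρ))
              * ((∑ v, P (u.1, v)) / γ1) ^ (s1 * l1 / (1 + ρ))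
              * ((∑ v, P (v, u.2)) / γ2) ^ (s2 * l2 / (1 + ρ)))}
      = {d : ℝ | ∃ l : ℝ × ℝ, 0 ≤ l.1 ∧ 0 ≤ l.2 ∧ d = gFun (1+ρ) cc b1 b2 l} := by
    ext d
    constructor
    · rintro ⟨l1, l2, hl1, hl2, rfl⟩
      refine ⟨(l1, l2), hl1, hl2, ?_⟩
      rw [gFun, ZFun, Finset.sum_congr rfl fun u (_ : u ∈ Finset.univ) => hsummand l1 l2 u]
    · rintro ⟨⟨l1, l2⟩, hl1, hl2, rfl⟩
      refine ⟨l1, l2, hl1, hl2, ?_⟩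
      rw [gFun, ZFun, Finset.sum_congr rfl fun u (_ : u ∈ Finset.univ) => hsummand l1 l2 u]
  rw [hdual_eq]
  -- the strictly feasible point
  obtain ⟨p0, ⟨hp00, hp01⟩, hfA, hfB⟩ := hne
  rw [hraw1 p0] at hfA
  rw [hraw2 p0] at hfB
  -- existence of a point where b1, b2 are nonneg
  have hexb1 : ∃ x : U1 × U2, 0 ≤ b1 x := by
    by_contra hc
    push_neg at hc
    rcases hs1v with ⟨h, hs⟩ | ⟨h, hs⟩
    · rw [if_pos h] at hfA
      have : ∑ u, p0 u * f1 u < t1 := by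
        apply avg_lt hp00 hp01
        intro u _
        have := hc u
        rw [hb1def, hs] at this
        simp only at this
        linarith
      linarith
    · rw [if_neg h] at hfA
      have : t1 ≤ ∑ u, p0 u * f1 u := by
        apply le_avg hp00 hp01
        intro u _
        have := hc u
        rw [hb1def, hs] at this
        simp only at this
        linarith
      linarith
  have hexb2 : ∃ x : U1 × U2, 0 ≤ b2 x := by
    by_contra hc
    push_neg at hc
    rcases hs2v with ⟨h, hs⟩ | ⟨h, hs⟩
    · rw [if_pos h] at hfB
      have : ∑ u, p0 u * f2 u < t2 := by
        apply avg_lt hp00 hp01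
        intro u _
        have := hc u
        rw [hb2def, hs] at this
        simp only at this
        linarith
      linarith
    · rw [if_neg h] at hfB
      have : t2 ≤ ∑ u, p0 u * f2 u := by
        apply le_avg hp00 hp01
        intro u _
        have := hc u
        rw [hb2def, hs] at this
        simp only at this
        linarith
      linarith
  obtain ⟨x1, hx1⟩ := hexb1
  obtain ⟨x2, hx2⟩ := hexb2
  have hb1star : 0 ≤ b1 (x1.1, x2.2) := hx1
  have hb2star : 0 ≤ b2 (x1.1, x2.2) := hx2
  -- dual value
  set Dv : ℝ := sInf {d : ℝ | ∃ l : ℝ × ℝ, 0 ≤ l.1 ∧ 0 ≤ l.2 ∧ d = gFun (1+ρ) cc b1 b2 l}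
    with hDv
  have hDbdd : BddBelow {d : ℝ | ∃ l : ℝ × ℝ, 0 ≤ l.1 ∧ 0 ≤ l.2 ∧ d = gFun (1+ρ) cc b1 b2 l} := by
    refine ⟨cc (x1.1, x2.2), ?_⟩
    rintro d ⟨l, hl1, hl2, rfl⟩
    exact g_lb hκ hb1star hb2star hl1 hl2
  have hDne : {d : ℝ | ∃ l : ℝ × ℝ, 0 ≤ l.1 ∧ 0 ≤ l.2 ∧ d = gFun (1+ρ) cc b1 b2 l}.Nonempty :=
    ⟨gFun (1+ρ) cc b1 b2 (0,0), (0,0), le_refl _, le_refl _, rfl⟩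
  have hDle : ∀ l : ℝ × ℝ, 0 ≤ l.1 → 0 ≤ l.2 → Dv ≤ gFun (1+ρ) cc b1 b2 l :=
    fun l h1 h2 => csInf_le hDbdd ⟨l, h1, h2, rfl⟩
  -- feasibility gives nonneg inner products
  have hip1 : ∀ p : U1 × U2 → ℝ, (∑ u, p u = 1) →
      (if i1 = 1 then (∑ u, p u * f1 u) ≥ t1 else (∑ u, p u * f1 u) < t1) →
      0 ≤ ∑ u, p u * b1 u := by
    intro p hsum hif
    have he : (∑ u, p u * b1 u) = s1 * ((∑ u, p u * f1 u) - t1) := by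
      rw [hb1def]; exact inner_eq s1 t1 f1 p hsum
    rw [he]
    rcases hs1v with ⟨h, hs⟩ | ⟨h, hs⟩
    · rw [if_pos h] at hif; rw [hs]; linarith
    · rw [if_neg h] at hif; rw [hs]; linarith
  have hip2 : ∀ p : U1 × U2 → ℝ, (∑ u, p u = 1) →
      (if i2 = 1 then (∑ u, p u * f2 u) ≥ t2 else (∑ u, p u * f2 u) < t2) →
      0 ≤ ∑ u, p u * b2 u := by
    intro p hsum hif
    have he : (∑ u, p u * b2 u) = s2 * ((∑ u, p u * f2 u) - t2) := by
      rw [hb2def]; exact inner_eq s2 t2 f2 p hsum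
    rw [he]
    rcases hs2v with ⟨h, hs⟩ | ⟨h, hs⟩
    · rw [if_pos h] at hif; rw [hs]; linarith
    · rw [if_neg h] at hif; rw [hs]; linarith
  -- weak duality : every element of the primal set is ≥ -Dv
  have hweak : ∀ d ∈ {d : ℝ | ∃ Phat : U1 × U2 → ℝ, IsPmf Phat ∧
        (if i1 = 1
          then (∑ u : U1 × U2, Phat u * Real.log (∑ v, P (u.1, v))) ≥ t1
          else (∑ u : U1 × U2, Phat u * Real.log (∑ v, P (u.1, v))) < t1) ∧
        (if i2 = 1
          then (∑ u : U1 × U2, Phat u * Real.log (∑ v, P (v, u.2))) ≥ t2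
          else (∑ u : U1 × U2, Phat u * Real.log (∑ v, P (v, u.2))) < t2) ∧
        d = klDiv Phat P - ρ * ent Phat}, -Dv ≤ d := by
    rintro d ⟨p, ⟨hq0, hq1⟩, hA, hB, rfl⟩
    rw [hraw1 p] at hA
    rw [hraw2 p] at hB
    have hFF : klDiv p P - ρ * ent p = FFun (1+ρ) cc p := FF_eq hPpos hq0 ρ
    rw [hFF]
    have h1 := hip1 p hq1 hA
    have h2 := hip2 p hq1 hB
    have key : -(FFun (1+ρ) cc p) ≤ Dv := by
      apply le_csInf hDne
      rintro x ⟨l, hl1, hl2, rfl⟩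
      have hlb := lower_bound (c := cc) (b1 := b1) (b2 := b2) hκ l hq0 hq1
      nlinarith [mul_nonneg hl1 h1, mul_nonneg hl2 h2]
    linarith
  -- nonemptiness of the primal value set
  have hfA' := hfA
  have hfB' := hfB
  rw [← hraw1 p0] at hfA'
  rw [← hraw2 p0] at hfB'
  have hLne : {d : ℝ | ∃ Phat : U1 × U2 → ℝ, IsPmf Phat ∧
        (if i1 = 1
          then (∑ u : U1 × U2, Phat u * Real.log (∑ v, P (u.1, v))) ≥ t1
          else (∑ u : U1 × U2, Phat u * Real.log (∑ v, P (u.1, v))) < t1) ∧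
        (if i2 = 1
          then (∑ u : U1 × U2, Phat u * Real.log (∑ v, P (v, u.2))) ≥ t2
          else (∑ u : U1 × U2, Phat u * Real.log (∑ v, P (v, u.2))) < t2) ∧
        d = klDiv Phat P - ρ * ent Phat}.Nonempty :=
    ⟨klDiv p0 P - ρ * ent p0, p0, ⟨hp00, hp01⟩, hfA', hfB', rfl⟩
  -- strong duality : find closed-feasible q with value ≤ -Dv
  obtain ⟨q, hq0, hq1, hqb1, hqb2, hqF⟩ :=
    exists_closed_optimal (c := cc) (b1 := b1) (b2 := b2) hκ hb1star hb2star hDle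
  -- translate hqb1/hqb2 to closed constraints
  have hq1c : if i1 = 1 then (∑ u, q u * f1 u) ≥ t1 else (∑ u, q u * f1 u) ≤ t1 := by
    have he : (∑ u, q u * b1 u) = s1 * ((∑ u, q u * f1 u) - t1) := by
      rw [hb1def]; exact inner_eq s1 t1 f1 q hq1
    rw [he] at hqb1
    rcases hs1v with ⟨h, hs⟩ | ⟨h, hs⟩
    · rw [if_pos h]; rw [hs] at hqb1; linarith
    · rw [if_neg h]; rw [hs] at hqb1; linarith
  have hq2c : if i2 = 1 then (∑ u, q u * f2 u) ≥ t2 else (∑ u, q u * f2 u) ≤ t2 := by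
    have he : (∑ u, q u * b2 u) = s2 * ((∑ u, q u * f2 u) - t2) := by
      rw [hb2def]; exact inner_eq s2 t2 f2 q hq1
    rw [he] at hqb2
    rcases hs2v with ⟨h, hs⟩ | ⟨h, hs⟩
    · rw [if_pos h]; rw [hs] at hqb2; linarith
    · rw [if_neg h]; rw [hs] at hqb2; linarith
  -- mixing: for every ε > 0 there is a strictly feasible point with value ≤ -Dv + ε
  have hmix : ∀ ε : ℝ, 0 < ε → ∃ d ∈ {d : ℝ | ∃ Phat : U1 × U2 → ℝ, IsPmf Phat ∧
        (if i1 = 1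
          then (∑ u : U1 × U2, Phat u * Real.log (∑ v, P (u.1, v))) ≥ t1
          else (∑ u : U1 × U2, Phat u * Real.log (∑ v, P (u.1, v))) < t1) ∧
        (if i2 = 1
          then (∑ u : U1 × U2, Phat u * Real.log (∑ v, P (v, u.2))) ≥ t2
          else (∑ u : U1 × U2, Phat u * Real.log (∑ v, P (v, u.2))) < t2) ∧
        d = klDiv Phat P - ρ * ent Phat}, d ≤ -Dv + ε := by
    intro ε hε
    set pmix : ℝ → (U1 × U2) → ℝ := fun θ u => (1-θ) * q u + θ * p0 u with hpmixdef
    have hlin : ∀ (θ : ℝ) (f : U1 × U2 → ℝ),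
        (∑ u, pmix θ u * f u) = (1-θ) * (∑ u, q u * f u) + θ * (∑ u, p0 u * f u) := by
      intro θ f
      have h1 : ∀ u, pmix θ u * f u = (1-θ) * (q u * f u) + θ * (p0 u * f u) := by
        intro u; rw [hpmixdef]; ring
      rw [Finset.sum_congr rfl fun u (_ : u ∈ Finset.univ) => h1 u, Finset.sum_add_distrib,
        ← Finset.mul_sum, ← Finset.mul_sum]
    -- value function in θ
    set Φ : ℝ → ℝ := fun θ => FFun (1+ρ) cc (pmix θ) with hΦdef
    have hΦcont : Continuous Φ := by
      apply cont_FF.comp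
      apply continuous_pi
      intro u
      fun_prop
    have hΦ0 : Φ 0 = FFun (1+ρ) cc q := by
      rw [hΦdef]
      simp only
      congr 1
      funext u
      rw [hpmixdef]
      ring
    have htend : Filter.Tendsto Φ (nhdsWithin 0 (Set.Ioi 0)) (nhds (Φ 0)) :=
      (hΦcont.tendsto 0).mono_left nhdsWithin_le_nhds
    have hev1 : ∀ᶠ θ in nhdsWithin 0 (Set.Ioi 0), Φ θ < -Dv + ε := by
      apply Filter.Tendsto.eventually_lt_const _ htend
      rw [hΦ0]; linarith
    have hev2 : ∀ᶠ θ in nhdsWithin (0:ℝ) (Set.Ioi 0), θ < 1 :=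
      eventually_nhdsWithin_of_eventually_nhds (gt_mem_nhds one_pos)
    have hev3 : ∀ᶠ θ in nhdsWithin 0 (Set.Ioi 0), θ ∈ Set.Ioi (0:ℝ) := self_mem_nhdsWithin
    obtain ⟨θ, hθv, hθ1, hθ0⟩ := (hev1.and (hev2.and hev3)).exists
    have hθpos : (0:ℝ) < θ := hθ0
    have hθle1 : θ < 1 := hθ1
    -- pmix θ is a pmf
    have hpm0 : ∀ u, 0 ≤ pmix θ u := by
      intro u
      have h1 : pmix θ u = (1-θ) * q u + θ * p0 u := rfl
      rw [h1]
      have := hq0 u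
      have := hp00 u
      nlinarith
    have hpm1 : ∑ u, pmix θ u = 1 := by
      have h1 : ∀ u : U1 × U2, pmix θ u = (1-θ) * q u + θ * p0 u := fun u => rfl
      rw [Finset.sum_congr rfl fun u (_ : u ∈ Finset.univ) => h1 u, Finset.sum_add_distrib,
        ← Finset.mul_sum, ← Finset.mul_sum, hq1, hp01]
      ring
    -- strict feasibility of pmix θ
    have hfeas1 : if i1 = 1 then (∑ u, pmix θ u * f1 u) ≥ t1
        else (∑ u, pmix θ u * f1 u) < t1 := by
      rw [hlin θ f1]
      rcases hs1v with ⟨h, hs⟩ | ⟨h, hs⟩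
      · rw [if_pos h]
        rw [if_pos h] at hq1c hfA
        have e1 : (1-θ) * t1 ≤ (1-θ) * (∑ u, q u * f1 u) :=
          mul_le_mul_of_nonneg_left hq1c (by linarith)
        have e2 : θ * t1 ≤ θ * (∑ u, p0 u * f1 u) :=
          mul_le_mul_of_nonneg_left hfA (le_of_lt hθpos)
        linarith
      · rw [if_neg h]
        rw [if_neg h] at hq1c hfA
        have e1 : (1-θ) * (∑ u, q u * f1 u) ≤ (1-θ) * t1 :=
          mul_le_mul_of_nonneg_left hq1c (by linarith)
        have e2 : θ * (∑ u, p0 u * f1 u) < θ * t1 :=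
          (mul_lt_mul_iff_right₀ hθpos).2 hfA
        linarith
    have hfeas2 : if i2 = 1 then (∑ u, pmix θ u * f2 u) ≥ t2
        else (∑ u, pmix θ u * f2 u) < t2 := by
      rw [hlin θ f2]
      rcases hs2v with ⟨h, hs⟩ | ⟨h, hs⟩
      · rw [if_pos h]
        rw [if_pos h] at hq2c hfB
        have e1 : (1-θ) * t2 ≤ (1-θ) * (∑ u, q u * f2 u) :=
          mul_le_mul_of_nonneg_left hq2c (by linarith)
        have e2 : θ * t2 ≤ θ * (∑ u, p0 u * f2 u) :=
          mul_le_mul_of_nonneg_left hfB (le_of_lt hθpos)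
        linarith
      · rw [if_neg h]
        rw [if_neg h] at hq2c hfB
        have e1 : (1-θ) * (∑ u, q u * f2 u) ≤ (1-θ) * t2 :=
          mul_le_mul_of_nonneg_left hq2c (by linarith)
        have e2 : θ * (∑ u, p0 u * f2 u) < θ * t2 :=
          (mul_lt_mul_iff_right₀ hθpos).2 hfB
        linarith
    refine ⟨klDiv (pmix θ) P - ρ * ent (pmix θ), ⟨pmix θ, ⟨hpm0, hpm1⟩, ?_, ?_, rfl⟩, ?_⟩
    · rw [hraw1 (pmix θ)]; exact hfeas1
    · rw [hraw2 (pmix θ)]; exact hfeas2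
    · rw [FF_eq hPpos hpm0 ρ]
      exact le_of_lt hθv
  -- conclude
  have hLbdd : BddBelow {d : ℝ | ∃ Phat : U1 × U2 → ℝ, IsPmf Phat ∧
        (if i1 = 1
          then (∑ u : U1 × U2, Phat u * Real.log (∑ v, P (u.1, v))) ≥ t1
          else (∑ u : U1 × U2, Phat u * Real.log (∑ v, P (u.1, v))) < t1) ∧
        (if i2 = 1
          then (∑ u : U1 × U2, Phat u * Real.log (∑ v, P (v, u.2))) ≥ t2
          else (∑ u : U1 × U2, Phat u * Real.log (∑ v, P (v, u.2))) < t2) ∧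
        d = klDiv Phat P - ρ * ent Phat} := ⟨-Dv, hweak⟩
  apply le_antisymm
  · apply le_of_forall_pos_le_add
    intro ε hε
    obtain ⟨d, hd, hdle⟩ := hmix ε hε
    exact le_trans (csInf_le hLbdd hd) hdle
  · exact le_csInf hLne hweak
end

section
/- Let 𝒯, 𝒵, 𝒳, 𝒴 be finite nonempty sets and set 𝒰 = 𝒯×𝒵. Let P_U be a full-support pmf on 𝒰, Q a full-support pmf on 𝒳, and W a channel from 𝒳 to 𝒴 with W(y|x) > 0 for all x,y. For pmfs P̂_U on 𝒰 and P̂_{XY} on 𝒳×𝒴, define K_s(P̂_U) = { pmfs P̃_U on 𝒰 : P̃_Z = P̂_Z and ∑_u P̃_U(u) log P_U(u) ≥ ∑_u P̂_U(u) log P_U(u) } and K_c(P̂_{XY}) = { pmfs P̃_{XY} on 𝒳×𝒴 : P̃_Y = P̂_Y and ∑_{x,y} P̃_{XY}(x,y) log W(y|x) ≥ ∑_{x,y} P̂_{XY}(x,y) log W(y|x) }. Then E := inf over pmfs P̂_U on 𝒰 and pmfs P̂_{XY} on 𝒳×𝒴 of [ D(P̂_U‖P_U) + D(P̂_{XY}‖Q·W)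 + ( inf over P̃_U ∈ K_s(P̂_U) and P̃_{XY} ∈ K_c(P̂_{XY}) of D(P̃_{XY}‖Q⊗P̂_Y) − (H(P̃_U) − H(P̃_Z)) )⁺ ] satisfies E ≥ inf over pmfs P̂_U and P̂_{XY} of [ D(P̂_U‖P_U) + D(P̂_{XY}‖Q·W) + ( D(P̂_{XY}‖Q⊗P̂_Y) − (H(P̂_U) − H(P̂_Z)) )⁺ ]. -/
open Real BigOperators

/-!
Put `a(P̂) = D(P̂_U‖P_U) + D(P̂_XY‖Q·W)` and `b(P̂, P̃) = D(P̃_XY‖Q⊗P̂_Y) − H_{P̃}(T|Z)`, so that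
the left side is `inf_P̂ a(P̂) + [inf_{P̃ ∈ K(P̂)} b(P̂, P̃)]⁺` and the right side is
`inf_P̂ a(P̂) + [b(P̂, P̂)]⁺`. For `P̃ ∈ K(P̂)` the equal marginals cancel the entropies of the
`Z`-marginals and the `log P̂_Y` cross terms, and the two linear constraints on `log P_U` and
`log W` leave the exchange inequality `a(P̃) + b(P̂, P̂) ≤ a(P̂) + b(P̂, P̃)`. So either
`a(P̃) ≤ a(P̂)`, and `P̃` (for which `b(P̃, P̃) = b(P̂, P̃)` as `P̃_Y = P̂_Y`) bounds the right side
by `a(P̂) + [b(P̂, P̃)]⁺`, or `b(P̂, P̂) < b(P̂, P̃)` and `P̂` itself does.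
-/

section Divergence

variable {α : Type*} [Fintype α]

lemma sub_le_mul_log_div {p q : ℝ} (hp : 0 ≤ p) (hq : 0 < q) : p - q ≤ p * log (p / q) := by
  -- `q · klFun (p / q) = p log (p / q) + q - p`
  have h := mul_nonneg hq.le (InformationTheory.klFun_nonneg (div_nonneg hp hq.le))
  rw [InformationTheory.klFun_apply] at h
  have hq' : q ≠ 0 := hq.ne'
  field_simp at h
  linarith

lemma sum_sub_sum_le_klDiv {p q : α → ℝ} (hp : ∀ a, 0 ≤ p a) (hq : ∀ a, 0 < q a) :
    ∑ a, p a - ∑ a, q a ≤ klDiv p q := by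
  rw [← Finset.sum_sub_distrib]
  exact Finset.sum_le_sum fun a _ => sub_le_mul_log_div (hp a) (hq a)

lemma klDiv_eq_neg_ent_sub {p q : α → ℝ} (h : ∀ a, p a ≠ 0 → q a ≠ 0) :
    klDiv p q = -ent p - ∑ a, p a * log (q a) := by
  rw [klDiv, ent, neg_neg, ← Finset.sum_sub_distrib]
  refine Finset.sum_congr rfl fun a _ => ?_
  by_cases hpa : p a = 0
  · simp [hpa]
  · rw [log_div hpa (h a hpa)]; ring

lemma sum_mul_log_mul {p f g : α → ℝ} (h : ∀ a, p a ≠ 0 → f a ≠ 0 ∧ g a ≠ 0) :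
    ∑ a, p a * log (f a * g a) = ∑ a, p a * log (f a) + ∑ a, p a * log (g a) := by
  rw [← Finset.sum_add_distrib]
  refine Finset.sum_congr rfl fun a _ => ?_
  by_cases hpa : p a = 0
  · simp [hpa]
  · rw [log_mul (h a hpa).1 (h a hpa).2]; ring

lemma klDiv_mul_sub_klDiv_mul {p f g h : α → ℝ} (hf : ∀ a, p a ≠ 0 → f a ≠ 0)
    (hg : ∀ a, p a ≠ 0 → g a ≠ 0) (hh : ∀ a, p a ≠ 0 → h a ≠ 0) :
    klDiv p (fun a => f a * g a) - klDiv p (fun a => f a * h a)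
      = ∑ a, p a * log (h a) - ∑ a, p a * log (g a) := by
  rw [klDiv_eq_neg_ent_sub fun a ha => mul_ne_zero (hf a ha) (hg a ha),
    klDiv_eq_neg_ent_sub fun a ha => mul_ne_zero (hf a ha) (hh a ha),
    sum_mul_log_mul fun a ha => ⟨hf a ha, hg a ha⟩, sum_mul_log_mul fun a ha => ⟨hf a ha, hh a ha⟩]
  ring

end Divergence

lemma sum_mul_comp_snd_eq_of_marginal_eq {α β : Type*} [Fintype α] [Fintype β]
    {p q : α × β → ℝ} (h : ∀ b, ∑ a, p (a, b) = ∑ a, q (a, b)) (g : β → ℝ) :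
    ∑ x, p x * g x.2 = ∑ x, q x * g x.2 := by
  simp only [Fintype.sum_prod_type_right, ← Finset.sum_mul, h]

lemma sum_fst_ne_zero_of_ne_zero {α β : Type*} [Fintype α] {p : α × β → ℝ}
    (hp : ∀ x, 0 ≤ p x) {x : α × β} (hx : p x ≠ 0) : ∑ a, p (a, x.2) ≠ 0 := by
  refine (lt_of_lt_of_le ((hp x).lt_of_ne' hx) ?_).ne'
  exact Finset.single_le_sum (f := fun a => p (a, x.2)) (fun a _ => hp (a, x.2))
    (Finset.mem_univ x.1)

lemma isPmf_uniform {α : Type*} [Fintype α] [Nonempty α] :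
    IsPmf (fun _ : α => (Fintype.card α : ℝ)⁻¹) := by
  refine ⟨fun _ => by positivity, ?_⟩
  rw [Finset.sum_const, Finset.card_univ, nsmul_eq_mul,
    mul_inv_cancel₀ (Nat.cast_ne_zero.mpr Fintype.card_ne_zero)]

lemma le_add_max_sInf {s : Set ℝ} (hs : s.Nonempty) {c a : ℝ}
    (h : ∀ v ∈ s, c ≤ a + max v 0) : c ≤ a + max (sInf s) 0 := by
  refine le_of_forall_pos_le_add fun ε hε => ?_
  obtain ⟨v, hv, hvlt⟩ := Real.lt_sInf_add_pos hs hε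
  have hmax : max v 0 ≤ max (sInf s) 0 + ε :=
    max_le (by linarith [le_max_left (sInf s) 0]) (by linarith [le_max_right (sInf s) 0])
  linarith [h v hv]

lemma min_add_max_le_of_add_le {a₁ a₂ b₁ b₂ : ℝ} (h : a₂ + b₁ ≤ a₁ + b₂) :
    min (a₁ + max b₁ 0) (a₂ + max b₂ 0) ≤ a₁ + max b₂ 0 := by
  rcases le_or_gt a₂ a₁ with ha | ha
  · exact (min_le_right _ _).trans (by linarith)
  · exact (min_le_left _ _).trans (by linarith [max_le_max_right 0 (by linarith : b₁ ≤ b₂)])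

lemma bddBelow_klDiv_add_klDiv_add_max {α β : Type*} [Fintype α] [Fintype β]
    {P : α → ℝ} {R : β → ℝ} (hP : ∀ a, 0 < P a) (hR : ∀ b, 0 < R b)
    (f : (α → ℝ) → (β → ℝ) → ℝ) :
    BddBelow {e : ℝ | ∃ (p : α → ℝ) (q : β → ℝ), IsPmf p ∧ IsPmf q ∧
      e = klDiv p P + klDiv q R + max (f p q) 0} := by
  refine ⟨(1 - ∑ a, P a) + (1 - ∑ b, R b), ?_⟩
  rintro _ ⟨p, q, hp, hq, rfl⟩
  have hpP := sum_sub_sum_le_klDiv hp.1 hP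
  have hqR := sum_sub_sum_le_klDiv hq.1 hR
  rw [hp.2] at hpP
  rw [hq.2] at hqR
  linarith [le_max_right (f p q) 0]

lemma exponent_exchange {T Z X Y : Type*} [Fintype T] [Fintype Z] [Fintype X] [Fintype Y]
    {PU : T × Z → ℝ} (hPU : ∀ u, 0 < PU u) {Q : X → ℝ} (hQ : ∀ x, 0 < Q x)
    {W : X → Y → ℝ} (hW : ∀ x y, 0 < W x y) {PhU PtU : T × Z → ℝ} {PhXY PtXY : X × Y → ℝ}
    (hPhXY : ∀ a, 0 ≤ PhXY a) (hPtXY : ∀ a, 0 ≤ PtXY a)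
    (hZ : ∀ z, ∑ t, PtU (t, z) = ∑ t, PhU (t, z))
    (hsrc : ∑ u, PhU u * log (PU u) ≤ ∑ u, PtU u * log (PU u))
    (hY : ∀ y, ∑ x, PtXY (x, y) = ∑ x, PhXY (x, y))
    (hch : ∑ a : X × Y, PhXY a * log (W a.1 a.2) ≤ ∑ a : X × Y, PtXY a * log (W a.1 a.2)) :
    klDiv PtU PU + klDiv PtXY (fun a => Q a.1 * W a.1 a.2)
        + (klDiv PhXY (fun a => Q a.1 * ∑ x, PhXY (x, a.2))
          - (ent PhU - ent (fun z => ∑ t, PhU (t, z))))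
      ≤ klDiv PhU PU + klDiv PhXY (fun a => Q a.1 * W a.1 a.2)
        + (klDiv PtXY (fun a => Q a.1 * ∑ x, PhXY (x, a.2))
          - (ent PtU - ent (fun z => ∑ t, PtU (t, z)))) := by
  have hsource : klDiv PtU PU + ent PtU ≤ klDiv PhU PU + ent PhU := by
    rw [klDiv_eq_neg_ent_sub fun u _ => (hPU u).ne', klDiv_eq_neg_ent_sub fun u _ => (hPU u).ne']
    linarith
  have hchannel :
      klDiv PtXY (fun a => Q a.1 * W a.1 a.2) - klDiv PtXY (fun a => Q a.1 * ∑ x, PhXY (x, a.2))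
        ≤ klDiv PhXY (fun a => Q a.1 * W a.1 a.2)
          - klDiv PhXY (fun a => Q a.1 * ∑ x, PhXY (x, a.2)) := by
    rw [klDiv_mul_sub_klDiv_mul (fun a _ => (hQ a.1).ne') (fun a _ => (hW a.1 a.2).ne')
        fun a ha => hY a.2 ▸ sum_fst_ne_zero_of_ne_zero hPtXY ha,
      klDiv_mul_sub_klDiv_mul (fun a _ => (hQ a.1).ne') (fun a _ => (hW a.1 a.2).ne')
        fun a ha => sum_fst_ne_zero_of_ne_zero hPhXY ha,
      sum_mul_comp_snd_eq_of_marginal_eq hY fun y => log (∑ x, PhXY (x, y))]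
    linarith
  have hmarginal : ent (fun z => ∑ t, PtU (t, z)) = ent (fun z => ∑ t, PhU (t, z)) := by
    simp only [hZ]
  linarith

theorem stmt9_general {T Z X Y : Type*} [Fintype T] [Fintype Z] [Fintype X] [Fintype Y]
    [Nonempty T] [Nonempty Z] [Nonempty X] [Nonempty Y]
    (PU : T × Z → ℝ) (hPUpos : ∀ u, 0 < PU u)
    (Q : X → ℝ) (hQpos : ∀ x, 0 < Q x)
    (W : X → Y → ℝ)
    (hWpos : ∀ x y, 0 < W x y) :
    sInf {e : ℝ | ∃ (PhatU : T × Z → ℝ) (PhatXY : X × Y → ℝ),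
        IsPmf PhatU ∧ IsPmf PhatXY ∧
        e = klDiv PhatU PU + klDiv PhatXY (fun a => Q a.1 * W a.1 a.2)
          + max
            (sInf {v : ℝ | ∃ (PtilU : T × Z → ℝ) (PtilXY : X × Y → ℝ),
              IsPmf PtilU ∧ IsPmf PtilXY ∧
              (∀ z, (∑ t, PtilU (t, z)) = ∑ t, PhatU (t, z)) ∧
              (∑ u : T × Z, PtilU u * Real.log (PU u))
                ≥ (∑ u : T × Z, PhatU u * Real.log (PU u)) ∧
              (∀ y, (∑ x, PtilXY (x, y)) = ∑ x, PhatXY (x, y)) ∧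
              (∑ a : X × Y, PtilXY a * Real.log (W a.1 a.2))
                ≥ (∑ a : X × Y, PhatXY a * Real.log (W a.1 a.2)) ∧
              v = klDiv PtilXY (fun a => Q a.1 * ∑ x, PhatXY (x, a.2))
                  - (ent PtilU - ent (fun z => ∑ t, PtilU (t, z)))})
            0}
    ≥ sInf {e : ℝ | ∃ (PhatU : T × Z → ℝ) (PhatXY : X × Y → ℝ),
        IsPmf PhatU ∧ IsPmf PhatXY ∧
        e = klDiv PhatU PU + klDiv PhatXY (fun a => Q a.1 * W a.1 a.2)
          + max
            (klDiv PhatXY (fun a => Q a.1 * ∑ x, PhatXY (x, a.2))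
              - (ent PhatU - ent (fun z => ∑ t, PhatU (t, z))))
            0} := by
  have hbdd := bddBelow_klDiv_add_klDiv_add_max hPUpos
    (fun a : X × Y => mul_pos (hQpos a.1) (hWpos a.1 a.2))
    fun p q => klDiv q (fun a => Q a.1 * ∑ x, q (x, a.2)) - (ent p - ent (fun z => ∑ t, p (t, z)))
  refine le_csInf ⟨_, _, _, isPmf_uniform, isPmf_uniform, rfl⟩ ?_
  rintro _ ⟨PhU, PhXY, hPhU, hPhXY, rfl⟩
  refine le_add_max_sInf ?_ ?_
  · exact ⟨_, PhU, PhXY, hPhU, hPhXY, fun _ => rfl, le_rfl, fun _ => rfl, le_rfl, rfl⟩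
  rintro _ ⟨PtU, PtXY, hPtU, hPtXY, hZ, hsrc, hY, hch, rfl⟩
  have hPt := csInf_le hbdd ⟨PtU, PtXY, hPtU, hPtXY, rfl⟩
  simp only [hY] at hPt
  exact (le_min (csInf_le hbdd ⟨PhU, PhXY, hPhU, hPhXY, rfl⟩) hPt).trans
    (min_add_max_le_of_add_le (exponent_exchange hPUpos hQpos hWpos hPhXY.1 hPtXY.1 hZ hsrc hY hch))

/-- Lemma 4 of the paper: with `U = T × Z`, a full-support source pmf `P_U`
on `U`, a full-support input pmf `Q` on `X`, and a strictly positive channel `W`, the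
exponent `E` (with the inner minimization over the constraint sets `K_s(P̂_U)` and
`K_c(P̂_{XY})`) is lower bounded by the expression in which the inner minimization is
removed (i.e. evaluated at `P̃ = P̂`). -/
theorem stmt9 {T Z X Y : Type*} [Fintype T] [Fintype Z] [Fintype X] [Fintype Y]
    [Nonempty T] [Nonempty Z] [Nonempty X] [Nonempty Y]
    (PU : T × Z → ℝ) (hPU : IsPmf PU) (hPUpos : ∀ u, 0 < PU u)
    (Q : X → ℝ) (hQ : IsPmf Q) (hQpos : ∀ x, 0 < Q x)
    (W : X → Y → ℝ) (hW : ∀ x, (∀ y, 0 ≤ W x y) ∧ ∑ y, W x y = 1)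
    (hWpos : ∀ x y, 0 < W x y) :
    sInf {e : ℝ | ∃ (PhatU : T × Z → ℝ) (PhatXY : X × Y → ℝ),
        IsPmf PhatU ∧ IsPmf PhatXY ∧
        e = klDiv PhatU PU + klDiv PhatXY (fun a => Q a.1 * W a.1 a.2)
          + max
            (sInf {v : ℝ | ∃ (PtilU : T × Z → ℝ) (PtilXY : X × Y → ℝ),
              IsPmf PtilU ∧ IsPmf PtilXY ∧
              (∀ z, (∑ t, PtilU (t, z)) = ∑ t, PhatU (t, z)) ∧
              (∑ u : T × Z, PtilU u * Real.log (PU u))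
                ≥ (∑ u : T × Z, PhatU u * Real.log (PU u)) ∧
              (∀ y, (∑ x, PtilXY (x, y)) = ∑ x, PhatXY (x, y)) ∧
              (∑ a : X × Y, PtilXY a * Real.log (W a.1 a.2))
                ≥ (∑ a : X × Y, PhatXY a * Real.log (W a.1 a.2)) ∧
              v = klDiv PtilXY (fun a => Q a.1 * ∑ x, PhatXY (x, a.2))
                  - (ent PtilU - ent (fun z => ∑ t, PtilU (t, z)))})
            0}
    ≥ sInf {e : ℝ | ∃ (PhatU : T × Z → ℝ) (PhatXY : X × Y → ℝ),
        IsPmf PhatU ∧ IsPmf PhatXY ∧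
        e = klDiv PhatU PU + klDiv PhatXY (fun a => Q a.1 * W a.1 a.2)
          + max
            (klDiv PhatXY (fun a => Q a.1 * ∑ x, PhatXY (x, a.2))
              - (ent PhatU - ent (fun z => ∑ t, PhatU (t, z))))
            0} :=
  stmt9_general PU hPUpos Q hQpos W hWpos
end

section
/- Let 𝒯, 𝒵, 𝒳, 𝒴 be finite nonempty sets and set 𝒰 = 𝒯×𝒵. Let P_U be a full-support pmf on 𝒰, Q a full-support pmf on 𝒳, and W a channel from 𝒳 to 𝒴 with W(y|x) > 0 for all x,y. Let P̂_U, P̃_U be pmfs on 𝒰 and P̂_{XY}, P̃_{XY} pmfs on 𝒳×𝒴 such that: (a) P̃_Z = P̂_Z; (b) ∑_u P̃_U(u) log P_U(u) ≥ ∑_u P̂_U(u) log P_U(u); (c) P̃_Y = P̂_Y; (d) ∑_{x,y} P̃_{XY}(x,y) log W(y|x) ≥ ∑_{x,y} P̂_{XY}(x,y) log W(y|x); and (e) D(P̃_{XY}‖Q⊗P̂_Y) − (H(P̃_U) − H(P̃_Z)) ≤ D(P̂_{XY}‖Q⊗P̂_Y) − (H(P̂_U) − H(P̂_Z)). Then D(P̃_U‖P_U)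 + D(P̃_{XY}‖Q·W) ≤ D(P̂_U‖P_U) + D(P̂_{XY}‖Q·W). -/
open Real BigOperators

lemma kl_eq_sub {α : Type*} [Fintype α] (p q : α → ℝ) (hp : ∀ a, 0 ≤ p a)
    (hq : ∀ a, 0 < q a) :
    klDiv p q = (∑ a, p a * Real.log (p a)) - ∑ a, p a * Real.log (q a) := by
  rw [klDiv, ← Finset.sum_sub_distrib]
  refine Finset.sum_congr rfl fun a _ => ?_
  by_cases h : p a = 0
  · simp [h]
  · rw [Real.log_div h (hq a).ne']; ring

lemma kl_split {X Y : Type*} [Fintype X] [Fintype Y]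
    (p : X × Y → ℝ) (Q : X → ℝ) (W : X → Y → ℝ) (PY : Y → ℝ)
    (hQ : ∀ x, 0 < Q x) (hW : ∀ x y, 0 < W x y)
    (hPY : ∀ a : X × Y, PY a.2 = 0 → p a = 0) :
    klDiv p (fun a => Q a.1 * W a.1 a.2)
      = klDiv p (fun a => Q a.1 * PY a.2)
        + (∑ a : X × Y, p a * Real.log (PY a.2))
        - ∑ a : X × Y, p a * Real.log (W a.1 a.2) := by
  rw [klDiv, klDiv, ← Finset.sum_add_distrib, ← Finset.sum_sub_distrib]
  refine Finset.sum_congr rfl fun a _ => ?_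
  by_cases h : p a = 0
  · simp [h]
  · have hy : PY a.2 ≠ 0 := fun h0 => h (hPY a h0)
    have h1 : Q a.1 * W a.1 a.2 ≠ 0 := mul_ne_zero (hQ a.1).ne' (hW a.1 a.2).ne'
    have h2 : Q a.1 * PY a.2 ≠ 0 := mul_ne_zero (hQ a.1).ne' hy
    rw [Real.log_div h h1, Real.log_div h h2,
      Real.log_mul (hQ a.1).ne' (hW a.1 a.2).ne', Real.log_mul (hQ a.1).ne' hy]
    ring

lemma sum_marg {X Y : Type*} [Fintype X] [Fintype Y] (p : X × Y → ℝ) (f : Y → ℝ) :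
    (∑ a : X × Y, p a * f a.2) = ∑ y, (∑ x, p (x, y)) * f y := by
  rw [Fintype.sum_prod_type_right]
  exact Finset.sum_congr rfl fun y _ => by rw [Finset.sum_mul]

/-- with `U = T × Z`, full-support `P_U`, full-support `Q`, strictly
positive channel `W`, if pmfs `P̃_U, P̂_U` on `U` and `P̃_{XY}, P̂_{XY}` on `X × Y`
satisfy (a) matching `Z`-marginals, (b) `∑ P̃_U log P_U ≥ ∑ P̂_U log P_U`,
(c) matching `Y`-marginals, (d) `∑ P̃_{XY} log W ≥ ∑ P̂_{XY} log W`, and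
(e) `D(P̃_{XY}‖Q⊗P̂_Y) − H_{P̃}(T|Z) ≤ D(P̂_{XY}‖Q⊗P̂_Y) − H_{P̂}(T|Z)`, then
`D(P̃_U‖P_U) + D(P̃_{XY}‖Q·W) ≤ D(P̂_U‖P_U) + D(P̂_{XY}‖Q·W)`. -/
theorem stmt10 {T Z X Y : Type*} [Fintype T] [Fintype Z] [Fintype X] [Fintype Y]
    [Nonempty T] [Nonempty Z] [Nonempty X] [Nonempty Y]
    (PU : T × Z → ℝ) (hPU : IsPmf PU) (hPUpos : ∀ u, 0 < PU u)
    (Q : X → ℝ) (hQ : IsPmf Q) (hQpos : ∀ x, 0 < Q x)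
    (W : X → Y → ℝ) (hW : ∀ x, (∀ y, 0 ≤ W x y) ∧ ∑ y, W x y = 1)
    (hWpos : ∀ x y, 0 < W x y)
    (PhatU PtilU : T × Z → ℝ) (hPhatU : IsPmf PhatU) (hPtilU : IsPmf PtilU)
    (PhatXY PtilXY : X × Y → ℝ) (hPhatXY : IsPmf PhatXY) (hPtilXY : IsPmf PtilXY)
    (ha : ∀ z, (∑ t, PtilU (t, z)) = ∑ t, PhatU (t, z))
    (hb : (∑ u : T × Z, PtilU u * Real.log (PU u))
            ≥ ∑ u : T × Z, PhatU u * Real.log (PU u))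
    (hc : ∀ y, (∑ x, PtilXY (x, y)) = ∑ x, PhatXY (x, y))
    (hd : (∑ a : X × Y, PtilXY a * Real.log (W a.1 a.2))
            ≥ ∑ a : X × Y, PhatXY a * Real.log (W a.1 a.2))
    (he : klDiv PtilXY (fun a => Q a.1 * ∑ x, PhatXY (x, a.2))
            - (ent PtilU - ent (fun z => ∑ t, PtilU (t, z)))
          ≤ klDiv PhatXY (fun a => Q a.1 * ∑ x, PhatXY (x, a.2))
            - (ent PhatU - ent (fun z => ∑ t, PhatU (t, z)))) :
    klDiv PtilU PU + klDiv PtilXY (fun a => Q a.1 * W a.1 a.2)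
      ≤ klDiv PhatU PU + klDiv PhatXY (fun a => Q a.1 * W a.1 a.2) := by
  have hzero_hat : ∀ a : X × Y, (∑ x, PhatXY (x, a.2)) = 0 → PhatXY a = 0 := by
    intro a h0
    have := (Finset.sum_eq_zero_iff_of_nonneg
      (fun x _ => hPhatXY.1 (x, a.2))).mp h0 a.1 (Finset.mem_univ _)
    simpa using this
  have hzero_til : ∀ a : X × Y, (∑ x, PhatXY (x, a.2)) = 0 → PtilXY a = 0 := by
    intro a h0
    have h0' : (∑ x, PtilXY (x, a.2)) = 0 := by rw [hc]; exact h0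
    have := (Finset.sum_eq_zero_iff_of_nonneg
      (fun x _ => hPtilXY.1 (x, a.2))).mp h0' a.1 (Finset.mem_univ _)
    simpa using this
  have eqU_til := kl_eq_sub PtilU PU hPtilU.1 hPUpos
  have eqU_hat := kl_eq_sub PhatU PU hPhatU.1 hPUpos
  have split_til := kl_split PtilXY Q W (fun y => ∑ x, PhatXY (x, y)) hQpos hWpos hzero_til
  have split_hat := kl_split PhatXY Q W (fun y => ∑ x, PhatXY (x, y)) hQpos hWpos hzero_hat
  have margM : (∑ a : X × Y, PtilXY a * Real.log (∑ x, PhatXY (x, a.2)))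
      = ∑ a : X × Y, PhatXY a * Real.log (∑ x, PhatXY (x, a.2)) := by
    rw [sum_marg PtilXY (fun y => Real.log (∑ x, PhatXY (x, y))),
        sum_marg PhatXY (fun y => Real.log (∑ x, PhatXY (x, y)))]
    exact Finset.sum_congr rfl fun y _ => by rw [hc]
  have entZ : ent (fun z => ∑ t, PtilU (t, z)) = ent (fun z => ∑ t, PhatU (t, z)) := by
    unfold ent
    simp only [ha]
  have entU_til : (∑ u : T × Z, PtilU u * Real.log (PtilU u)) = - ent PtilU := by
    simp [ent]
  have entU_hat : (∑ u : T × Z, PhatU u * Real.log (PhatU u)) = - ent PhatU := by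
    simp [ent]
  rw [eqU_til, eqU_hat, split_til, split_hat, entU_til, entU_hat]
  linarith [he, hb, hd, margM, entZ]
end

section
/- Let P be a full-support pmf on 𝒰₁×𝒰₂ and ρ ∈ [0,1]. Then the infimum over all pmfs P̂ on 𝒰₁×𝒰₂ of D(P̂‖P) − ρ·( H(P̂) − H(P̂_{U₂}) ) equals −log ∑_{u₂} ( ∑_{u₁} P(u₁,u₂)^{1/(1+ρ)} )^{1+ρ}, i.e., it equals minus the generalized Gallager source function E_{s,τ}(ρ,P) for τ = {1}; moreover the infimum is attained. (The analogous identity holds with the roles of 𝒰₁ and 𝒰₂ exchanged, and for τ = {1,2}: inf over pmfs P̂ of D(P̂‖P) − ρ·H(P̂) = −(1+ρ)·log ∑_{u₁,u₂} P(u₁,u₂)^{1/(1+ρ)}.) -/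
open Real BigOperators

lemma gibbs_s14 {α : Type*} [Fintype α] (p r : α → ℝ) (hp0 : ∀ a, 0 ≤ p a)
    (hp1 : ∑ a, p a = 1) (hr0 : ∀ a, 0 ≤ r a) (hr1 : ∑ a, r a ≤ 1)
    (h : ∀ a, 0 < p a → 0 < r a) : 0 ≤ ∑ a, p a * Real.log (p a / r a) := by
  have key : ∀ a, p a - r a ≤ p a * Real.log (p a / r a) := by
    intro a
    rcases eq_or_lt_of_le (hp0 a) with h0 | h0
    · simp [← h0]; linarith [hr0 a]
    · have hra := h a h0
      have hlog : Real.log (r a / p a) ≤ r a / p a - 1 :=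
        Real.log_le_sub_one_of_pos (by positivity)
      have hinv : Real.log (p a / r a) = - Real.log (r a / p a) := by
        rw [← Real.log_inv]; congr 1; field_simp
      have h2 := mul_le_mul_of_nonneg_left hlog (le_of_lt h0)
      have h3 : p a * (r a / p a) = r a := by field_simp
      rw [hinv]; nlinarith
  have h4 : ∑ a, (p a - r a) ≤ ∑ a, p a * Real.log (p a / r a) :=
    Finset.sum_le_sum (fun a _ => key a)
  rw [Finset.sum_sub_distrib, hp1] at h4
  linarith

lemma kl_self {α : Type*} [Fintype α] (q : α → ℝ) : ∑ a, q a * Real.log (q a / q a) = 0 := by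
  apply Finset.sum_eq_zero
  intro a _
  rcases eq_or_ne (q a) 0 with h | h
  · simp [h]
  · rw [div_self h, Real.log_one, mul_zero]

lemma main1 {U1 U2 : Type*} [Fintype U1] [Fintype U2] [Nonempty U1] [Nonempty U2]
    (P : U1 × U2 → ℝ) (hPpos : ∀ u, 0 < P u)
    (ρ : ℝ) (hρ0 : 0 ≤ ρ) (hρ1 : ρ ≤ 1) :
    IsLeast
      {d : ℝ | ∃ Phat : U1 × U2 → ℝ, IsPmf Phat ∧
        d = klDiv Phat P - ρ * (ent Phat - ent (fun u2 => ∑ u1, Phat (u1, u2)))}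
      (-Real.log (∑ u2, (∑ u1, P (u1, u2) ^ (1 / (1 + ρ))) ^ (1 + ρ))) := by
  have h1ρ : (0:ℝ) < 1 + ρ := by linarith
  set s : ℝ := 1 / (1 + ρ) with hs
  set β : U2 → ℝ := fun u2 => ∑ u1, P (u1, u2) ^ s with hβdef
  have hβ : ∀ u2, 0 < β u2 := fun u2 =>
    Finset.sum_pos (fun u1 _ => Real.rpow_pos_of_pos (hPpos _) _) Finset.univ_nonempty
  set Z : ℝ := ∑ u2, β u2 ^ (1 + ρ) with hZdef
  have hZ : 0 < Z := Finset.sum_pos (fun u2 _ => Real.rpow_pos_of_pos (hβ _) _) Finset.univ_nonempty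
  set Q : U1 × U2 → ℝ := fun u => P u ^ s * β u.2 ^ ρ / Z with hQdef
  have hQpos : ∀ u, 0 < Q u := by
    intro u
    have h1 := hPpos u
    have h2 := hβ u.2
    simp only [hQdef]
    positivity
  have hβval : ∀ u2, (∑ u1, P (u1, u2) ^ s) = β u2 := fun _ => rfl
  have hmargQ : ∀ u2, ∑ u1, Q (u1, u2) = β u2 ^ (1 + ρ) / Z := by
    intro u2
    simp only [hQdef]
    rw [← Finset.sum_div, ← Finset.sum_mul, hβval u2, Real.rpow_add (hβ u2), Real.rpow_one]
  have hQsum : ∑ u, Q u = 1 := by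
    rw [Fintype.sum_prod_type_right]
    simp_rw [hmargQ]
    rw [← Finset.sum_div, ← hZdef, div_self hZ.ne']
  have hZeq : (∑ u2, (∑ u1, P (u1, u2) ^ (1 / (1 + ρ))) ^ (1 + ρ)) = Z := rfl
  -- key identity
  have keyid : ∀ Phat : U1 × U2 → ℝ, IsPmf Phat →
      klDiv Phat P - ρ * (ent Phat - ent (fun u2 => ∑ u1, Phat (u1, u2))) =
      klDiv Phat Q
        + ρ * klDiv Phat (fun u => P u ^ s * (∑ u1, Phat (u1, u.2)) / β u.2)
        - Real.log Z := by
    rintro Phat ⟨hp0, hp1⟩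
    have hentm : ent (fun u2 => ∑ u1, Phat (u1, u2)) =
        -∑ u : U1 × U2, Phat u * Real.log (∑ u1, Phat (u1, u.2)) := by
      rw [ent]
      congr 1
      rw [Fintype.sum_prod_type_right]
      exact Finset.sum_congr rfl (fun u2 _ => Finset.sum_mul ..)
    have term : ∀ u : U1 × U2,
        Phat u * Real.log (Phat u / Q u)
          + ρ * (Phat u * Real.log (Phat u / (P u ^ s * (∑ u1, Phat (u1, u.2)) / β u.2)))
          - Phat u * Real.log Z
        = Phat u * Real.log (Phat u / P u) + ρ * (Phat u * Real.log (Phat u))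
          - ρ * (Phat u * Real.log (∑ u1, Phat (u1, u.2))) := by
      intro u
      rcases eq_or_lt_of_le (hp0 u) with h0 | h0
      · simp [← h0]
      · have hm0 : 0 < ∑ u1, Phat (u1, u.2) :=
          lt_of_lt_of_le h0 (Finset.single_le_sum (f := fun u1 => Phat (u1, u.2))
            (fun i _ => hp0 _) (Finset.mem_univ u.1))
        have hPu := hPpos u
        have hβu := hβ u.2
        have l1 : Real.log (Phat u / Q u) =
            Real.log (Phat u) - (s * Real.log (P u) + ρ * Real.log (β u.2) - Real.log Z) := by
          have hQu : Q u = P u ^ s * β u.2 ^ ρ / Z := rfl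
          rw [hQu, Real.log_div h0.ne' (by positivity), Real.log_div (by positivity) hZ.ne',
              Real.log_mul (by positivity) (by positivity),
              Real.log_rpow hPu, Real.log_rpow hβu]
        have l2 : Real.log (Phat u / (P u ^ s * (∑ u1, Phat (u1, u.2)) / β u.2)) =
            Real.log (Phat u)
              - (s * Real.log (P u) + Real.log (∑ u1, Phat (u1, u.2)) - Real.log (β u.2)) := by
          rw [Real.log_div h0.ne' (by positivity), Real.log_div (by positivity) hβu.ne',
              Real.log_mul (by positivity) hm0.ne', Real.log_rpow hPu]
        have l3 : Real.log (Phat u / P u) = Real.log (Phat u) - Real.log (P u) :=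
          Real.log_div h0.ne' hPu.ne'
        have hs1 : s * (1 + ρ) = 1 := by rw [hs]; field_simp
        rw [l1, l2, l3]
        linear_combination (-(Phat u * Real.log (P u))) * hs1
    have hsum : ∑ u : U1 × U2, (Phat u * Real.log (Phat u / Q u)
          + ρ * (Phat u * Real.log (Phat u / (P u ^ s * (∑ u1, Phat (u1, u.2)) / β u.2)))
          - Phat u * Real.log Z)
        = ∑ u : U1 × U2, (Phat u * Real.log (Phat u / P u)
          + ρ * (Phat u * Real.log (Phat u))
          - ρ * (Phat u * Real.log (∑ u1, Phat (u1, u.2)))) :=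
      Finset.sum_congr rfl (fun u _ => term u)
    simp only [Finset.sum_sub_distrib, Finset.sum_add_distrib, ← Finset.mul_sum,
      ← Finset.sum_mul, hp1, one_mul] at hsum
    have hentm2 : ∑ x : U2, (∑ u1, Phat (u1, x)) * Real.log (∑ u1, Phat (u1, x))
        = ∑ u : U1 × U2, Phat u * Real.log (∑ u1, Phat (u1, u.2)) := by
      rw [Fintype.sum_prod_type_right]
      exact Finset.sum_congr rfl (fun u2 _ => Finset.sum_mul ..)
    simp only [klDiv, ent]
    rw [hentm2]
    linear_combination -hsum
  constructor
  · refine ⟨Q, ⟨fun u => (hQpos u).le, hQsum⟩, ?_⟩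
    rw [keyid Q ⟨fun u => (hQpos u).le, hQsum⟩]
    have hR : (fun u => P u ^ s * (∑ u1, Q (u1, u.2)) / β u.2) = Q := by
      funext u
      rw [hmargQ u.2, Real.rpow_add (hβ u.2), Real.rpow_one]
      have hQu : Q u = P u ^ s * β u.2 ^ ρ / Z := rfl
      rw [hQu]
      field_simp [(hβ u.2).ne', hZ.ne']
    rw [hR]
    have h1 : klDiv Q Q = 0 := by rw [klDiv]; exact kl_self Q
    rw [h1]
    ring
  · rintro d ⟨Phat, hPhat, rfl⟩
    rw [keyid Phat hPhat]
    obtain ⟨hp0, hp1⟩ := hPhat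
    have hA : 0 ≤ klDiv Phat Q := by
      rw [klDiv]
      exact gibbs_s14 Phat Q hp0 hp1 (fun a => (hQpos a).le) (le_of_eq hQsum)
        (fun a _ => hQpos a)
    have hB : 0 ≤ klDiv Phat (fun u => P u ^ s * (∑ u1, Phat (u1, u.2)) / β u.2) := by
      rw [klDiv]
      have hm0 : ∀ u2, 0 ≤ ∑ u1, Phat (u1, u2) :=
        fun u2 => Finset.sum_nonneg (fun i _ => hp0 _)
      apply gibbs_s14 Phat _ hp0 hp1
      · intro a
        have h1 := (hPpos a).le
        have h2 := hm0 a.2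
        have h3 := hβ a.2
        positivity
      · have : ∑ u : U1 × U2, P u ^ s * (∑ u1, Phat (u1, u.2)) / β u.2 = 1 := by
          rw [Fintype.sum_prod_type_right]
          have : ∀ u2 : U2, ∑ u1, P (u1, u2) ^ s * (∑ v1, Phat (v1, u2)) / β u2
              = ∑ v1, Phat (v1, u2) := by
            intro u2
            rw [← Finset.sum_div, ← Finset.sum_mul, hβval u2, mul_comm,
              mul_div_assoc, div_self (hβ u2).ne', mul_one]
          simp_rw [this]
          rw [← Fintype.sum_prod_type_right, hp1]
        exact le_of_eq this
      · intro a ha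
        have hm : 0 < ∑ u1, Phat (u1, a.2) :=
          lt_of_lt_of_le ha (Finset.single_le_sum (f := fun u1 => Phat (u1, a.2))
            (fun i _ => hp0 _) (Finset.mem_univ a.1))
        have h1 := hPpos a
        have h3 := hβ a.2
        positivity
    linarith [hA, mul_nonneg hρ0 hB]

lemma main3 {U : Type*} [Fintype U] [Nonempty U]
    (P : U → ℝ) (hPpos : ∀ u, 0 < P u) (ρ : ℝ) (hρ0 : 0 ≤ ρ) :
    IsLeast {d : ℝ | ∃ Phat : U → ℝ, IsPmf Phat ∧ d = klDiv Phat P - ρ * ent Phat}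
      (-((1 + ρ) * Real.log (∑ u, P u ^ (1 / (1 + ρ))))) := by
  have h1ρ : (0:ℝ) < 1 + ρ := by linarith
  set s : ℝ := 1 / (1 + ρ) with hs
  set Z : ℝ := ∑ u, P u ^ s with hZdef
  have hZ : 0 < Z :=
    Finset.sum_pos (fun u _ => Real.rpow_pos_of_pos (hPpos _) _) Finset.univ_nonempty
  set Q : U → ℝ := fun u => P u ^ s / Z with hQdef
  have hQpos : ∀ u, 0 < Q u := by
    intro u
    have h1 := hPpos u
    simp only [hQdef]
    positivity
  have hQsum : ∑ u, Q u = 1 := by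
    simp only [hQdef]
    rw [← Finset.sum_div, ← hZdef, div_self hZ.ne']
  have keyid : ∀ Phat : U → ℝ, IsPmf Phat →
      klDiv Phat P - ρ * ent Phat
        = (1 + ρ) * klDiv Phat Q - (1 + ρ) * Real.log Z := by
    rintro Phat ⟨hp0, hp1⟩
    have term : ∀ u, (1 + ρ) * (Phat u * Real.log (Phat u / Q u))
          - (1 + ρ) * (Phat u * Real.log Z)
        = Phat u * Real.log (Phat u / P u) + ρ * (Phat u * Real.log (Phat u)) := by
      intro u
      rcases eq_or_lt_of_le (hp0 u) with h0 | h0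
      · simp [← h0]
      · have hPu := hPpos u
        have l1 : Real.log (Phat u / Q u)
            = Real.log (Phat u) - (s * Real.log (P u) - Real.log Z) := by
          have hQu : Q u = P u ^ s / Z := rfl
          rw [hQu, Real.log_div h0.ne' (by positivity),
            Real.log_div (by positivity) hZ.ne', Real.log_rpow hPu]
        have l3 : Real.log (Phat u / P u) = Real.log (Phat u) - Real.log (P u) :=
          Real.log_div h0.ne' hPu.ne'
        have hs1 : s * (1 + ρ) = 1 := by rw [hs]; field_simp
        rw [l1, l3]
        linear_combination (-(Phat u * Real.log (P u))) * hs1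
    have hsum : ∑ u, ((1 + ρ) * (Phat u * Real.log (Phat u / Q u))
          - (1 + ρ) * (Phat u * Real.log Z))
        = ∑ u, (Phat u * Real.log (Phat u / P u) + ρ * (Phat u * Real.log (Phat u))) :=
      Finset.sum_congr rfl (fun u _ => term u)
    simp only [Finset.sum_sub_distrib, Finset.sum_add_distrib, ← Finset.mul_sum,
      ← Finset.sum_mul, hp1, one_mul] at hsum
    simp only [klDiv, ent]
    linear_combination -hsum
  constructor
  · refine ⟨Q, ⟨fun u => (hQpos u).le, hQsum⟩, ?_⟩
    rw [keyid Q ⟨fun u => (hQpos u).le, hQsum⟩]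
    have h1 : klDiv Q Q = 0 := by rw [klDiv]; exact kl_self Q
    rw [h1]
    ring
  · rintro d ⟨Phat, hPhat, rfl⟩
    rw [keyid Phat hPhat]
    obtain ⟨hp0, hp1⟩ := hPhat
    have hA : 0 ≤ klDiv Phat Q := by
      rw [klDiv]
      exact gibbs_s14 Phat Q hp0 hp1 (fun a => (hQpos a).le) (le_of_eq hQsum)
        (fun a _ => hQpos a)
    nlinarith [mul_nonneg h1ρ.le hA]

/-- for a full-support pmf `P` on `U₁ × U₂` and `ρ ∈ [0,1]`, the minimum
over all pmfs `P̂` of `D(P̂‖P) − ρ (H(P̂) − H(P̂_{U₂}))` equals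
`−log ∑_{u₂} (∑_{u₁} P(u₁,u₂)^{1/(1+ρ)})^{1+ρ} = −E_{s,{1}}(ρ,P)` (attained); the
analogous identity holds with the roles of the coordinates exchanged (τ = {2}), and for
`τ = {1,2}`: the minimum of `D(P̂‖P) − ρ H(P̂)` is `−(1+ρ) log ∑_u P(u)^{1/(1+ρ)}`. -/
theorem stmt14 {U1 U2 : Type*} [Fintype U1] [Fintype U2] [Nonempty U1] [Nonempty U2]
    (P : U1 × U2 → ℝ) (hP : IsPmf P) (hPpos : ∀ u, 0 < P u)
    (ρ : ℝ) (hρ : ρ ∈ Set.Icc (0:ℝ) 1) :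
    IsLeast
      {d : ℝ | ∃ Phat : U1 × U2 → ℝ, IsPmf Phat ∧
        d = klDiv Phat P - ρ * (ent Phat - ent (fun u2 => ∑ u1, Phat (u1, u2)))}
      (-Real.log (∑ u2, (∑ u1, P (u1, u2) ^ (1 / (1 + ρ))) ^ (1 + ρ)))
    ∧ IsLeast
      {d : ℝ | ∃ Phat : U1 × U2 → ℝ, IsPmf Phat ∧
        d = klDiv Phat P - ρ * (ent Phat - ent (fun u1 => ∑ u2, Phat (u1, u2)))}
      (-Real.log (∑ u1, (∑ u2, P (u1, u2) ^ (1 / (1 + ρ))) ^ (1 + ρ)))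
    ∧ IsLeast
      {d : ℝ | ∃ Phat : U1 × U2 → ℝ, IsPmf Phat ∧
        d = klDiv Phat P - ρ * ent Phat}
      (-((1 + ρ) * Real.log (∑ u : U1 × U2, P u ^ (1 / (1 + ρ))))) := by
  obtain ⟨hρ0, hρ1⟩ := hρ
  refine ⟨main1 P hPpos ρ hρ0 hρ1, ?_, main3 P hPpos ρ hρ0⟩
  have sumswap' : ∀ f : U2 × U1 → ℝ, ∑ x : U1 × U2, f (x.2, x.1) = ∑ u, f u :=
    fun f => Fintype.sum_equiv (Equiv.prodComm U1 U2) _ _ (fun x => rfl)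
  have sumswap : ∀ f : U1 × U2 → ℝ, ∑ x : U2 × U1, f (x.2, x.1) = ∑ u, f u :=
    fun f => Fintype.sum_equiv (Equiv.prodComm U2 U1) _ _ (fun x => rfl)
  have h := main1 (fun x : U2 × U1 => P (x.2, x.1)) (fun x => hPpos _) ρ hρ0 hρ1
  have hset : {d : ℝ | ∃ Phat : U2 × U1 → ℝ, IsPmf Phat ∧
        d = klDiv Phat (fun x : U2 × U1 => P (x.2, x.1)) -
          ρ * (ent Phat - ent (fun u2 => ∑ u1, Phat (u1, u2)))}
      = {d : ℝ | ∃ Phat : U1 × U2 → ℝ, IsPmf Phat ∧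
        d = klDiv Phat P - ρ * (ent Phat - ent (fun u1 => ∑ u2, Phat (u1, u2)))} := by
    ext d
    simp only [Set.mem_setOf_eq]
    constructor
    · rintro ⟨Phat, ⟨h0, h1⟩, rfl⟩
      refine ⟨fun x => Phat (x.2, x.1), ⟨fun a => h0 _, ?_⟩, ?_⟩
      · show ∑ a : U1 × U2, Phat (a.2, a.1) = 1
        rw [sumswap' Phat]; exact h1
      · have e1 : klDiv (fun x : U1 × U2 => Phat (x.2, x.1)) P
            = klDiv Phat (fun x : U2 × U1 => P (x.2, x.1)) := by
          rw [klDiv, klDiv]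
          exact sumswap' (fun u => Phat u * Real.log (Phat u / P (u.2, u.1)))
        have e2 : ent (fun x : U1 × U2 => Phat (x.2, x.1)) = ent Phat := by
          rw [ent, ent]
          exact congrArg Neg.neg (sumswap' (fun u => Phat u * Real.log (Phat u)))
        rw [e1, e2]
    · rintro ⟨Phat, ⟨h0, h1⟩, rfl⟩
      refine ⟨fun x => Phat (x.2, x.1), ⟨fun a => h0 _, ?_⟩, ?_⟩
      · show ∑ a : U2 × U1, Phat (a.2, a.1) = 1
        rw [sumswap Phat]; exact h1
      · have e1 : klDiv (fun x : U2 × U1 => Phat (x.2, x.1))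
              (fun x : U2 × U1 => P (x.2, x.1)) = klDiv Phat P := by
          rw [klDiv, klDiv]
          exact sumswap (fun u => Phat u * Real.log (Phat u / P u))
        have e2 : ent (fun x : U2 × U1 => Phat (x.2, x.1)) = ent Phat := by
          rw [ent, ent]
          exact congrArg Neg.neg (sumswap (fun u => Phat u * Real.log (Phat u)))
        rw [e1, e2]
  rw [hset] at h
  exact h
end
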